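/- arXiv:1608.01254 — 6 statements merged into one kernel-verified Lean document; each statement's English description precedes it below -/
import Mathlib

section
/- A countable linear order (α, <) is weakly ultrahomogeneous if and only if it has only finitely many successivities, i.e., the set {a ∈ α : ∃ b, a is covered by b or b is covered by a} is finite. -/
/-- `S` is an exceptional set for the linear order `α`: `S` is finite, and every order
isomorphism between finite subsets of `α` that both contain `S`, which fixes each element
of `S`, extends to an order automorphism of `α`. -/
def IsExceptionalLO {α : Type*} [LinearOrder α] (S : Set α) : Prop :=
  S.Finite ∧
    ∀ (s t : Set α), s.Finite → t.Finite → ∀ (hs : S ⊆ s), S ⊆ t →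
      ∀ φ : ↥s ≃o ↥t,
        (∀ (x : α) (hx : x ∈ S), ((φ ⟨x, hs hx⟩ : ↥t) : α) = x) →
        ∃ ψ : α ≃o α, ∀ x : ↥s, ψ (x : α) = ((φ x : ↥t) : α)

/-- A linear order is weakly ultrahomogeneous if it has an exceptional set. -/
def WeaklyUltrahomogeneousLO (α : Type*) [LinearOrder α] : Prop :=
  ∃ S : Set α, IsExceptionalLO S

namespace WUHAux

variable {α : Type*} [LinearOrder α]

/-- number of elements of `F` below `x` -/
def cnt (F : Finset α) (x : α) : ℕ := (F.filter (· < x)).card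

/-- the `i`-th gap of `F` -/
def gap (F : Finset α) (i : ℕ) : Set α := {x | x ∉ F ∧ cnt F x = i}

/-- every element outside `F` is not a successivity, bot or top -/
def NiceOutside (F : Finset α) : Prop :=
  ∀ x : α, x ∉ F → (∀ b : α, ¬ x ⋖ b ∧ ¬ b ⋖ x) ∧ ¬ IsBot x ∧ ¬ IsTop x

/-- `φ` fixes every element whose image is a successivity, bot or top -/
def FixKey {s t : Set α} (φ : ↥s ≃o ↥t) : Prop :=
  ∀ u : ↥s, ((∃ b : α, (φ u : α) ⋖ b ∨ b ⋖ (φ u : α)) ∨ IsBot (φ u : α) ∨ IsTop (φ u : α)) →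
    (φ u : α) = (u : α)

lemma cnt_mono (F : Finset α) {x y : α} (h : x ≤ y) : cnt F x ≤ cnt F y := by
  apply Finset.card_le_card
  intro z hz
  simp only [Finset.mem_filter] at *
  exact ⟨hz.1, lt_of_lt_of_le hz.2 h⟩

lemma cnt_lt (F : Finset α) {z y : α} (hz : z ∈ F) (h : z < y) : cnt F z < cnt F y := by
  apply Finset.card_lt_card
  constructor
  · intro w hw
    simp only [Finset.mem_filter] at *
    exact ⟨hw.1, hw.2.trans h⟩
  · intro hsub
    have : z ∈ F.filter (· < z) := hsub (by simp [hz, h])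
    simp at this

lemma cnt_between (F : Finset α) {x y z : α} (hxy : x ≤ y) (hc : cnt F x = cnt F y)
    (hz : z ∈ F) (h1 : z < y) : z < x := by
  have hsub : F.filter (· < x) ⊆ F.filter (· < y) := by
    intro w hw
    simp only [Finset.mem_filter] at *
    exact ⟨hw.1, lt_of_lt_of_le hw.2 hxy⟩
  have heq : F.filter (· < x) = F.filter (· < y) :=
    Finset.eq_of_subset_of_card_le hsub (le_of_eq hc.symm)
  have hmem : z ∈ F.filter (· < x) := heq ▸ (by simp [hz, h1])
  exact (Finset.mem_filter.1 hmem).2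

lemma gap_lt (F : Finset α) {i j : ℕ} (hij : i < j) {x y : α}
    (hx : x ∈ gap F i) (hy : y ∈ gap F j) : x < y := by
  by_contra h
  push_neg at h
  have := cnt_mono F h
  rw [hx.2, hy.2] at this
  omega

lemma lt_gap_of_cnt_lt (F : Finset α) {v w : α} {i : ℕ} (hv : v ∈ F) (hw : w ∈ gap F i)
    (h : cnt F v < i) : v < w := by
  by_contra h'
  push_neg at h'
  have := cnt_mono F h'
  rw [hw.2] at this
  omega

lemma gap_lt_of_le_cnt (F : Finset α) {v w : α} {i : ℕ} (hv : v ∈ F) (hw : w ∈ gap F i)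
    (h : i ≤ cnt F v) : w < v := by
  rcases lt_or_ge w v with h' | h'
  · exact h'
  have hvw : v < w := lt_of_le_of_ne h' (fun he => hw.1 (he ▸ hv))
  have := cnt_lt F hv hvw
  rw [hw.2] at this
  omega


lemma gap_dense {F : Finset α} (hns : NiceOutside F) {i : ℕ} {x y : α}
    (hx : x ∈ gap F i) (hy : y ∈ gap F i) (hxy : x < y) :
    ∃ z ∈ gap F i, x < z ∧ z < y := by
  have hncov : ¬ x ⋖ y := ((hns x hx.1).1 y).1
  have hex : ∃ z, x < z ∧ z < y := by
    by_contra hne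
    push_neg at hne
    exact hncov ⟨hxy, fun c h1 h2 => absurd h2 (not_lt.2 (hne c h1))⟩
  obtain ⟨z, hz1, hz2⟩ := hex
  have hzF : z ∉ F := fun hzF =>
    absurd (cnt_between F hxy.le (hx.2.trans hy.2.symm) hzF hz2) (not_lt.2 hz1.le)
  refine ⟨z, ⟨hzF, le_antisymm ?_ ?_⟩, hz1, hz2⟩
  · rw [← hy.2]; exact cnt_mono F hz2.le
  · rw [← hx.2]; exact cnt_mono F hz1.le

lemma gap_noMax {F : Finset α} (hns : NiceOutside F) {i : ℕ} {x : α}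
    (hx : x ∈ gap F i) : ∃ z ∈ gap F i, x < z := by
  rcases (F.filter (fun z => x < z)).eq_empty_or_nonempty with hB | hB
  · obtain ⟨v, hv⟩ : ∃ v, x < v := by
      have := (hns x hx.1).2.2
      simp only [IsTop, not_forall, not_le] at this
      exact this
    have hvF : v ∉ F := fun h => by
      have : v ∈ F.filter (fun z => x < z) := Finset.mem_filter.2 ⟨h, hv⟩
      simp [hB] at this
    refine ⟨v, ⟨hvF, le_antisymm ?_ ?_⟩, hv⟩
    · rw [← hx.2]
      apply Finset.card_le_card
      intro z hz
      rw [Finset.mem_filter] at *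
      refine ⟨hz.1, ?_⟩
      have hzx : ¬ x < z := fun h => by
        have : z ∈ F.filter (fun z => x < z) := Finset.mem_filter.2 ⟨hz.1, h⟩
        simp [hB] at this
      exact lt_of_le_of_ne (not_lt.1 hzx) (fun he => hx.1 (he ▸ hz.1))
    · rw [← hx.2]; exact cnt_mono F hv.le
  · set m := (F.filter (fun z => x < z)).min' hB with hm
    have hmmem := (F.filter (fun z => x < z)).min'_mem hB
    rw [Finset.mem_filter] at hmmem
    have hxm : x < m := hmmem.2
    have hncov : ¬ x ⋖ m := ((hns x hx.1).1 m).1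
    have hex : ∃ v, x < v ∧ v < m := by
      by_contra hne
      push_neg at hne
      exact hncov ⟨hxm, fun c h1 h2 => absurd h2 (not_lt.2 (hne c h1))⟩
    obtain ⟨v, hv1, hv2⟩ := hex
    have hvF : v ∉ F := fun h => by
      have : m ≤ v := Finset.min'_le _ _ (Finset.mem_filter.2 ⟨h, hv1⟩)
      exact absurd hv2 (not_lt.2 this)
    refine ⟨v, ⟨hvF, le_antisymm ?_ ?_⟩, hv1⟩
    · rw [← hx.2]
      apply Finset.card_le_card
      intro z hz
      rw [Finset.mem_filter] at *
      refine ⟨hz.1, ?_⟩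
      have hzx : ¬ x < z := fun h => by
        have : m ≤ z := Finset.min'_le _ _ (Finset.mem_filter.2 ⟨hz.1, h⟩)
        exact absurd (hz.2.trans hv2) (not_lt.2 this)
      exact lt_of_le_of_ne (not_lt.1 hzx) (fun he => hx.1 (he ▸ hz.1))
    · rw [← hx.2]; exact cnt_mono F hv1.le

lemma gap_noMin {F : Finset α} (hns : NiceOutside F) {i : ℕ} {x : α}
    (hx : x ∈ gap F i) : ∃ z ∈ gap F i, z < x := by
  rcases (F.filter (fun z => z < x)).eq_empty_or_nonempty with hB | hB
  · obtain ⟨v, hv⟩ : ∃ v, v < x := by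
      have := (hns x hx.1).2.1
      simp only [IsBot, not_forall, not_le] at this
      exact this
    have hvF : v ∉ F := fun h => by
      have : v ∈ F.filter (fun z => z < x) := Finset.mem_filter.2 ⟨h, hv⟩
      simp [hB] at this
    refine ⟨v, ⟨hvF, ?_⟩, hv⟩
    have h0 : cnt F x = 0 := by
      unfold cnt
      simp [hB]
    have h1 := cnt_mono F hv.le
    have h2 := hx.2
    omega
  · set m := (F.filter (fun z => z < x)).max' hB with hm
    have hmmem := (F.filter (fun z => z < x)).max'_mem hB
    rw [Finset.mem_filter] at hmmem
    have hmx : m < x := hmmem.2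
    have hncov : ¬ m ⋖ x := ((hns x hx.1).1 m).2
    have hex : ∃ v, m < v ∧ v < x := by
      by_contra hne
      push_neg at hne
      exact hncov ⟨hmx, fun c h1 h2 => absurd h2 (not_lt.2 (hne c h1))⟩
    obtain ⟨v, hv1, hv2⟩ := hex
    have hvF : v ∉ F := fun h => by
      have : v ≤ m := Finset.le_max' (F.filter (fun z => z < x)) v (Finset.mem_filter.2 ⟨h, hv2⟩)
      exact absurd hv1 (not_lt.2 this)
    refine ⟨v, ⟨hvF, le_antisymm ?_ ?_⟩, hv2⟩
    · rw [← hx.2]; exact cnt_mono F hv2.le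
    · rw [← hx.2]
      apply Finset.card_le_card
      intro z hz
      rw [Finset.mem_filter] at *
      exact ⟨hz.1, lt_of_le_of_lt (Finset.le_max' (F.filter (fun z => z < x)) z (Finset.mem_filter.2 hz)) hv1⟩


lemma card_eq {s t : Set α} (hsf : s.Finite) (htf : t.Finite) (φ : ↥s ≃o ↥t) :
    hsf.toFinset.card = htf.toFinset.card := by
  refine Finset.card_bij' (fun z hz => (φ ⟨z, (hsf.mem_toFinset).1 hz⟩ : α))
    (fun z hz => (φ.symm ⟨z, (htf.mem_toFinset).1 hz⟩ : α)) ?_ ?_ ?_ ?_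
  · intro a ha
    exact (htf.mem_toFinset).2 (φ ⟨a, _⟩).2
  · intro a ha
    exact (hsf.mem_toFinset).2 (φ.symm ⟨a, _⟩).2
  · intro a ha
    simp
  · intro a ha
    simp

lemma cnt_image {s t : Set α} (hsf : s.Finite) (htf : t.Finite) (φ : ↥s ≃o ↥t) (u : ↥s) :
    cnt htf.toFinset (φ u : α) = cnt hsf.toFinset (u : α) := by
  refine Finset.card_bij'
    (fun z hz => (φ.symm ⟨z, (htf.mem_toFinset).1 (Finset.mem_filter.1 hz).1⟩ : α))
    (fun z hz => (φ ⟨z, (hsf.mem_toFinset).1 (Finset.mem_filter.1 hz).1⟩ : α)) ?_ ?_ ?_ ?_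
  · intro a ha
    rw [Finset.mem_filter] at ha ⊢
    constructor
    · exact (hsf.mem_toFinset).2 (φ.symm ⟨a, _⟩).2
    · show (φ.symm ⟨a, _⟩ : α) < (u : α)
      rw [Subtype.coe_lt_coe]
      have h2 : (⟨a, (htf.mem_toFinset).1 ha.1⟩ : ↥t) < φ u := Subtype.mk_lt_mk.2 ha.2
      have h3 := φ.symm.lt_iff_lt.mpr h2
      simpa using h3
  · intro a ha
    rw [Finset.mem_filter] at ha ⊢
    constructor
    · exact (htf.mem_toFinset).2 (φ ⟨a, _⟩).2
    · show (φ ⟨a, _⟩ : α) < (φ u : α)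
      rw [Subtype.coe_lt_coe]
      exact φ.lt_iff_lt.mpr (Subtype.mk_lt_mk.2 ha.2)
  · intro a ha
    simp
  · intro a ha
    simp


lemma gap_transfer {s t : Set α} (hsf : s.Finite) (htf : t.Finite) (φ : ↥s ≃o ↥t)
    (hkey : FixKey φ) {j : ℕ} {x : α} (hx : x ∈ gap hsf.toFinset j) :
    (gap htf.toFinset j).Nonempty := by
  classical
  by_contra hem
  rw [Set.not_nonempty_iff_eq_empty] at hem
  have hem' : ∀ w : α, w ∉ htf.toFinset → cnt htf.toFinset w ≠ j := by
    intro w h1 h2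
    have : w ∈ gap htf.toFinset j := ⟨h1, h2⟩
    rw [hem] at this
    exact this
  set F := hsf.toFinset with hFdef
  set G := htf.toFinset with hGdef
  have hxF : x ∉ F := hx.1
  have hdichF : ∀ z, z ∈ F → z < x ∨ x < z := fun z hz =>
    Ne.lt_or_gt (fun he : z = x => hxF (he ▸ hz))
  have hGmem : ∀ u : ↥s, (φ u : α) ∈ G := fun u => (htf.mem_toFinset).2 (φ u).2
  have hGsurj : ∀ v, v ∈ G → ∃ u : ↥s, (φ u : α) = v := by
    intro v hv
    exact ⟨φ.symm ⟨v, (htf.mem_toFinset).1 hv⟩, by simp⟩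
  have hFmem : ∀ u : ↥s, (u : α) ∈ F := fun u => (hsf.mem_toFinset).2 u.2
  rcases (F.filter (· < x)).eq_empty_or_nonempty with hA | hA <;>
    rcases (F.filter (x < ·)).eq_empty_or_nonempty with hC | hC
  · -- both empty : F empty
    have hFe : F = ∅ := by
      rw [Finset.eq_empty_iff_forall_notMem]
      intro z hz
      rcases hdichF z hz with h | h
      · rw [Finset.eq_empty_iff_forall_notMem] at hA
        exact hA z (Finset.mem_filter.2 ⟨hz, h⟩)
      · rw [Finset.eq_empty_iff_forall_notMem] at hC
        exact hC z (Finset.mem_filter.2 ⟨hz, h⟩)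
    have hGe : G = ∅ := by
      have := card_eq hsf htf φ
      rw [← hFdef, ← hGdef, hFe] at this
      exact Finset.card_eq_zero.1 this.symm
    have hj : j = 0 := by
      have := hx.2
      rw [← this]
      show cnt F x = 0
      unfold cnt
      rw [hFe]
      simp
    refine hem' x (by simp [hGe]) ?_
    unfold cnt
    rw [hGe, hj]
    simp
  · -- A empty, C nonempty : bottom case
    have hj : j = 0 := by
      rw [← hx.2]
      show cnt F x = 0
      unfold cnt
      rw [hA]
      rfl
    set b := (F.filter (x < ·)).min' hC with hbdef
    have hbmem := (F.filter (x < ·)).min'_mem hC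
    rw [Finset.mem_filter] at hbmem
    have hbF : b ∈ F := hbmem.1
    have hxb : x < b := hbmem.2
    set ub : ↥s := ⟨b, (hsf.mem_toFinset).1 hbF⟩ with hubdef
    set b' := (φ ub : α) with hb'def
    have hdich : ∀ v, v ∈ G → b' ≤ v := by
      intro v hv
      obtain ⟨u, hu⟩ := hGsurj v hv
      have huF := hFmem u
      have hbu : b ≤ (u : α) := by
        rcases hdichF _ huF with h | h
        · exfalso
          rw [Finset.eq_empty_iff_forall_notMem] at hA
          exact hA _ (Finset.mem_filter.2 ⟨huF, h⟩)
        · exact Finset.min'_le _ _ (Finset.mem_filter.2 ⟨huF, h⟩)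
      have : ub ≤ u := Subtype.mk_le_mk.2 hbu
      rw [← hu]
      exact Subtype.coe_le_coe.2 (φ.le_iff_le.2 this)
    have claim : ∀ w, w < b' → False := by
      intro w hw
      have hwG : w ∉ G := fun hG => absurd hw (not_lt.2 (hdich w hG))
      refine hem' w hwG ?_
      rw [hj]
      unfold cnt
      rw [Finset.card_eq_zero, Finset.eq_empty_iff_forall_notMem]
      intro v hv
      rw [Finset.mem_filter] at hv
      exact absurd (hv.2.trans hw) (not_lt.2 (hdich v hv.1))
    have hbot : IsBot b' := fun c => le_of_not_gt (claim c)
    have hb'b : b' = b := hkey ub (Or.inr (Or.inl hbot))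
    rw [hb'b] at hbot
    exact absurd (hbot x) (not_le.2 hxb)
  · -- A nonempty, C empty : top case
    set a := (F.filter (· < x)).max' hA with hadef
    have hamem := (F.filter (· < x)).max'_mem hA
    rw [Finset.mem_filter] at hamem
    have haF : a ∈ F := hamem.1
    have hax : a < x := hamem.2
    have hAF : F.filter (· < x) = F := by
      apply Finset.eq_of_subset_of_card_le (Finset.filter_subset _ _)
      apply Finset.card_le_card
      intro z hz
      refine Finset.mem_filter.2 ⟨hz, ?_⟩
      rcases hdichF z hz with h | h
      · exact h
      · exfalso
        rw [Finset.eq_empty_iff_forall_notMem] at hC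
        exact hC z (Finset.mem_filter.2 ⟨hz, h⟩)
    have hj : j = F.card := by
      rw [← hx.2]
      show cnt F x = F.card
      unfold cnt
      rw [hAF]
    set ua : ↥s := ⟨a, (hsf.mem_toFinset).1 haF⟩ with huadef
    set a' := (φ ua : α) with ha'def
    have hdich : ∀ v, v ∈ G → v ≤ a' := by
      intro v hv
      obtain ⟨u, hu⟩ := hGsurj v hv
      have huF := hFmem u
      have hua : (u : α) ≤ a := by
        apply Finset.le_max'
        rw [hAF]
        exact huF
      rw [← hu]
      exact Subtype.coe_le_coe.2 (φ.le_iff_le.2 (Subtype.mk_le_mk.2 hua))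
    have claim : ∀ w, a' < w → False := by
      intro w hw
      have hwG : w ∉ G := fun hG => absurd hw (not_lt.2 (hdich w hG))
      refine hem' w hwG ?_
      have hGfull : G.filter (· < w) = G := by
        apply Finset.eq_of_subset_of_card_le (Finset.filter_subset _ _)
        apply Finset.card_le_card
        intro v hv
        exact Finset.mem_filter.2 ⟨hv, lt_of_le_of_lt (hdich v hv) hw⟩
      show (G.filter (· < w)).card = j
      rw [hGfull, hj]
      exact (card_eq hsf htf φ).symm
    have htop : IsTop a' := fun c => le_of_not_gt (claim c)
    have ha'a : a' = a := hkey ua (Or.inr (Or.inr htop))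
    rw [ha'a] at htop
    exact absurd (htop x) (not_le.2 hax)
  · -- both nonempty : middle case
    set a := (F.filter (· < x)).max' hA with hadef
    have hamem := (F.filter (· < x)).max'_mem hA
    rw [Finset.mem_filter] at hamem
    have haF : a ∈ F := hamem.1
    have hax : a < x := hamem.2
    set b := (F.filter (x < ·)).min' hC with hbdef
    have hbmem := (F.filter (x < ·)).min'_mem hC
    rw [Finset.mem_filter] at hbmem
    have hbF : b ∈ F := hbmem.1
    have hxb : x < b := hbmem.2
    set ua : ↥s := ⟨a, (hsf.mem_toFinset).1 haF⟩ with huadef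
    set ub : ↥s := ⟨b, (hsf.mem_toFinset).1 hbF⟩ with hubdef
    set a' := (φ ua : α) with ha'def
    set b' := (φ ub : α) with hb'def
    have hab' : a' < b' :=
      Subtype.coe_lt_coe.2 (φ.lt_iff_lt.2 (Subtype.mk_lt_mk.2 (hax.trans hxb)))
    have hdich : ∀ v, v ∈ G → v ≤ a' ∨ b' ≤ v := by
      intro v hv
      obtain ⟨u, hu⟩ := hGsurj v hv
      have huF := hFmem u
      rcases hdichF _ huF with h | h
      · left
        have hua : (u : α) ≤ a := Finset.le_max' (F.filter (· < x)) (u : α) (Finset.mem_filter.2 ⟨huF, h⟩)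
        rw [← hu]
        exact Subtype.coe_le_coe.2 (φ.le_iff_le.2 (Subtype.mk_le_mk.2 hua))
      · right
        have hbu : b ≤ (u : α) := Finset.min'_le (F.filter (x < ·)) (u : α) (Finset.mem_filter.2 ⟨huF, h⟩)
        rw [← hu]
        exact Subtype.coe_le_coe.2 (φ.le_iff_le.2 (Subtype.mk_le_mk.2 hbu))
    have hjb : cnt G b' = j := by
      have h1 : cnt G b' = cnt F b := cnt_image hsf htf φ ub
      rw [h1, ← hx.2]
      show cnt F b = cnt F x
      unfold cnt
      congr 1
      ext z
      rw [Finset.mem_filter, Finset.mem_filter]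
      constructor
      · rintro ⟨hzF, hzb⟩
        refine ⟨hzF, ?_⟩
        rcases hdichF z hzF with h | h
        · exact h
        · exfalso
          have : b ≤ z := Finset.min'_le (F.filter (x < ·)) z (Finset.mem_filter.2 ⟨hzF, h⟩)
          exact absurd hzb (not_lt.2 this)
      · rintro ⟨hzF, hzx⟩
        exact ⟨hzF, hzx.trans hxb⟩
    have claim : ∀ w, a' < w → w < b' → False := by
      intro w hw1 hw2
      have hwG : w ∉ G := by
        intro hG
        rcases hdich w hG with h | h
        · exact absurd hw1 (not_lt.2 h)
        · exact absurd hw2 (not_lt.2 h)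
      refine hem' w hwG ?_
      rw [← hjb]
      show (G.filter (· < w)).card = (G.filter (· < b')).card
      congr 1
      ext v
      rw [Finset.mem_filter, Finset.mem_filter]
      constructor
      · rintro ⟨hvG, hvw⟩
        exact ⟨hvG, hvw.trans hw2⟩
      · rintro ⟨hvG, hvb⟩
        refine ⟨hvG, ?_⟩
        rcases hdich v hvG with h | h
        · exact lt_of_le_of_lt h hw1
        · exact absurd hvb (not_lt.2 h)
    have hcov : a' ⋖ b' := ⟨hab', fun c h1 h2 => claim c h1 h2⟩
    have ha'a : a' = a := hkey ua (Or.inl ⟨b', Or.inl hcov⟩)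
    have hb'b : b' = b := hkey ub (Or.inl ⟨a', Or.inr hcov⟩)
    rw [ha'a, hb'b] at hcov
    exact hcov.2 hax hxb


theorem converse_main [Countable α]
    (hfin : {a : α | ∃ b : α, a ⋖ b ∨ b ⋖ a}.Finite) : WeaklyUltrahomogeneousLO α := by
  classical
  refine ⟨{a | ∃ b : α, a ⋖ b ∨ b ⋖ a} ∪ ({a | IsBot a} ∪ {a | IsTop a}), ?_, ?_⟩
  · refine hfin.union (Set.Finite.union ?_ ?_)
    · exact Set.Subsingleton.finite (fun a ha b hb => le_antisymm (ha b) (hb a))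
    · exact Set.Subsingleton.finite (fun a ha b hb => le_antisymm (hb a) (ha b))
  intro s t hsf htf hs ht φ hfix
  set S : Set α := {a | ∃ b : α, a ⋖ b ∨ b ⋖ a} ∪ ({a | IsBot a} ∪ {a | IsTop a}) with hSdef
  set F := hsf.toFinset with hFdef
  set G := htf.toFinset with hGdef
  have hmemS : ∀ x : α, ((∃ b : α, x ⋖ b ∨ b ⋖ x) ∨ IsBot x ∨ IsTop x) → x ∈ S := by
    intro x hx
    rcases hx with h | h | h
    · exact Or.inl h
    · exact Or.inr (Or.inl h)
    · exact Or.inr (Or.inr h)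
  have hnsF : NiceOutside F := by
    intro x hxF
    have hxS : x ∉ S := fun h => hxF ((hsf.mem_toFinset).2 (hs h))
    refine ⟨fun b => ⟨fun h => hxS (hmemS x (Or.inl ⟨b, Or.inl h⟩)),
        fun h => hxS (hmemS x (Or.inl ⟨b, Or.inr h⟩))⟩,
      fun h => hxS (hmemS x (Or.inr (Or.inl h))),
      fun h => hxS (hmemS x (Or.inr (Or.inr h)))⟩
  have hnsG : NiceOutside G := by
    intro x hxG
    have hxS : x ∉ S := fun h => hxG ((htf.mem_toFinset).2 (ht h))
    refine ⟨fun b => ⟨fun h => hxS (hmemS x (Or.inl ⟨b, Or.inl h⟩)),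
        fun h => hxS (hmemS x (Or.inl ⟨b, Or.inr h⟩))⟩,
      fun h => hxS (hmemS x (Or.inr (Or.inl h))),
      fun h => hxS (hmemS x (Or.inr (Or.inr h)))⟩
  have hkeyφ : FixKey φ := by
    intro u hu
    have hmem : (φ u : α) ∈ S := hmemS _ hu
    have h1 := hfix (φ u : α) hmem
    have h2 : φ ⟨(φ u : α), hs hmem⟩ = φ u := Subtype.ext h1
    have h3 := φ.injective h2
    exact congrArg Subtype.val h3
  have hkeyψ : FixKey φ.symm := by
    intro u hu
    have hmem : (φ.symm u : α) ∈ S := hmemS _ hu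
    have h1 := hfix (φ.symm u : α) hmem
    have h2 : (⟨(φ.symm u : α), hs hmem⟩ : ↥s) = φ.symm u := Subtype.ext rfl
    rw [h2] at h1
    rw [φ.apply_symm_apply] at h1
    exact h1.symm
  -- the key iso choice for each gap
  have key : ∀ i : ℕ, (gap F i).Nonempty → Nonempty (↥(gap F i) ≃o ↥(gap G i)) := by
    intro i hne
    obtain ⟨x, hx⟩ := hne
    have hneG : (gap G i).Nonempty := gap_transfer hsf htf φ hkeyφ hx
    haveI : Nonempty ↥(gap F i) := ⟨⟨x, hx⟩⟩
    haveI : Nonempty ↥(gap G i) := hneG.to_subtype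
    haveI : DenselyOrdered ↥(gap F i) := by
      constructor
      intro a b hab
      obtain ⟨z, hz, h1, h2⟩ := gap_dense hnsF a.2 b.2 (Subtype.coe_lt_coe.2 hab)
      exact ⟨⟨z, hz⟩, Subtype.coe_lt_coe.1 h1, Subtype.coe_lt_coe.1 h2⟩
    haveI : DenselyOrdered ↥(gap G i) := by
      constructor
      intro a b hab
      obtain ⟨z, hz, h1, h2⟩ := gap_dense hnsG a.2 b.2 (Subtype.coe_lt_coe.2 hab)
      exact ⟨⟨z, hz⟩, Subtype.coe_lt_coe.1 h1, Subtype.coe_lt_coe.1 h2⟩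
    haveI : NoMaxOrder ↥(gap F i) := by
      constructor
      intro a
      obtain ⟨z, hz, h1⟩ := gap_noMax hnsF a.2
      exact ⟨⟨z, hz⟩, Subtype.coe_lt_coe.1 h1⟩
    haveI : NoMaxOrder ↥(gap G i) := by
      constructor
      intro a
      obtain ⟨z, hz, h1⟩ := gap_noMax hnsG a.2
      exact ⟨⟨z, hz⟩, Subtype.coe_lt_coe.1 h1⟩
    haveI : NoMinOrder ↥(gap F i) := by
      constructor
      intro a
      obtain ⟨z, hz, h1⟩ := gap_noMin hnsF a.2
      exact ⟨⟨z, hz⟩, Subtype.coe_lt_coe.1 h1⟩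
    haveI : NoMinOrder ↥(gap G i) := by
      constructor
      intro a
      obtain ⟨z, hz, h1⟩ := gap_noMin hnsG a.2
      exact ⟨⟨z, hz⟩, Subtype.coe_lt_coe.1 h1⟩
    exact Order.iso_of_countable_dense _ _
  obtain ⟨E, hE1, hE2, hE3⟩ : ∃ E : ℕ → α → α,
      (∀ i x, x ∈ gap F i → E i x ∈ gap G i) ∧
      (∀ i x y, x ∈ gap F i → y ∈ gap F i → x < y → E i x < E i y) ∧
      (∀ i w, w ∈ gap G i → (gap F i).Nonempty → ∃ x, x ∈ gap F i ∧ E i x = w) := by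
    refine ⟨fun i x => if h : (gap F i).Nonempty ∧ x ∈ gap F i
        then ((key i h.1).some ⟨x, h.2⟩ : α) else x, ?_, ?_, ?_⟩
    · intro i x hx
      have hc : (gap F i).Nonempty ∧ x ∈ gap F i := ⟨⟨x, hx⟩, hx⟩
      dsimp only
      rw [dif_pos hc]
      exact ((key i hc.1).some ⟨x, hc.2⟩).2
    · intro i x y hx hy hxy
      have hcx : (gap F i).Nonempty ∧ x ∈ gap F i := ⟨⟨x, hx⟩, hx⟩
      have hcy : (gap F i).Nonempty ∧ y ∈ gap F i := ⟨⟨x, hx⟩, hy⟩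
      dsimp only
      rw [dif_pos hcx, dif_pos hcy]
      exact Subtype.coe_lt_coe.2 ((key i hcx.1).some.lt_iff_lt.2 (Subtype.mk_lt_mk.2 hxy))
    · intro i w hw hne
      refine ⟨((key i hne).some.symm ⟨w, hw⟩ : α), ((key i hne).some.symm ⟨w, hw⟩).2, ?_⟩
      have hc : (gap F i).Nonempty ∧ ((key i hne).some.symm ⟨w, hw⟩ : α) ∈ gap F i :=
        ⟨hne, ((key i hne).some.symm ⟨w, hw⟩).2⟩
      dsimp only
      rw [dif_pos hc]
      have he : (⟨((key i hne).some.symm ⟨w, hw⟩ : α),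
          ((key i hne).some.symm ⟨w, hw⟩).2⟩ : ↥(gap F i)) = (key i hne).some.symm ⟨w, hw⟩ :=
        Subtype.ext rfl
      rw [he]
      show ((key i hne).some ((key i hne).some.symm ⟨w, hw⟩) : α) = w
      rw [OrderIso.apply_symm_apply]
  have hgapx : ∀ x, x ∉ s → x ∈ gap F (cnt F x) :=
    fun x hx => ⟨fun h => hx ((hsf.mem_toFinset).1 h), rfl⟩
  set Ψ : α → α := fun x => if hx : x ∈ s then (φ ⟨x, hx⟩ : α) else E (cnt F x) x with hΨdef
  have hΨs : ∀ x (hx : x ∈ s), Ψ x = (φ ⟨x, hx⟩ : α) := by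
    intro x hx
    rw [hΨdef]
    exact dif_pos hx
  have hΨn : ∀ x, x ∉ s → Ψ x = E (cnt F x) x := by
    intro x hx
    rw [hΨdef]
    exact dif_neg hx
  have hmono : StrictMono Ψ := by
    intro x y hxy
    by_cases hxs : x ∈ s <;> by_cases hys : y ∈ s
    · rw [hΨs x hxs, hΨs y hys]
      exact Subtype.coe_lt_coe.2 (φ.lt_iff_lt.2 (Subtype.mk_lt_mk.2 hxy))
    · rw [hΨs x hxs, hΨn y hys]
      refine lt_gap_of_cnt_lt G ((htf.mem_toFinset).2 (φ ⟨x, hxs⟩).2)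
        (hE1 _ _ (hgapx y hys)) ?_
      rw [cnt_image hsf htf φ ⟨x, hxs⟩]
      exact cnt_lt F ((hsf.mem_toFinset).2 hxs) hxy
    · rw [hΨn x hxs, hΨs y hys]
      refine gap_lt_of_le_cnt G ((htf.mem_toFinset).2 (φ ⟨y, hys⟩).2)
        (hE1 _ _ (hgapx x hxs)) ?_
      rw [cnt_image hsf htf φ ⟨y, hys⟩]
      exact cnt_mono F hxy.le
    · rw [hΨn x hxs, hΨn y hys]
      rcases eq_or_lt_of_le (cnt_mono F hxy.le) with h | h
      · rw [← h]
        refine hE2 _ _ _ (hgapx x hxs) ?_ hxy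
        rw [h]
        exact hgapx y hys
      · exact gap_lt G h (hE1 _ _ (hgapx x hxs)) (hE1 _ _ (hgapx y hys))
  have hsurj : Function.Surjective Ψ := by
    intro w
    by_cases hw : w ∈ t
    · refine ⟨(φ.symm ⟨w, hw⟩ : α), ?_⟩
      rw [hΨs _ (φ.symm ⟨w, hw⟩).2]
      have he : (⟨(φ.symm ⟨w, hw⟩ : α), (φ.symm ⟨w, hw⟩).2⟩ : ↥s) = φ.symm ⟨w, hw⟩ :=
        Subtype.ext rfl
      rw [he, φ.apply_symm_apply]
    · have hwG : w ∈ gap G (cnt G w) := ⟨fun h => hw ((htf.mem_toFinset).1 h), rfl⟩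
      have hneF : (gap F (cnt G w)).Nonempty := gap_transfer htf hsf φ.symm hkeyψ hwG
      obtain ⟨x, hx, hEx⟩ := hE3 _ w hwG hneF
      have hxs : x ∉ s := fun h => hx.1 ((hsf.mem_toFinset).2 h)
      refine ⟨x, ?_⟩
      rw [hΨn x hxs, hx.2]
      exact hEx
  refine ⟨StrictMono.orderIsoOfSurjective Ψ hmono hsurj, ?_⟩
  intro x
  have h1 : (StrictMono.orderIsoOfSurjective Ψ hmono hsurj : α → α) = Ψ :=
    StrictMono.coe_orderIsoOfSurjective Ψ hmono hsurj
  rw [show (StrictMono.orderIsoOfSurjective Ψ hmono hsurj) (x : α) = Ψ (x : α) from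
    congrFun h1 (x : α)]
  rw [hΨs (x : α) x.2]


theorem forward_main (h : WeaklyUltrahomogeneousLO α) :
    {a : α | ∃ b : α, a ⋖ b ∨ b ⋖ a}.Finite := by
  classical
  obtain ⟨S, Sfin, hext⟩ := h
  by_contra hinf
  -- the bad set : S and its covers
  have hbad : (S ∪ ⋃ z ∈ S, ({a : α | a ⋖ z} ∪ {a : α | z ⋖ a})).Finite := by
    refine Sfin.union (Sfin.biUnion fun z _ => Set.Finite.union ?_ ?_)
    · refine Set.Subsingleton.finite ?_
      intro a ha b hb
      by_contra hne
      rcases Ne.lt_or_gt hne with h' | h'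
      · exact ha.2 h' hb.lt
      · exact hb.2 h' ha.lt
    · refine Set.Subsingleton.finite ?_
      intro a ha b hb
      by_contra hne
      rcases Ne.lt_or_gt hne with h' | h'
      · exact hb.2 ha.lt h'
      · exact ha.2 hb.lt h'
  set bad := S ∪ ⋃ z ∈ S, ({a : α | a ⋖ z} ∪ {a : α | z ⋖ a}) with hbaddef
  set P : Set (α × α) := {p | p.1 ⋖ p.2 ∧ p.1 ∉ S ∧ p.2 ∉ S} with hPdef
  have hSbad : S ⊆ bad := Set.subset_union_left
  have hP : P.Infinite := by
    intro hPfin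
    apply hinf
    refine Set.Finite.subset ((hPfin.image Prod.fst).union
      ((hPfin.image Prod.snd).union hbad)) ?_
    rintro a ⟨b, hab | hba⟩
    · by_cases hb : a ∈ bad
      · exact Or.inr (Or.inr hb)
      · have haS : a ∉ S := fun h' => hb (hSbad h')
        by_cases hbS : b ∈ S
        · exfalso
          apply hb
          refine Or.inr (Set.mem_biUnion hbS ?_)
          exact Or.inl hab
        · exact Or.inl ⟨(a, b), ⟨hab, haS, hbS⟩, rfl⟩
    · by_cases hb : a ∈ bad
      · exact Or.inr (Or.inr hb)
      · have haS : a ∉ S := fun h' => hb (hSbad h')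
        by_cases hbS : b ∈ S
        · exfalso
          apply hb
          refine Or.inr (Set.mem_biUnion hbS ?_)
          exact Or.inr hba
        · exact Or.inr (Or.inl ⟨(b, a), ⟨hba, hbS, haS⟩, rfl⟩)
  have hmaps : Set.MapsTo (fun p : α × α => {z | z ∈ S ∧ z < p.1}) P {B : Set α | B ⊆ S} :=
    fun p _ z hz => hz.1
  obtain ⟨p, hp, q, hq, hpq, hfeq⟩ :=
    hP.exists_ne_map_eq_of_mapsTo hmaps Sfin.finite_subsets
  -- the main collapsing argument
  have main : ∀ a b c d : α, a ⋖ b → c ⋖ d → b ∉ S → c ∉ S → d ∉ S →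
      a < c → ({z | z ∈ S ∧ z < a} : Set α) = {z | z ∈ S ∧ z < c} → False := by
    intro a b c d hab hcd hbS hcS hdS hac hzeq
    have hbc : b ≤ c := le_of_not_gt fun h' => hab.2 hac h'
    have hbd : b < d := lt_of_le_of_lt hbc hcd.lt
    have habd : a < d := hab.lt.trans hbd
    have hba : a < b := hab.lt
    have hda : a ≠ d := ne_of_lt habd
    have hban : b ≠ a := ne_of_gt hba
    have hSint : ∀ z ∈ S, ¬ (a < z ∧ z < d) := by
      rintro z hzS ⟨h1, h2⟩
      have hz1 : z ∉ ({z | z ∈ S ∧ z < a} : Set α) := fun hh => absurd h1 (not_lt.2 hh.2.le)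
      rw [hzeq] at hz1
      have hzc : ¬ z < c := fun hh => hz1 ⟨hzS, hh⟩
      have hcz : c < z := lt_of_le_of_ne (not_lt.1 hzc) (fun he => hcS (he ▸ hzS))
      exact hcd.2 hcz h2
    set s0 : Set α := S ∪ {a, d} with hs0def
    set t0 : Set α := S ∪ {a, b} with ht0def
    have has0 : a ∈ s0 := Or.inr (Or.inl rfl)
    have hds0 : d ∈ s0 := Or.inr (Or.inr rfl)
    have hat0 : a ∈ t0 := Or.inr (Or.inl rfl)
    have hbt0 : b ∈ t0 := Or.inr (Or.inr rfl)
    set g : α → α := fun x => if x = d then b else x with hgdef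
    have hga : g a = a := if_neg hda
    have hgd : g d = b := if_pos rfl
    have hgS : ∀ x ∈ S, g x = x := fun x hx => if_neg (fun he : x = d => hdS (by rw [← he]; exact hx))
    have hgs0 : ∀ x ∈ s0, g x ∈ t0 := by
      intro x hx
      by_cases hxd : x = d
      · rw [hxd, hgd]; exact hbt0
      · rw [hgdef]
        simp only [if_neg hxd]
        rcases hx with hx | hx | hx
        · exact Or.inl hx
        · rw [hx]; exact hat0
        · exact absurd hx hxd
    have hsm : StrictMonoOn g s0 := by
      intro x hx y hy hxy
      by_cases hxd : x = d
      · have hdy : d < y := by rw [← hxd]; exact hxy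
        have hyd : y ≠ d := ne_of_gt hdy
        rw [hgdef]
        simp only [if_pos hxd, if_neg hyd]
        exact hbd.trans hdy
      · by_cases hyd : y = d
        · have hxd' : x < d := by rw [← hyd]; exact hxy
          rw [hgdef]
          simp only [if_neg hxd, if_pos hyd]
          rcases hx with hx | hx | hx
          · -- x ∈ S, x < d so x ≤ a < b
            have : ¬ a < x := fun h' => hSint x hx ⟨h', hxd'⟩
            exact lt_of_le_of_lt (not_lt.1 this) hba
          · rw [hx]; exact hba
          · exact absurd hx hxd
        · rw [hgdef]
          simp only [if_neg hxd, if_neg hyd]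
          exact hxy
    -- build the order isomorphism
    set g' : α → α := fun y => if y = b then d else y with hg'def
    have hg't0 : ∀ y ∈ t0, g' y ∈ s0 := by
      intro y hy
      by_cases hyb : y = b
      · rw [hg'def]; simp only [if_pos hyb]; exact hds0
      · rw [hg'def]
        simp only [if_neg hyb]
        rcases hy with hy | hy | hy
        · exact Or.inl hy
        · rw [hy]; exact has0
        · exact absurd hy hyb
    have hnotb : ∀ x ∈ s0, x ≠ d → x ≠ b := by
      intro x hx hxd heb
      rcases hx with hx | hx | hx
      · exact hbS (heb ▸ hx)
      · exact hban (by rw [← heb, hx])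
      · exact hxd hx
    have hnotd : ∀ y ∈ t0, y ≠ b → y ≠ d := by
      intro y hy hyb hed
      rcases hy with hy | hy | hy
      · exact hdS (hed ▸ hy)
      · exact hda (hed ▸ hy).symm
      · exact hyb hy
    set φ0 : ↥s0 ≃o ↥t0 :=
      { toFun := fun x => ⟨g x, hgs0 x x.2⟩
        invFun := fun y => ⟨g' y, hg't0 y y.2⟩
        left_inv := by
          intro x
          apply Subtype.ext
          show g' (g (x : α)) = (x : α)
          by_cases hxd : (x : α) = d
          · rw [hxd, hgd, hg'def]; simp
          · rw [hgdef]
            simp only [if_neg hxd]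
            rw [hg'def]
            simp only [if_neg (hnotb (x : α) x.2 hxd)]
        right_inv := by
          intro y
          apply Subtype.ext
          show g (g' (y : α)) = (y : α)
          by_cases hyb : (y : α) = b
          · rw [hyb, hg'def]; simp [hgd]
          · rw [hg'def]
            simp only [if_neg hyb]
            rw [hgdef]
            simp only [if_neg (hnotd (y : α) y.2 hyb)]
        map_rel_iff' := by
          intro x y
          show g (x : α) ≤ g (y : α) ↔ x ≤ y
          rw [← Subtype.coe_le_coe]
          exact hsm.le_iff_le x.2 y.2 } with hφ0def
    have hs0fin : s0.Finite := Sfin.union ((Set.finite_singleton d).insert a)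
    have ht0fin : t0.Finite := Sfin.union ((Set.finite_singleton b).insert a)
    obtain ⟨ψ, hψ⟩ := hext s0 t0 hs0fin ht0fin Set.subset_union_left Set.subset_union_left φ0
      (by
        intro x hx
        show g x = x
        exact hgS x hx)
    have hψa : ψ a = a := by
      have := hψ ⟨a, has0⟩
      rw [this]
      show g a = a
      exact hga
    have hψd : ψ d = b := by
      have := hψ ⟨d, hds0⟩
      rw [this]
      show g d = b
      exact hgd
    have h1 : ψ a < ψ b := ψ.lt_iff_lt.2 hba
    rw [hψa] at h1
    have h2 : ψ b < ψ d := ψ.lt_iff_lt.2 hbd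
    rw [hψd] at h2
    exact hab.2 h1 h2
  -- conclude
  have hne1 : p.1 ≠ q.1 := by
    intro he
    apply hpq
    have h2 : p.2 = q.2 := by
      by_contra hne2
      rcases Ne.lt_or_gt hne2 with h' | h'
      · exact hq.1.2 (he ▸ hp.1.lt) h'
      · exact hp.1.2 (he.symm ▸ hq.1.lt) h'
    exact Prod.ext he h2
  rcases Ne.lt_or_gt hne1 with h' | h'
  · exact main p.1 p.2 q.1 q.2 hp.1 hq.1 hp.2.2 hq.2.1 hq.2.2 h' hfeq
  · exact main q.1 q.2 p.1 p.2 hq.1 hp.1 hq.2.2 hp.2.1 hp.2.2 h' hfeq.symm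


end WUHAux

/-- A countable linear order is weakly ultrahomogeneous iff its set of successivities
(elements covered by, or covering, some element) is finite. -/
theorem weaklyUltrahomogeneousLO_iff_finite_successivities
    {α : Type*} [LinearOrder α] [Countable α] :
    WeaklyUltrahomogeneousLO α ↔ {a : α | ∃ b : α, a ⋖ b ∨ b ⋖ a}.Finite :=
  ⟨WUHAux.forward_main, WUHAux.converse_main⟩
end

section
/- Let (α, <) be a countable weakly ultrahomogeneous linear order. A finite set S of special points of α is an exceptional set if and only if: (i) there is no successor pair (a, b) (b covers a) with both a ∉ S and b ∉ S; and (ii) every special point x that is not the greatest element of α and is not covered by any element of α belongs to S, and every special point x that is not the least element of α and does not cover any element of α belongs to S. -/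
/-- A special point of a linear order: a successivity or an endpoint. -/
def IsSpecialPoint {α : Type*} [LinearOrder α] (a : α) : Prop :=
  (∃ b : α, a ⋖ b ∨ b ⋖ a) ∨ IsTop a ∨ IsBot a

noncomputable section

namespace WUHAux

open Order

variable {α : Type*} [LinearOrder α]

/-- Finite partial order isomorphisms of `α` that fix every element of `S`. -/
def SIso (S : Finset α) : Type _ :=
  { f : Finset (α × α) //
    (∀ p ∈ f, ∀ q ∈ f, cmp (Prod.fst p) (Prod.fst q) = cmp (Prod.snd p) (Prod.snd q)) ∧
      ∀ x ∈ S, (x, x) ∈ f }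

namespace SIso

variable {S : Finset α}

instance : Preorder (SIso S) :=
  Subtype.preorder _

/-- The flip of a partial isomorphism. -/
def flip (f : SIso S) : SIso S :=
  ⟨f.1.image Prod.swap, by
    constructor
    · intro p hp q hq
      rw [Finset.mem_image] at hp hq
      obtain ⟨p', hp', rfl⟩ := hp
      obtain ⟨q', hq', rfl⟩ := hq
      exact (f.2.1 p' hp' q' hq').symm
    · intro x hx
      exact Finset.mem_image.2 ⟨(x, x), f.2.2 x hx, rfl⟩⟩

theorem mem_flip {f : SIso S} {p : α × α} : p ∈ (flip f).1 ↔ p.swap ∈ f.1 := by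
  constructor
  · intro hp
    rw [flip, Finset.mem_image] at hp
    obtain ⟨q, hq, rfl⟩ := hp
    simpa using hq
  · intro hp
    rw [flip, Finset.mem_image]
    exact ⟨p.swap, hp, Prod.swap_swap p⟩

variable (hno : ∀ a b : α, a ⋖ b → a ∈ S ∨ b ∈ S)
  (htop : ∀ x : α, IsSpecialPoint x → ¬IsTop x → (¬∃ b : α, x ⋖ b) → x ∈ S)
  (hbot : ∀ x : α, IsSpecialPoint x → ¬IsBot x → (¬∃ b : α, b ⋖ x) → x ∈ S)

include hno htop hbot

/-- a partial isomorphism fixes any special point in its domain. -/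
theorem snd_eq (f : SIso S) {a b : α} (hab : (a, b) ∈ f.1) (ha : IsSpecialPoint a) :
    b = a := by
  by_cases haS : a ∈ S
  · have h := f.2.1 (a, b) hab (a, a) (f.2.2 a haS)
    rw [cmp_self_eq_eq] at h
    exact (cmp_eq_eq_iff _ _).1 h.symm
  · have hub : b ≤ a := by
      by_cases hq : ∃ q, a ⋖ q
      · obtain ⟨q, hq⟩ := hq
        have hqS : q ∈ S := (hno a q hq).resolve_left haS
        have h := f.2.1 (a, b) hab (q, q) (f.2.2 q hqS)
        have h1 : cmp a q = Ordering.lt := (cmp_eq_lt_iff _ _).2 hq.lt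
        have hbq : b < q := (cmp_eq_lt_iff _ _).1 (h.symm.trans h1)
        exact le_of_not_gt fun hba => hq.2 hba hbq
      · have hT : IsTop a := by
          by_contra hT
          exact haS (htop a ha hT hq)
        exact hT b
    have hlb : a ≤ b := by
      by_cases hp : ∃ p, p ⋖ a
      · obtain ⟨p, hp⟩ := hp
        have hpS : p ∈ S := (hno p a hp).resolve_right haS
        have h := f.2.1 (a, b) hab (p, p) (f.2.2 p hpS)
        have h1 : cmp a p = Ordering.gt := (cmp_eq_gt_iff _ _).2 hp.lt
        have hpb : p < b := (cmp_eq_gt_iff _ _).1 (h.symm.trans h1)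
        exact le_of_not_gt fun hba => hp.2 hpb hba
      · have hB : IsBot a := by
          by_contra hB
          exact haS (hbot a ha hB hp)
        exact hB b
    exact le_antisymm hub hlb

theorem fst_eq (f : SIso S) {a b : α} (hab : (a, b) ∈ f.1) (hb : IsSpecialPoint b) :
    a = b :=
  snd_eq hno htop hbot f.flip (mem_flip.2 (by simpa using hab)) hb

theorem exists_across (f : SIso S) (a : α) :
    ∃ b : α, ∀ p ∈ f.1, cmp (Prod.fst p) a = cmp (Prod.snd p) b := by
  by_cases hdom : ∃ b, (a, b) ∈ f.1
  · obtain ⟨b, hb⟩ := hdom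
    exact ⟨b, fun p hp => f.2.1 p hp (a, b) hb⟩
  by_cases hsp : IsSpecialPoint a
  · refine ⟨a, ?_⟩
    have haS : a ∉ S := fun h => hdom ⟨a, f.2.2 a h⟩
    have hkeylt : ∀ p ∈ f.1, Prod.fst p < a → Prod.snd p < a := by
      intro p hp hc
      by_cases hpred : ∃ q, q ⋖ a
      · obtain ⟨q, hq⟩ := hpred
        have hqS : q ∈ S := (hno q a hq).resolve_right haS
        have h := f.2.1 p hp (q, q) (f.2.2 q hqS)
        have hcq : p.1 ≤ q := le_of_not_gt fun hlt => hq.2 hlt hc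
        have hq2 : p.2 ≤ q := by
          rcases hcq.lt_or_eq with h1 | h1
          · exact le_of_lt ((cmp_eq_lt_iff _ _).1 (h.symm.trans ((cmp_eq_lt_iff _ _).2 h1)))
          · exact le_of_eq ((cmp_eq_eq_iff _ _).1 (h.symm.trans ((cmp_eq_eq_iff _ _).2 h1)))
        exact lt_of_le_of_lt hq2 hq.lt
      · have hB : IsBot a := by
          by_contra hB
          exact haS (hbot a hsp hB hpred)
        exact absurd hc (not_lt.2 (hB p.1))
    have hkeygt : ∀ p ∈ f.1, a < Prod.fst p → a < Prod.snd p := by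
      intro p hp hc
      by_cases hsucc : ∃ q, a ⋖ q
      · obtain ⟨q, hq⟩ := hsucc
        have hqS : q ∈ S := (hno a q hq).resolve_left haS
        have h := f.2.1 p hp (q, q) (f.2.2 q hqS)
        have hcq : q ≤ p.1 := le_of_not_gt fun hlt => hq.2 hc hlt
        have hq2 : q ≤ p.2 := by
          rcases hcq.lt_or_eq with h1 | h1
          · exact le_of_lt ((cmp_eq_gt_iff _ _).1 (h.symm.trans ((cmp_eq_gt_iff _ _).2 h1)))
          · exact le_of_eq ((cmp_eq_eq_iff _ _).1
              (h.symm.trans ((cmp_eq_eq_iff _ _).2 h1.symm))).symm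
        exact lt_of_lt_of_le hq.lt hq2
      · have hT : IsTop a := by
          by_contra hT
          exact haS (htop a hsp hT hsucc)
        exact absurd hc (not_lt.2 (hT p.1))
    rintro ⟨c, e⟩ hp
    have hca : c ≠ a := fun h => hdom ⟨e, h ▸ hp⟩
    rcases lt_trichotomy c a with h1 | h1 | h1
    · have h2 := hkeylt (c, e) hp h1
      rw [(cmp_eq_lt_iff _ _).2 h1, (cmp_eq_lt_iff _ _).2 h2]
    · exact absurd h1 hca
    · have h2 := hkeygt (c, e) hp h1
      rw [(cmp_eq_gt_iff _ _).2 h1, (cmp_eq_gt_iff _ _).2 h2]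
  · -- `a` is not a special point
    classical
    set U := f.1.filter (fun p : α × α => p.1 < a) with hU
    set V := f.1.filter (fun p : α × α => a < p.1) with hV
    have hUV : ∀ p ∈ f.1, p ∈ U ∨ p ∈ V := by
      intro p hp
      rcases lt_trichotomy p.1 a with h | h | h
      · exact Or.inl (Finset.mem_filter.2 ⟨hp, h⟩)
      · exact absurd ⟨p.2, by rw [← h]; simpa using hp⟩ hdom
      · exact Or.inr (Finset.mem_filter.2 ⟨hp, h⟩)
    have hUmem : ∀ p ∈ U, p ∈ f.1 ∧ p.1 < a := fun p hp => Finset.mem_filter.1 hp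
    have hVmem : ∀ p ∈ V, p ∈ f.1 ∧ a < p.1 := fun p hp => Finset.mem_filter.1 hp
    by_cases hUne : U.Nonempty
    · obtain ⟨pu, hpu, hpumax⟩ := U.exists_max_image Prod.snd hUne
      obtain ⟨hpuf, hpua⟩ := hUmem pu hpu
      by_cases hVne : V.Nonempty
      · obtain ⟨pv, hpv, hpvmin⟩ := V.exists_min_image Prod.snd hVne
        obtain ⟨hpvf, hpva⟩ := hVmem pv hpv
        have huv2 : pu.2 < pv.2 := by
          have h := f.2.1 pu hpuf pv hpvf
          exact (cmp_eq_lt_iff _ _).1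
            (h.symm.trans ((cmp_eq_lt_iff _ _).2 (hpua.trans hpva)))
        have hex : ∃ b, pu.2 < b ∧ b < pv.2 := by
          by_contra hcon
          push_neg at hcon
          have hcov : pu.2 ⋖ pv.2 := ⟨huv2, fun c h1 h2 => absurd (hcon c h1) (not_le.2 h2)⟩
          have h1 : pu.1 = pu.2 := fst_eq hno htop hbot f (by simpa using hpuf)
            (Or.inl ⟨pv.2, Or.inl hcov⟩)
          have h2 : pv.1 = pv.2 := fst_eq hno htop hbot f (by simpa using hpvf)
            (Or.inl ⟨pu.2, Or.inr hcov⟩)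
          exact hcov.2 (h1 ▸ hpua) (h2 ▸ hpva)
        obtain ⟨b, hb1, hb2⟩ := hex
        refine ⟨b, fun p hp => ?_⟩
        rcases hUV p hp with h | h
        · have h1 : p.1 < a := (hUmem p h).2
          have h2 : p.2 < b := lt_of_le_of_lt (hpumax p h) hb1
          rw [(cmp_eq_lt_iff _ _).2 h1, (cmp_eq_lt_iff _ _).2 h2]
        · have h1 : a < p.1 := (hVmem p h).2
          have h2 : b < p.2 := lt_of_lt_of_le hb2 (hpvmin p h)
          rw [(cmp_eq_gt_iff _ _).2 h1, (cmp_eq_gt_iff _ _).2 h2]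
      · -- V empty
        have hnotTop : ¬IsTop pu.2 := by
          intro hT
          have h1 : pu.1 = pu.2 := fst_eq hno htop hbot f (by simpa using hpuf)
            (Or.inr (Or.inl hT))
          exact absurd (h1 ▸ hT a) (not_le.2 hpua)
        obtain ⟨b, hb⟩ : ∃ b, pu.2 < b := by
          by_contra hcon
          push_neg at hcon
          exact hnotTop fun c => hcon c
        refine ⟨b, fun p hp => ?_⟩
        rcases hUV p hp with h | h
        · have h1 : p.1 < a := (hUmem p h).2
          have h2 : p.2 < b := lt_of_le_of_lt (hpumax p h) hb
          rw [(cmp_eq_lt_iff _ _).2 h1, (cmp_eq_lt_iff _ _).2 h2]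
        · exact absurd ⟨p, h⟩ hVne
    · by_cases hVne : V.Nonempty
      · obtain ⟨pv, hpv, hpvmin⟩ := V.exists_min_image Prod.snd hVne
        obtain ⟨hpvf, hpva⟩ := hVmem pv hpv
        have hnotBot : ¬IsBot pv.2 := by
          intro hB
          have h1 : pv.1 = pv.2 := fst_eq hno htop hbot f (by simpa using hpvf)
            (Or.inr (Or.inr hB))
          exact absurd (h1 ▸ hB a) (not_le.2 hpva)
        obtain ⟨b, hb⟩ : ∃ b, b < pv.2 := by
          by_contra hcon
          push_neg at hcon
          exact hnotBot fun c => hcon c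
        refine ⟨b, fun p hp => ?_⟩
        rcases hUV p hp with h | h
        · exact absurd ⟨p, h⟩ hUne
        · have h1 : a < p.1 := (hVmem p h).2
          have h2 : b < p.2 := lt_of_lt_of_le hb (hpvmin p h)
          rw [(cmp_eq_gt_iff _ _).2 h1, (cmp_eq_gt_iff _ _).2 h2]
      · refine ⟨a, fun p hp => ?_⟩
        rcases hUV p hp with h | h
        · exact absurd ⟨p, h⟩ hUne
        · exact absurd ⟨p, h⟩ hVne

/-- The cofinal set of partial isomorphisms defined at `a`. -/
def definedAtLeft (a : α) : Cofinal (SIso S) where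
  carrier := {f | ∃ b : α, (a, b) ∈ f.1}
  isCofinal f := by
    obtain ⟨b, a_b⟩ := exists_across hno htop hbot f a
    refine ⟨⟨insert (a, b) f.1, ⟨fun p hp q hq => ?_,
      fun x hx => Finset.mem_insert_of_mem (f.2.2 x hx)⟩⟩,
      ⟨b, Finset.mem_insert_self _ _⟩, Finset.subset_insert _ _⟩
    rw [Finset.mem_insert] at hp hq
    rcases hp with rfl | pf <;> rcases hq with rfl | qf
    · simp only [cmp_self_eq_eq]
    · rw [cmp_eq_cmp_symm]
      exact a_b _ qf
    · exact a_b _ pf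
    · exact f.2.1 _ pf _ qf

/-- The cofinal set of partial isomorphisms defined at `b` in the codomain. -/
def definedAtRight (b : α) : Cofinal (SIso S) where
  carrier := {f | ∃ a : α, (a, b) ∈ f.1}
  isCofinal f := by
    obtain ⟨g, ⟨a, ha⟩, hg⟩ := (definedAtLeft hno htop hbot b).isCofinal f.flip
    refine ⟨g.flip, ⟨a, mem_flip.2 (by simpa using ha)⟩, fun p hp => ?_⟩
    exact mem_flip.2 (hg (mem_flip.2 (by simpa using hp)))

end SIso

theorem cmp_coe_orderIso {s t : Set α} (φ : ↥s ≃o ↥t) (u v : ↥s) :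
    cmp (u : α) (v : α) = cmp ((φ u : ↥t) : α) ((φ v : ↥t) : α) := by
  rcases lt_trichotomy (u : α) (v : α) with h | h | h
  · rw [(cmp_eq_lt_iff _ _).2 h,
      (cmp_eq_lt_iff _ _).2 (Subtype.coe_lt_coe.2 (φ.lt_iff_lt.2 (Subtype.coe_lt_coe.1 h)))]
  · have : u = v := Subtype.coe_injective h
    rw [this, cmp_self_eq_eq, cmp_self_eq_eq]
  · rw [(cmp_eq_gt_iff _ _).2 h,
      (cmp_eq_gt_iff _ _).2 (Subtype.coe_lt_coe.2 (φ.lt_iff_lt.2 (Subtype.coe_lt_coe.1 h)))]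

/-- The reverse direction: the conditions imply that `S` is exceptional. -/
theorem isExceptional_of_conditions [Countable α] (S : Set α) (hSfin : S.Finite)
    (hno : ¬∃ a b : α, a ⋖ b ∧ a ∉ S ∧ b ∉ S)
    (htop : ∀ x : α, IsSpecialPoint x → ¬IsTop x → (¬∃ b : α, x ⋖ b) → x ∈ S)
    (hbot : ∀ x : α, IsSpecialPoint x → ¬IsBot x → (¬∃ b : α, b ⋖ x) → x ∈ S) :
    IsExceptionalLO S := by
  classical
  refine ⟨hSfin, ?_⟩
  intro s t hsfin htfin hs ht φ hfix
  set S' : Finset α := hSfin.toFinset with hS'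
  have hmemS' : ∀ x : α, x ∈ S' ↔ x ∈ S := fun x => hSfin.mem_toFinset
  have hno' : ∀ a b : α, a ⋖ b → a ∈ S' ∨ b ∈ S' := by
    intro a b h
    by_contra hcon
    push_neg at hcon
    exact hno ⟨a, b, h, fun h' => hcon.1 ((hmemS' a).2 h'),
      fun h' => hcon.2 ((hmemS' b).2 h')⟩
  have htop' : ∀ x : α, IsSpecialPoint x → ¬IsTop x → (¬∃ b : α, x ⋖ b) → x ∈ S' :=
    fun x h1 h2 h3 => (hmemS' x).2 (htop x h1 h2 h3)
  have hbot' : ∀ x : α, IsSpecialPoint x → ¬IsBot x → (¬∃ b : α, b ⋖ x) → x ∈ S' :=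
    fun x h1 h2 h3 => (hmemS' x).2 (hbot x h1 h2 h3)
  have hsmem : ∀ c : ↥hsfin.toFinset, (c : α) ∈ s := fun c => hsfin.mem_toFinset.1 c.2
  set f₀val : Finset (α × α) :=
    hsfin.toFinset.attach.image
      (fun c : ↥hsfin.toFinset => (c.1, ((φ ⟨c.1, hsmem c⟩ : ↥t) : α))) with hf₀
  have hmemf₀ : ∀ p ∈ f₀val, ∃ hx : p.1 ∈ s, p.2 = ((φ ⟨p.1, hx⟩ : ↥t) : α) := by
    intro p hp
    rw [hf₀, Finset.mem_image] at hp
    obtain ⟨c, _, rfl⟩ := hp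
    exact ⟨hsmem c, rfl⟩
  have hmemf₀' : ∀ (x : α) (hx : x ∈ s), (x, ((φ ⟨x, hx⟩ : ↥t) : α)) ∈ f₀val := by
    intro x hx
    rw [hf₀, Finset.mem_image]
    exact ⟨⟨x, hsfin.mem_toFinset.2 hx⟩, Finset.mem_attach _ _, rfl⟩
  have hcmp : ∀ p ∈ f₀val, ∀ q ∈ f₀val, cmp p.1 q.1 = cmp p.2 q.2 := by
    intro p hp q hq
    obtain ⟨hx, hp2⟩ := hmemf₀ p hp
    obtain ⟨hy, hq2⟩ := hmemf₀ q hq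
    rw [hp2, hq2]
    exact cmp_coe_orderIso φ ⟨p.1, hx⟩ ⟨q.1, hy⟩
  have hSpairs : ∀ x ∈ S', (x, x) ∈ f₀val := by
    intro x hx
    have hxS : x ∈ S := (hmemS' x).1 hx
    have := hmemf₀' x (hs hxS)
    rwa [hfix x hxS] at this
  obtain ⟨_⟩ := nonempty_encodable α
  set f₀ : SIso S' := ⟨f₀val, hcmp, hSpairs⟩ with hf₀def
  let to_cofinal : α ⊕ α → Cofinal (SIso S') := fun p =>
    Sum.recOn p (fun a => SIso.definedAtLeft hno' htop' hbot' a)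
      (fun b => SIso.definedAtRight hno' htop' hbot' b)
  let I : Order.Ideal (SIso S') := Order.idealOfCofinals f₀ to_cofinal
  have hFa : ∀ a : α, ∃ b : α, ∃ m, m ∈ I ∧ (a, b) ∈ m.1 := by
    intro a
    obtain ⟨m, ⟨b, hb⟩, hm⟩ := Order.cofinal_meets_idealOfCofinals f₀ to_cofinal (Sum.inl a)
    exact ⟨b, m, hm, hb⟩
  have hGb : ∀ b : α, ∃ a : α, ∃ m, m ∈ I ∧ (a, b) ∈ m.1 := by
    intro b
    obtain ⟨m, ⟨a, ha⟩, hm⟩ := Order.cofinal_meets_idealOfCofinals f₀ to_cofinal (Sum.inr b)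
    exact ⟨a, m, hm, ha⟩
  choose F m₁ hm₁ hFm using hFa
  choose G m₂ hm₂ hGm using hGb
  have key : ∀ a b : α, cmp a (G b) = cmp (F a) b := by
    intro a b
    obtain ⟨k, hkI, h1, h2⟩ := I.directed _ (hm₁ a) _ (hm₂ b)
    exact k.2.1 (a, F a) (h1 (hFm a)) (G b, b) (h2 (hGm b))
  refine ⟨OrderIso.ofCmpEqCmp F G key, ?_⟩
  intro x
  have h0 : ((x : α), ((φ x : ↥t) : α)) ∈ f₀val := by
    have := hmemf₀' (x : α) x.2
    simpa using this
  have hf₀I : f₀ ∈ I := Order.mem_idealOfCofinals f₀ to_cofinal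
  obtain ⟨k, hkI, h1, h2⟩ := I.directed _ hf₀I _ (hm₁ (x : α))
  have hk := k.2.1 _ (h1 h0) _ (h2 (hFm (x : α)))
  rw [cmp_self_eq_eq] at hk
  have : ((φ x : ↥t) : α) = F (x : α) := (cmp_eq_eq_iff _ _).1 hk.symm
  exact this.symm

/-- Move one point: an order isomorphism between `A ∪ {x}` and `A ∪ {x'}` fixing `A`. -/
theorem exists_orderIso_move {α : Type*} [LinearOrder α] {A : Set α} {x x' : α}
    (hx : x ∉ A) (hx' : x' ∉ A) (h : ∀ w ∈ A, w < x ↔ w < x') :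
    ∃ φ : (A ∪ {x} : Set α) ≃o (A ∪ {x'} : Set α),
      (∀ (w : α) (hw : w ∈ A ∪ {x}), w ≠ x → ((φ ⟨w, hw⟩ : α) = w)) ∧
      ∀ hw : x ∈ A ∪ {x}, ((φ ⟨x, hw⟩ : α) = x') := by
  classical
  have mem₁ : ∀ w : α, w ∈ A ∪ {x} → w ≠ x → w ∈ A := by
    intro w hw hne
    rcases (Set.mem_union _ _ _).1 hw with h1 | h1
    · exact h1
    · exact absurd (Set.mem_singleton_iff.1 h1) hne
  have mem₂ : ∀ w : α, w ∈ A ∪ {x'} → w ≠ x' → w ∈ A := by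
    intro w hw hne
    rcases (Set.mem_union _ _ _).1 hw with h1 | h1
    · exact h1
    · exact absurd (Set.mem_singleton_iff.1 h1) hne
  have h' : ∀ w ∈ A, (w < x' ↔ w < x) := fun w hw => (h w hw).symm
  let F : (A ∪ {x} : Set α) → (A ∪ {x'} : Set α) := fun z =>
    if hz : (z : α) = x then ⟨x', Set.mem_union_right _ rfl⟩
    else ⟨(z : α), Set.mem_union_left _ (mem₁ _ z.2 hz)⟩
  let G : (A ∪ {x'} : Set α) → (A ∪ {x} : Set α) := fun z =>
    if hz : (z : α) = x' then ⟨x, Set.mem_union_right _ rfl⟩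
    else ⟨(z : α), Set.mem_union_left _ (mem₂ _ z.2 hz)⟩
  have hGF : ∀ z, G (F z) = z := by
    intro z
    by_cases hz : (z : α) = x
    · have h1 : F z = ⟨x', Set.mem_union_right _ rfl⟩ := dif_pos hz
      rw [h1]
      have h2 : G ⟨x', Set.mem_union_right _ rfl⟩ = ⟨x, Set.mem_union_right _ rfl⟩ :=
        dif_pos rfl
      rw [h2]
      exact Subtype.ext hz.symm
    · have h1 : F z = ⟨(z : α), Set.mem_union_left _ (mem₁ _ z.2 hz)⟩ := dif_neg hz
      rw [h1]
      have hne : (z : α) ≠ x' := fun he => hx' (he ▸ mem₁ _ z.2 hz)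
      have h2 : G ⟨(z : α), Set.mem_union_left _ (mem₁ _ z.2 hz)⟩ =
          ⟨(z : α), Set.mem_union_left _ (mem₂ _ (Set.mem_union_left _ (mem₁ _ z.2 hz)) hne)⟩ :=
        dif_neg hne
      rw [h2]
  have hFG : ∀ z, F (G z) = z := by
    intro z
    by_cases hz : (z : α) = x'
    · have h1 : G z = ⟨x, Set.mem_union_right _ rfl⟩ := dif_pos hz
      rw [h1]
      have h2 : F ⟨x, Set.mem_union_right _ rfl⟩ = ⟨x', Set.mem_union_right _ rfl⟩ :=
        dif_pos rfl
      rw [h2]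
      exact Subtype.ext hz.symm
    · have h1 : G z = ⟨(z : α), Set.mem_union_left _ (mem₂ _ z.2 hz)⟩ := dif_neg hz
      rw [h1]
      have hne : (z : α) ≠ x := fun he => hx (he ▸ mem₂ _ z.2 hz)
      have h2 : F ⟨(z : α), Set.mem_union_left _ (mem₂ _ z.2 hz)⟩ =
          ⟨(z : α), Set.mem_union_left _ (mem₁ _ (Set.mem_union_left _ (mem₂ _ z.2 hz)) hne)⟩ :=
        dif_neg hne
      rw [h2]
  have hmonF : Monotone F := by
    intro z w hzw
    have hzw' : (z : α) ≤ (w : α) := Subtype.coe_le_coe.2 hzw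
    dsimp only [F]
    split_ifs with hz hw hw
    · exact le_rfl
    · rw [Subtype.mk_le_mk]
      have hwa : (w : α) ∈ A := mem₁ _ w.2 hw
      have hxw : x < (w : α) := lt_of_le_of_ne (hz.symm.trans_le hzw') (Ne.symm hw)
      exact le_of_not_gt fun hlt => absurd ((h _ hwa).2 hlt) (not_lt.2 hxw.le)
    · rw [Subtype.mk_le_mk]
      have hza : (z : α) ∈ A := mem₁ _ z.2 hz
      have hzx : (z : α) < x := lt_of_le_of_ne (hzw'.trans_eq hw) hz
      exact ((h _ hza).1 hzx).le
    · exact Subtype.mk_le_mk.2 hzw'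
  have hmonG : Monotone G := by
    intro z w hzw
    have hzw' : (z : α) ≤ (w : α) := Subtype.coe_le_coe.2 hzw
    dsimp only [G]
    split_ifs with hz hw hw
    · exact le_rfl
    · rw [Subtype.mk_le_mk]
      have hwa : (w : α) ∈ A := mem₂ _ w.2 hw
      have hxw : x' < (w : α) := lt_of_le_of_ne (hz.symm.trans_le hzw') (Ne.symm hw)
      exact le_of_not_gt fun hlt => absurd ((h' _ hwa).2 hlt) (not_lt.2 hxw.le)
    · rw [Subtype.mk_le_mk]
      have hza : (z : α) ∈ A := mem₂ _ z.2 hz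
      have hzx : (z : α) < x' := lt_of_le_of_ne (hzw'.trans_eq hw) hz
      exact ((h' _ hza).1 hzx).le
    · exact Subtype.mk_le_mk.2 hzw'
  refine ⟨Equiv.toOrderIso ⟨F, G, hGF, hFG⟩ hmonF hmonG, ?_, ?_⟩
  · intro w hw hne
    show ((F ⟨w, hw⟩ : (A ∪ {x'} : Set α)) : α) = w
    exact congrArg Subtype.val (dif_neg hne)
  · intro hw
    show ((F ⟨x, hw⟩ : (A ∪ {x'} : Set α)) : α) = x'
    exact congrArg Subtype.val (dif_pos rfl)

end WUHAux

end

/-- In a countable weakly ultrahomogeneous linear order, a finite set `S` of special points is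
exceptional if and only if (i) no successor pair lies entirely outside `S`, and (ii) every
special point which is not the greatest element and is covered by no element belongs to `S`, and
every special point which is not the least element and covers no element belongs to `S`. -/
theorem isExceptionalLO_iff_of_specialPoints
    {α : Type*} [LinearOrder α] [Countable α]
    (hwuh : WeaklyUltrahomogeneousLO α)
    (S : Set α) (hSfin : S.Finite) (hSsp : ∀ x ∈ S, IsSpecialPoint x) :
    IsExceptionalLO S ↔
      ((¬ ∃ a b : α, a ⋖ b ∧ a ∉ S ∧ b ∉ S) ∧
        (∀ x : α, IsSpecialPoint x → ¬ IsTop x → (¬ ∃ b : α, x ⋖ b) → x ∈ S) ∧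
        (∀ x : α, IsSpecialPoint x → ¬ IsBot x → (¬ ∃ b : α, b ⋖ x) → x ∈ S)) := by
  constructor
  · intro hexc
    obtain ⟨hSfin', hext⟩ := hexc
    have hno : ¬∃ a b : α, a ⋖ b ∧ a ∉ S ∧ b ∉ S := by
      rintro ⟨a, b, hab, haS, hbS⟩
      have h1 : ∀ w ∈ S, w < a ↔ w < b := by
        intro w hw
        constructor
        · exact fun h => h.trans hab.lt
        · intro h
          have hwa : w ≤ a := le_of_not_gt fun h' => hab.2 h' h
          exact lt_of_le_of_ne hwa (fun he => haS (he ▸ hw))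
      obtain ⟨φ₁, hφ₁fix, hφ₁x⟩ := WUHAux.exists_orderIso_move haS hbS h1
      obtain ⟨ψ, hψ⟩ := hext (S ∪ {a}) (S ∪ {b}) (hSfin.union (Set.finite_singleton a))
        (hSfin.union (Set.finite_singleton b)) Set.subset_union_left Set.subset_union_left φ₁
        (fun w hw => hφ₁fix w (Set.subset_union_left hw) (fun he => haS (he ▸ hw)))
      have hψa : ψ a = b := by
        have := hψ ⟨a, Set.mem_union_right _ rfl⟩
        rwa [hφ₁x] at this
      have hψS : ∀ w ∈ S, ψ w = w := by
        intro w hw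
        have := hψ ⟨w, Set.mem_union_left _ hw⟩
        rwa [hφ₁fix w _ (fun he => haS (he ▸ hw))] at this
      set c := ψ b with hc
      have hbc : b ⋖ c := by
        have := (apply_covBy_apply_iff ψ).2 hab
        rwa [hψa] at this
      have hcS : c ∉ S := by
        intro hcs
        have h1 := hψS c hcs
        have h2 : c = b := ψ.injective (h1.trans hc)
        exact hbc.lt.ne' h2
      have hbA : b ∉ S ∪ {a} := by
        intro hmem
        rcases (Set.mem_union _ _ _).1 hmem with hm | hm
        · exact hbS hm
        · exact hab.lt.ne' (Set.mem_singleton_iff.1 hm)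
      have hcA : c ∉ S ∪ {a} := by
        intro hmem
        rcases (Set.mem_union _ _ _).1 hmem with hm | hm
        · exact hcS hm
        · exact (hab.lt.trans hbc.lt).ne' (Set.mem_singleton_iff.1 hm)
      have h2 : ∀ w ∈ S ∪ {a}, w < b ↔ w < c := by
        intro w hw
        constructor
        · exact fun h => h.trans hbc.lt
        · intro h
          have hwb : w ≤ b := le_of_not_gt fun h' => hbc.2 h' h
          exact lt_of_le_of_ne hwb (fun he => hbA (he ▸ hw))
      obtain ⟨φ₂, hφ₂fix, hφ₂x⟩ := WUHAux.exists_orderIso_move hbA hcA h2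
      obtain ⟨θ, hθ⟩ := hext ((S ∪ {a}) ∪ {b}) ((S ∪ {a}) ∪ {c})
        ((hSfin.union (Set.finite_singleton a)).union (Set.finite_singleton b))
        ((hSfin.union (Set.finite_singleton a)).union (Set.finite_singleton c))
        (fun w hw => Set.mem_union_left _ (Set.mem_union_left _ hw))
        (fun w hw => Set.mem_union_left _ (Set.mem_union_left _ hw)) φ₂
        (fun w hw => hφ₂fix w _ (fun he => hbS (he ▸ hw)))
      have hθa : θ a = a := by
        have := hθ ⟨a, Set.mem_union_left _ (Set.mem_union_right _ rfl)⟩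
        rwa [hφ₂fix a _ (fun he => hab.lt.ne he)] at this
      have hθb : θ b = c := by
        have := hθ ⟨b, Set.mem_union_right _ rfl⟩
        rwa [hφ₂x] at this
      have hac : a ⋖ c := by
        have := (apply_covBy_apply_iff θ).2 hab
        rwa [hθa, hθb] at this
      exact hac.2 hab.lt hbc.lt
    have htop : ∀ x : α, IsSpecialPoint x → ¬IsTop x → (¬∃ b : α, x ⋖ b) → x ∈ S := by
      intro x hxsp hxtop hxsucc
      by_contra hxS
      obtain ⟨x', hxx', hx'S⟩ : ∃ x', x < x' ∧ ∀ w ∈ S, x < w → x' < w := by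
        classical
        set M := hSfin.toFinset.filter (fun w => x < w) with hM
        by_cases hMne : M.Nonempty
        · have hxm : x < M.min' hMne := (Finset.mem_filter.1 (M.min'_mem hMne)).2
          obtain ⟨x', h1, h2⟩ := exists_lt_lt_of_not_covBy hxm (fun hcov => hxsucc ⟨_, hcov⟩)
          refine ⟨x', h1, fun w hw hxw => lt_of_lt_of_le h2 (M.min'_le w ?_)⟩
          exact Finset.mem_filter.2 ⟨hSfin.mem_toFinset.2 hw, hxw⟩
        · obtain ⟨x', hx'⟩ : ∃ x', x < x' := by
            by_contra hcon
            push_neg at hcon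
            exact hxtop fun c => hcon c
          exact ⟨x', hx', fun w hw hxw =>
            absurd ⟨w, Finset.mem_filter.2 ⟨hSfin.mem_toFinset.2 hw, hxw⟩⟩ hMne⟩
      have hx'Snot : x' ∉ S := fun h => lt_irrefl x' (hx'S x' h hxx')
      have h1 : ∀ w ∈ S, w < x ↔ w < x' := by
        intro w hw
        constructor
        · exact fun h => h.trans hxx'
        · intro h
          rcases lt_trichotomy w x with h2 | h2 | h2
          · exact h2
          · exact absurd hw (h2 ▸ hxS)
          · exact absurd h (not_lt.2 (hx'S w hw h2).le)
      obtain ⟨φ₁, hfix, hmove⟩ := WUHAux.exists_orderIso_move hxS hx'Snot h1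
      obtain ⟨ψ, hψ⟩ := hext (S ∪ {x}) (S ∪ {x'}) (hSfin.union (Set.finite_singleton x))
        (hSfin.union (Set.finite_singleton x')) Set.subset_union_left Set.subset_union_left φ₁
        (fun w hw => hfix w _ (fun he => hxS (he ▸ hw)))
      have hψx : ψ x = x' := by
        have := hψ ⟨x, Set.mem_union_right _ rfl⟩
        rwa [hmove] at this
      have hcase : (∃ p, p ⋖ x) ∨ IsBot x := by
        rcases hxsp with ⟨b, hb | hb⟩ | hT | hB
        · exact absurd ⟨b, hb⟩ hxsucc
        · exact Or.inl ⟨b, hb⟩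
        · exact absurd hT hxtop
        · exact Or.inr hB
      rcases hcase with ⟨p, hp⟩ | hB
      · have hpS : p ∈ S := by
          by_contra hpS
          exact hno ⟨p, x, hp, hpS, hxS⟩
        have hψp : ψ p = p := by
          have := hψ ⟨p, Set.mem_union_left _ hpS⟩
          rwa [hfix p _ (fun he => hxS (he ▸ hpS))] at this
        have hpx' : p ⋖ x' := by
          have := (apply_covBy_apply_iff ψ).2 hp
          rwa [hψp, hψx] at this
        exact hpx'.2 hp.lt hxx'
      · have h2 : x ≤ ψ.symm x := hB _
        have h3 : ψ x ≤ x := by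
          have := ψ.monotone h2
          rwa [ψ.apply_symm_apply] at this
        rw [hψx] at h3
        exact absurd h3 (not_le.2 hxx')
    have hbot : ∀ x : α, IsSpecialPoint x → ¬IsBot x → (¬∃ b : α, b ⋖ x) → x ∈ S := by
      intro x hxsp hxbot hxpred
      by_contra hxS
      obtain ⟨x', hxx', hx'S⟩ : ∃ x', x' < x ∧ ∀ w ∈ S, w < x → w < x' := by
        classical
        set M := hSfin.toFinset.filter (fun w => w < x) with hM
        by_cases hMne : M.Nonempty
        · have hxm : M.max' hMne < x := (Finset.mem_filter.1 (M.max'_mem hMne)).2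
          obtain ⟨x', h1, h2⟩ := exists_lt_lt_of_not_covBy hxm (fun hcov => hxpred ⟨_, hcov⟩)
          refine ⟨x', h2, fun w hw hxw => lt_of_le_of_lt (M.le_max' w ?_) h1⟩
          exact Finset.mem_filter.2 ⟨hSfin.mem_toFinset.2 hw, hxw⟩
        · obtain ⟨x', hx'⟩ : ∃ x', x' < x := by
            by_contra hcon
            push_neg at hcon
            exact hxbot fun c => hcon c
          exact ⟨x', hx', fun w hw hxw =>
            absurd ⟨w, Finset.mem_filter.2 ⟨hSfin.mem_toFinset.2 hw, hxw⟩⟩ hMne⟩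
      have hx'Snot : x' ∉ S := fun h => lt_irrefl x' (hx'S x' h hxx')
      have h1 : ∀ w ∈ S, w < x ↔ w < x' := by
        intro w hw
        constructor
        · exact fun h => hx'S w hw h
        · exact fun h => h.trans hxx'
      obtain ⟨φ₁, hfix, hmove⟩ := WUHAux.exists_orderIso_move hxS hx'Snot h1
      obtain ⟨ψ, hψ⟩ := hext (S ∪ {x}) (S ∪ {x'}) (hSfin.union (Set.finite_singleton x))
        (hSfin.union (Set.finite_singleton x')) Set.subset_union_left Set.subset_union_left φ₁
        (fun w hw => hfix w _ (fun he => hxS (he ▸ hw)))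
      have hψx : ψ x = x' := by
        have := hψ ⟨x, Set.mem_union_right _ rfl⟩
        rwa [hmove] at this
      have hcase : (∃ q, x ⋖ q) ∨ IsTop x := by
        rcases hxsp with ⟨b, hb | hb⟩ | hT | hB
        · exact Or.inl ⟨b, hb⟩
        · exact absurd ⟨b, hb⟩ hxpred
        · exact Or.inr hT
        · exact absurd hB hxbot
      rcases hcase with ⟨q, hq⟩ | hT
      · have hqS : q ∈ S := by
          by_contra hqS
          exact hno ⟨x, q, hq, hxS, hqS⟩
        have hψq : ψ q = q := by
          have := hψ ⟨q, Set.mem_union_left _ hqS⟩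
          rwa [hfix q _ (fun he => hxS (he ▸ hqS))] at this
        have hx'q : x' ⋖ q := by
          have := (apply_covBy_apply_iff ψ).2 hq
          rwa [hψq, hψx] at this
        exact hx'q.2 hxx' hq.lt
      · have h2 : ψ.symm x ≤ x := hT _
        have h3 : x ≤ ψ x := by
          have := ψ.monotone h2
          rwa [ψ.apply_symm_apply] at this
        rw [hψx] at h3
        exact absurd h3 (not_le.2 hxx')
    exact ⟨hno, htop, hbot⟩
  · rintro ⟨hno, htop, hbot⟩
    exact WUHAux.isExceptional_of_conditions S hSfin hno htop hbot
end

section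
/- Let (α, <) be a countable weakly ultrahomogeneous linear order and let M be a minimal exceptional set, i.e., an exceptional set no proper subset of which is an exceptional set. Then an element x ∈ α has the property that the singleton {x} is first-order definable in the structure (α, <) (in the language of orders) with parameters from M if and only if x is a special point of α. -/
open FirstOrder

/-- The interpretation of the language with one binary relation symbol on an ordered type,
where the relation symbol is interpreted as the strict order `<`. -/
def ltStructure (α : Type*) [LT α] : Language.order.Structure α where
  funMap := fun f _ => Empty.elim f
  RelMap := fun {n} r x =>
    match n, r with
    | 2, .le => x 0 < x 1

section Helpers
variable {α : Type*} [LinearOrder α]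

/-- Two points make the same cut over a set `S`. -/
def SameCut (S : Set α) (x y : α) : Prop :=
  ∀ m ∈ S, (m < x ↔ m < y) ∧ (x < m ↔ y < m)

theorem SameCut.refl (S : Set α) (x : α) : SameCut S x x := fun _ _ => ⟨Iff.rfl, Iff.rfl⟩

theorem SameCut.symm {S : Set α} {x y : α} (h : SameCut S x y) : SameCut S y x :=
  fun m hm => ⟨(h m hm).1.symm, (h m hm).2.symm⟩

theorem SameCut.trans {S : Set α} {x y z : α} (h : SameCut S x y) (h' : SameCut S y z) :
    SameCut S x z :=
  fun m hm => ⟨(h m hm).1.trans (h' m hm).1, (h m hm).2.trans (h' m hm).2⟩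

theorem SameCut.notMem {S : Set α} {x y : α} (h : SameCut S x y) (hx : x ∉ S) : y ∉ S := by
  intro hy
  have h1 := (h y hy).1
  have h2 := (h y hy).2
  have : x = y := le_antisymm (not_lt.1 (fun hl : y < x => absurd (h1.1 hl) (lt_irrefl y)))
    (not_lt.1 (fun hl : x < y => absurd (h2.1 hl) (lt_irrefl y)))
  exact hx (this ▸ hy)

theorem SameCut.of_between {S : Set α} {x y z : α} (h : SameCut S x y) (h1 : x ≤ z) (h2 : z ≤ y) :
    SameCut S x z := by
  intro m hm
  constructor
  · exact ⟨fun hx => hx.trans_le h1, fun hz => (h m hm).1.2 (hz.trans_le h2)⟩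
  · exact ⟨fun hx => lt_of_le_of_lt h2 ((h m hm).2.1 hx), fun hz => lt_of_le_of_lt h1 hz⟩

/-- build an order iso between finite subsets from a function -/
theorem orderIso_of_fun {s t : Set α} (f : α → α) (hmaps : ∀ z ∈ s, f z ∈ t)
    (hsurj : ∀ w ∈ t, ∃ z ∈ s, f z = w)
    (hmono : ∀ z ∈ s, ∀ w ∈ s, z < w → f z < f w) :
    ∃ e : ↥s ≃o ↥t, ∀ z : ↥s, ((e z : ↥t) : α) = f z := by
  have hsm : StrictMono (fun u : ↥s => (⟨f u, hmaps u u.2⟩ : ↥t)) := by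
    intro u v huv
    exact Subtype.mk_lt_mk.2 (hmono u u.2 v v.2 (Subtype.coe_lt_coe.2 huv))
  have hsurj' : Function.Surjective (fun u : ↥s => (⟨f u, hmaps u u.2⟩ : ↥t)) := by
    rintro ⟨w, hw⟩
    obtain ⟨z, hz, hfz⟩ := hsurj w hw
    exact ⟨⟨z, hz⟩, Subtype.ext hfz⟩
  exact ⟨hsm.orderIsoOfSurjective _ hsurj', fun z => rfl⟩

theorem exceptional_superset {S T : Set α} (hS : IsExceptionalLO S) (hT : T.Finite)
    (hST : S ⊆ T) : IsExceptionalLO T :=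
  ⟨hT, fun s t hs ht hTs hTt φ hfix =>
    hS.2 s t hs ht (hST.trans hTs) (hST.trans hTt) φ (fun z hz => hfix z (hST hz))⟩

theorem exists_auto {S : Set α} (hS : IsExceptionalLO S) {x y : α}
    (hxy : SameCut S x y) (hx : x ∉ S) :
    ∃ ψ : α ≃o α, (∀ s ∈ S, ψ s = s) ∧ ψ x = y := by
  rcases eq_or_ne x y with rfl | hne
  · exact ⟨OrderIso.refl α, fun s _ => rfl, rfl⟩
  have hy : y ∉ S := hxy.notMem hx
  set f : α → α := fun z => if z = x then y else z with hf
  have hfS : ∀ z ∈ S, f z = z := fun z hz => if_neg (fun h : z = x => hx (h ▸ hz))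
  have hfx : f x = y := if_pos rfl
  have hmaps : ∀ z ∈ S ∪ {x}, f z ∈ S ∪ {y} := by
    rintro z (hz | rfl)
    · rw [hfS z hz]; exact Or.inl hz
    · rw [hfx]; exact Or.inr rfl
  have hsurj : ∀ w ∈ S ∪ {y}, ∃ z ∈ S ∪ {x}, f z = w := by
    rintro w (hw | rfl)
    · exact ⟨w, Or.inl hw, hfS w hw⟩
    · exact ⟨x, Or.inr rfl, hfx⟩
  have hmono : ∀ z ∈ S ∪ {x}, ∀ w ∈ S ∪ {x}, z < w → f z < f w := by
    rintro z (hz | rfl) w (hw | rfl) hlt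
    · rw [hfS z hz, hfS w hw]; exact hlt
    · rw [hfS z hz, hfx]; exact (hxy z hz).1.1 hlt
    · rw [hfx, hfS w hw]; exact (hxy w hw).2.1 hlt
    · exact absurd hlt (lt_irrefl _)
  obtain ⟨e, he⟩ := orderIso_of_fun f hmaps hsurj hmono
  obtain ⟨ψ, hψ⟩ := hS.2 (S ∪ {x}) (S ∪ {y}) (hS.1.union (Set.finite_singleton x))
    (hS.1.union (Set.finite_singleton y)) Set.subset_union_left Set.subset_union_left e
    (fun z hz => (he ⟨z, Or.inl hz⟩).trans (hfS z hz))
  refine ⟨ψ, fun s hs => ?_, ?_⟩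
  · exact (hψ ⟨s, Or.inl hs⟩).trans ((he ⟨s, Or.inl hs⟩).trans (hfS s hs))
  · exact (hψ ⟨x, Or.inr rfl⟩).trans ((he ⟨x, Or.inr rfl⟩).trans hfx)


theorem sameCut_of_fix {S : Set α} (ψ : α ≃o α) (hfix : ∀ s ∈ S, ψ s = s) (x : α) :
    SameCut S x (ψ x) := by
  intro m hm
  constructor
  · constructor
    · intro h
      have := ψ.lt_iff_lt.2 h
      rwa [hfix m hm] at this
    · intro h
      rw [← hfix m hm] at h
      exact ψ.lt_iff_lt.1 h
  · constructor
    · intro h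
      have := ψ.lt_iff_lt.2 h
      rwa [hfix m hm] at this
    · intro h
      rw [← hfix m hm] at h
      exact ψ.lt_iff_lt.1 h

theorem exists_gt_sameCut {S : Set α} (hS : IsExceptionalLO S) {x y : α}
    (h : SameCut S x y) (hx : x ∉ S) (hne : x ≠ y) : ∃ z, SameCut S x z ∧ x < z := by
  rcases lt_or_gt_of_ne hne with hlt | hgt
  · exact ⟨y, h, hlt⟩
  · obtain ⟨ψ, hfix, hψ⟩ := exists_auto hS h.symm (h.notMem hx)
    refine ⟨ψ x, sameCut_of_fix ψ hfix x, ?_⟩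
    have := ψ.lt_iff_lt.2 hgt
    rwa [hψ] at this

theorem exists_lt_sameCut {S : Set α} (hS : IsExceptionalLO S) {x y : α}
    (h : SameCut S x y) (hx : x ∉ S) (hne : x ≠ y) : ∃ z, SameCut S x z ∧ z < x := by
  rcases lt_or_gt_of_ne hne with hlt | hgt
  · obtain ⟨ψ, hfix, hψ⟩ := exists_auto hS h.symm (h.notMem hx)
    refine ⟨ψ x, sameCut_of_fix ψ hfix x, ?_⟩
    have := ψ.lt_iff_lt.2 hlt
    rwa [hψ] at this
  · exact ⟨y, h, hgt⟩

theorem exists_between_sameCut {S : Set α} (hS : IsExceptionalLO S) {x y : α}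
    (h : SameCut S x y) (hx : x ∉ S) (hlt : x < y) : ∃ z, x < z ∧ z < y := by
  by_contra hno
  push_neg at hno
  have hcov : x ⋖ y := ⟨hlt, fun c hc1 hc2 => absurd (hno c hc1) (not_le.2 hc2)⟩
  have hS' : IsExceptionalLO (S ∪ {x}) :=
    exceptional_superset hS (hS.1.union (Set.finite_singleton x)) Set.subset_union_left
  obtain ⟨z, hz, hyz⟩ := exists_gt_sameCut hS h.symm (h.notMem hx) hlt.ne'
  have hz' : SameCut (S ∪ {x}) y z := by
    rintro m (hm | rfl)
    · exact hz m hm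
    · exact ⟨⟨fun _ => hlt.trans hyz, fun _ => hlt⟩,
        ⟨fun h' => absurd hlt (not_lt.2 h'.le), fun h' => absurd (hlt.trans hyz) (not_lt.2 h'.le)⟩⟩
  have hy' : y ∉ S ∪ {x} := by
    rintro (hyS | rfl)
    · exact (h.notMem hx) hyS
    · exact absurd hlt (lt_irrefl _)
  obtain ⟨ψ, hfix, hψ⟩ := exists_auto hS' hz' hy'
  have hψx : ψ x = x := hfix x (Or.inr rfl)
  have : ψ x ⋖ ψ y := (apply_covBy_apply_iff ψ).2 hcov
  rw [hψx, hψ] at this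
  exact this.2 hlt hyz

theorem exists_gt_cut {S : Set α} (hfin : S.Finite) {x : α} (hx : x ∉ S) (htop : ¬IsTop x)
    (hcov : ∀ b, ¬ x ⋖ b) : ∃ z, SameCut S x z ∧ x < z := by
  classical
  set F := hfin.toFinset.filter (fun m => x < m) with hF
  by_cases hFne : F.Nonempty
  · set m₀ := F.min' hFne with hm₀
    have hm₀F : m₀ ∈ F := F.min'_mem hFne
    have hxm : x < m₀ := (Finset.mem_filter.1 hm₀F).2
    obtain ⟨z, hxz, hzm⟩ := exists_lt_lt_of_not_covBy hxm (hcov m₀)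
    refine ⟨z, fun m hm => ?_, hxz⟩
    have hmin : x < m → m₀ ≤ m := fun h' =>
      F.min'_le m (Finset.mem_filter.2 ⟨hfin.mem_toFinset.2 hm, h'⟩)
    constructor
    · refine ⟨fun h' => h'.trans hxz, fun h' => ?_⟩
      rcases lt_trichotomy m x with h1 | rfl | h1
      · exact h1
      · exact absurd hm hx
      · exact absurd (hzm.trans_le (hmin h1)) (not_lt.2 h'.le)
    · refine ⟨fun h' => hzm.trans_le (hmin h'), fun h' => ?_⟩
      rcases lt_trichotomy x m with h1 | rfl | h1
      · exact h1
      · exact absurd hm hx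
      · exact absurd (h1.trans (hxz.trans h')) (lt_irrefl _)
  · obtain ⟨z, hz⟩ := not_forall.1 (fun h => htop h)
    have hxz : x < z := not_le.1 hz
    refine ⟨z, fun m hm => ?_, hxz⟩
    have hnxm : ¬ x < m := fun h' => hFne ⟨m, Finset.mem_filter.2 ⟨hfin.mem_toFinset.2 hm, h'⟩⟩
    constructor
    · refine ⟨fun h' => h'.trans hxz, fun h' => ?_⟩
      rcases lt_trichotomy m x with h1 | rfl | h1
      · exact h1
      · exact absurd hm hx
      · exact absurd h1 hnxm
    · exact ⟨fun h' => absurd h' hnxm, fun h' => absurd (hxz.trans h') hnxm⟩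

theorem exists_lt_cut {S : Set α} (hfin : S.Finite) {x : α} (hx : x ∉ S) (hbot : ¬IsBot x)
    (hcov : ∀ b, ¬ b ⋖ x) : ∃ z, SameCut S x z ∧ z < x := by
  classical
  set F := hfin.toFinset.filter (fun m => m < x) with hF
  by_cases hFne : F.Nonempty
  · set m₀ := F.max' hFne with hm₀
    have hm₀F : m₀ ∈ F := F.max'_mem hFne
    have hxm : m₀ < x := (Finset.mem_filter.1 hm₀F).2
    obtain ⟨z, hmz, hzx⟩ := exists_lt_lt_of_not_covBy hxm (hcov m₀)
    refine ⟨z, fun m hm => ?_, hzx⟩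
    have hmax : m < x → m ≤ m₀ := fun h' =>
      F.le_max' m (Finset.mem_filter.2 ⟨hfin.mem_toFinset.2 hm, h'⟩)
    constructor
    · refine ⟨fun h' => (hmax h').trans_lt hmz, fun h' => h'.trans hzx⟩
    · refine ⟨fun h' => hzx.trans h', fun h' => ?_⟩
      rcases lt_trichotomy x m with h1 | rfl | h1
      · exact h1
      · exact absurd hm hx
      · exact absurd ((hmax h1).trans_lt hmz) (not_lt.2 h'.le)
  · obtain ⟨z, hz⟩ := not_forall.1 (fun h => hbot h)
    have hzx : z < x := not_le.1 hz
    refine ⟨z, fun m hm => ?_, hzx⟩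
    have hnmx : ¬ m < x := fun h' => hFne ⟨m, Finset.mem_filter.2 ⟨hfin.mem_toFinset.2 hm, h'⟩⟩
    constructor
    · exact ⟨fun h' => absurd h' hnmx, fun h' => absurd (h'.trans hzx) hnmx⟩
    · refine ⟨fun h' => hzx.trans h', fun h' => ?_⟩
      rcases lt_trichotomy x m with h1 | rfl | h1
      · exact h1
      · exact absurd hm hx
      · exact absurd h1 hnmx

theorem sameCut_eq_of_special {S : Set α} (hS : IsExceptionalLO S) {x : α} (hx : x ∉ S)
    (hsp : IsSpecialPoint x) {y : α} (h : SameCut S x y) : y = x := by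
  by_contra hne
  rcases hsp with ⟨b, hb | hb⟩ | htop | hbot
  · by_cases hSb : SameCut S x b
    · obtain ⟨w, h1, h2⟩ := exists_between_sameCut hS hSb hx hb.1
      exact hb.2 h1 h2
    · simp only [SameCut, not_forall] at hSb
      obtain ⟨m, hm, hmd⟩ := hSb
      have hmb : m = b := by
        by_contra hmb
        refine hmd ⟨⟨fun h' => h'.trans hb.1, fun h' => ?_⟩, ⟨fun h' => ?_, fun h' => hb.1.trans h'⟩⟩
        · rcases lt_trichotomy m x with h1 | rfl | h1
          · exact h1
          · exact absurd hm hx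
          · exact absurd h' (hb.2 h1)
        · rcases lt_trichotomy b m with h1 | rfl | h1
          · exact h1
          · exact absurd rfl hmb
          · exact absurd h1 (hb.2 h')
      subst hmb
      obtain ⟨z, hz, hxz⟩ := exists_gt_sameCut hS h hx (Ne.symm hne)
      have hzm : z < m := (hz m hm).2.1 hb.1
      exact hb.2 hxz hzm
  · by_cases hSb : SameCut S x b
    · obtain ⟨w, h1, h2⟩ := exists_between_sameCut hS hSb.symm (hSb.notMem hx) hb.1
      exact hb.2 h1 h2
    · simp only [SameCut, not_forall] at hSb
      obtain ⟨m, hm, hmd⟩ := hSb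
      have hmb : m = b := by
        by_contra hmb
        refine hmd ⟨⟨fun h' => ?_, fun h' => h'.trans hb.1⟩, ⟨fun h' => hb.1.trans_le h'.le, fun h' => ?_⟩⟩
        · rcases lt_trichotomy m b with h1 | rfl | h1
          · exact h1
          · exact absurd rfl hmb
          · exact absurd h' (hb.2 h1)
        · rcases lt_trichotomy x m with h1 | rfl | h1
          · exact h1
          · exact absurd hm hx
          · exact absurd h1 (hb.2 h')
      subst hmb
      obtain ⟨z, hz, hxz⟩ := exists_lt_sameCut hS h hx (Ne.symm hne)
      have hmz : m < z := (hz m hm).1.1 hb.1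
      exact hb.2 hmz hxz
  · obtain ⟨z, _, hxz⟩ := exists_gt_sameCut hS h hx (Ne.symm hne)
    exact absurd (htop z) (not_le.2 hxz)
  · obtain ⟨z, _, hzx⟩ := exists_lt_sameCut hS h hx (Ne.symm hne)
    exact absurd (hbot z) (not_le.2 hzx)


open Order in
theorem extend_partialIso {L : Type*} [LinearOrder L] [Countable L] [DenselyOrdered L]
    [NoMinOrder L] [NoMaxOrder L] [Nonempty L] (p : Order.PartialIso L L) :
    ∃ ψ : L ≃o L, ∀ q ∈ p.val, ψ q.1 = q.2 := by
  cases nonempty_encodable L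
  let to_cofinal : L ⊕ L → Cofinal (PartialIso L L) := fun q ↦
    Sum.recOn q (PartialIso.definedAtLeft L) (PartialIso.definedAtRight L)
  let our_ideal : Order.Ideal (PartialIso L L) := idealOfCofinals p to_cofinal
  let F := fun a =>
    PartialIso.funOfIdeal a our_ideal (cofinal_meets_idealOfCofinals _ to_cofinal (Sum.inl a))
  let G := fun b =>
    PartialIso.invOfIdeal b our_ideal (cofinal_meets_idealOfCofinals _ to_cofinal (Sum.inr b))
  refine ⟨OrderIso.ofCmpEqCmp (fun a ↦ (F a).val) (fun b ↦ (G b).val) fun a b ↦ ?_, ?_⟩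
  · rcases (F a).prop with ⟨f, hf, ha⟩
    rcases (G b).prop with ⟨g, hg, hb⟩
    rcases our_ideal.directed _ hf _ hg with ⟨m, _, fm, gm⟩
    exact m.prop (a, _) (fm ha) (_, b) (gm hb)
  · rintro ⟨a, b⟩ hq
    rcases (F a).prop with ⟨f, hf, ha⟩
    rcases our_ideal.directed _ hf _ (mem_idealOfCofinals p to_cofinal) with ⟨m, _, fm, pm⟩
    have := m.prop (a, (F a).val) (fm ha) (a, b) (pm hq)
    simp only [cmp_self_eq_eq] at this
    exact (cmp_eq_eq_iff _ _).1 this.symm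

theorem glue_orderIso {J : Set α}
    (hconv : ∀ u ∈ J, ∀ v ∈ J, ∀ w, u ≤ w → w ≤ v → w ∈ J) (χ : ↥J ≃o ↥J) :
    ∃ ψ : α ≃o α, (∀ z (h : z ∈ J), ψ z = χ ⟨z, h⟩) ∧ (∀ z, z ∉ J → ψ z = z) := by
  classical
  set f : α → α := fun z => if h : z ∈ J then (χ ⟨z, h⟩ : α) else z with hfdef
  set g : α → α := fun z => if h : z ∈ J then (χ.symm ⟨z, h⟩ : α) else z with hgdef
  have hfJ : ∀ z (h : z ∈ J), f z = (χ ⟨z, h⟩ : α) := fun z h => dif_pos h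
  have hfnJ : ∀ z, z ∉ J → f z = z := fun z h => dif_neg h
  have hgJ : ∀ z (h : z ∈ J), g z = (χ.symm ⟨z, h⟩ : α) := fun z h => dif_pos h
  have hgnJ : ∀ z, z ∉ J → g z = z := fun z h => dif_neg h
  have hleft : ∀ z, g (f z) = z := by
    intro z
    by_cases h : z ∈ J
    · rw [hfJ z h, hgJ _ (χ ⟨z, h⟩).2, Subtype.coe_eta, OrderIso.symm_apply_apply]
    · rw [hfnJ z h, hgnJ z h]
  have hright : ∀ z, f (g z) = z := by
    intro z
    by_cases h : z ∈ J
    · rw [hgJ z h, hfJ _ (χ.symm ⟨z, h⟩).2, Subtype.coe_eta, OrderIso.apply_symm_apply]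
    · rw [hgnJ z h, hfnJ z h]
  have hmono : StrictMono f := by
    intro z w hzw
    by_cases hz : z ∈ J <;> by_cases hw : w ∈ J
    · rw [hfJ z hz, hfJ w hw]
      exact Subtype.coe_lt_coe.2 (χ.lt_iff_lt.2 (Subtype.mk_lt_mk.2 hzw))
    · rw [hfJ z hz, hfnJ w hw]
      by_contra hc
      push_neg at hc
      exact hw (hconv z hz _ (χ ⟨z, hz⟩).2 w hzw.le hc)
    · rw [hfnJ z hz, hfJ w hw]
      by_contra hc
      push_neg at hc
      exact hz (hconv _ (χ ⟨w, hw⟩).2 w hw z hc hzw.le)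
    · rw [hfnJ z hz, hfnJ w hw]; exact hzw
  exact ⟨⟨⟨f, g, hleft, hright⟩, hmono.le_iff_le⟩, hfJ, hfnJ⟩


theorem cmp_congr {β γ : Type*} [LinearOrder β] [LinearOrder γ] {a b : β} {c d : γ}
    (h1 : a < b ↔ c < d) (h2 : b < a ↔ d < c) : cmp a b = cmp c d := by
  rcases lt_trichotomy a b with h | h | h
  · rw [(cmp_eq_lt_iff _ _).2 h, (cmp_eq_lt_iff _ _).2 (h1.1 h)]
  · subst h
    have hcd : c = d := le_antisymm (not_lt.1 fun hc => absurd (h2.2 hc) (lt_irrefl _))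
      (not_lt.1 fun hc => absurd (h1.2 hc) (lt_irrefl _))
    subst hcd
    rw [cmp_self_eq_eq, cmp_self_eq_eq]
  · rw [(cmp_eq_gt_iff _ _).2 h, (cmp_eq_gt_iff _ _).2 (h2.1 h)]

theorem exceptional_erase [Countable α] {M : Set α} (hM : IsExceptionalLO M) {m : α}
    (hm : m ∈ M) (hns : ¬IsSpecialPoint m) : IsExceptionalLO (M \ {m}) := by
  classical
  simp only [IsSpecialPoint, not_or, not_exists] at hns
  obtain ⟨hcov, htop, hbot⟩ := hns
  have hcov1 : ∀ b, ¬ m ⋖ b := fun b => (hcov b).1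
  have hcov2 : ∀ b, ¬ b ⋖ m := fun b => (hcov b).2
  set M' : Set α := M \ {m} with hM'def
  have hM'fin : M'.Finite := hM.1.diff
  have hM'sub : M' ⊆ M := Set.diff_subset
  have hmM' : m ∉ M' := fun h => h.2 rfl
  set J : Set α := {z | SameCut M' m z} with hJdef
  have hJm : m ∈ J := SameCut.refl M' m
  have hJcut : ∀ z ∈ J, SameCut M' m z := fun z hz => hz
  have hJconv : ∀ u ∈ J, ∀ v ∈ J, ∀ w, u ≤ w → w ≤ v → w ∈ J := by
    intro u hu v hv w h1 h2
    exact SameCut.trans (hu : SameCut M' m u) (SameCut.of_between ((hu : SameCut M' m u).symm.trans hv) h1 h2)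
  have hJM : ∀ z ∈ J, z ≠ m → z ∉ M := by
    intro z hz hzm hzM
    exact (SameCut.notMem (hz : SameCut M' m z) hmM') ⟨hzM, hzm⟩
  have h_up : ∃ z ∈ J, m < z := by
    obtain ⟨z, hz, h⟩ := exists_gt_cut hM'fin hmM' htop hcov1
    exact ⟨z, hz, h⟩
  have h_dn : ∃ z ∈ J, z < m := by
    obtain ⟨z, hz, h⟩ := exists_lt_cut hM'fin hmM' hbot hcov2
    exact ⟨z, hz, h⟩
  have hcut_lower : ∀ z ∈ J, z < m → ∀ z' ∈ J, z' < m → SameCut M z z' := by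
    intro z hz hzm z' hz' hz'm m'' hm''
    by_cases h : m'' = m
    · subst h
      exact ⟨⟨fun h' => absurd (h'.trans hzm) (lt_irrefl _), fun h' => absurd (h'.trans hz'm) (lt_irrefl _)⟩,
        ⟨fun _ => hz'm, fun _ => hzm⟩⟩
    · have hm''M' : m'' ∈ M' := ⟨hm'', h⟩
      exact ⟨((hJcut z hz m'' hm''M').1.symm.trans (hJcut z' hz' m'' hm''M').1),
        ((hJcut z hz m'' hm''M').2.symm.trans (hJcut z' hz' m'' hm''M').2)⟩
  have hcut_upper : ∀ z ∈ J, m < z → ∀ z' ∈ J, m < z' → SameCut M z z' := by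
    intro z hz hzm z' hz' hz'm m'' hm''
    by_cases h : m'' = m
    · subst h
      exact ⟨⟨fun _ => hz'm, fun _ => hzm⟩,
        ⟨fun h' => absurd (hzm.trans h') (lt_irrefl _), fun h' => absurd (hz'm.trans h') (lt_irrefl _)⟩⟩
    · have hm''M' : m'' ∈ M' := ⟨hm'', h⟩
      exact ⟨((hJcut z hz m'' hm''M').1.symm.trans (hJcut z' hz' m'' hm''M').1),
        ((hJcut z hz m'' hm''M').2.symm.trans (hJcut z' hz' m'' hm''M').2)⟩
  -- membership in J from a SameCut over M with an element of J
  have hJ_of_cut : ∀ u ∈ J, ∀ z, SameCut M' u z → z ∈ J := by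
    intro u hu z hcutz
    exact SameCut.trans (hu : SameCut M' m u) hcutz
  haveI : Nonempty ↥J := ⟨⟨m, hJm⟩⟩
  haveI hJnomax : NoMaxOrder ↥J := by
    constructor
    rintro ⟨u, hu⟩
    rcases lt_trichotomy u m with hum | rfl | hum
    · exact ⟨⟨m, hJm⟩, Subtype.mk_lt_mk.2 hum⟩
    · obtain ⟨z, hz, h⟩ := h_up
      exact ⟨⟨z, hz⟩, Subtype.mk_lt_mk.2 h⟩
    · obtain ⟨w, hmw, hwu⟩ := exists_lt_lt_of_not_covBy hum (hcov1 u)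
      have hwJ : w ∈ J := hJconv m hJm u hu w hmw.le hwu.le
      have huM : u ∉ M := hJM u hu (ne_of_gt hum)
      obtain ⟨z, hcutz, huz⟩ := exists_gt_sameCut hM
        ((hcut_upper u hu hum w hwJ hmw)) huM (ne_of_gt hwu)
      refine ⟨⟨z, hJ_of_cut u hu z (fun m'' hm'' => hcutz m'' (hM'sub hm''))⟩, Subtype.mk_lt_mk.2 huz⟩
  haveI hJnomin : NoMinOrder ↥J := by
    constructor
    rintro ⟨u, hu⟩
    rcases lt_trichotomy u m with hum | rfl | hum
    · obtain ⟨w, huw, hwm⟩ := exists_lt_lt_of_not_covBy hum (hcov2 u)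
      have hwJ : w ∈ J := hJconv u hu m hJm w huw.le hwm.le
      have huM : u ∉ M := hJM u hu (ne_of_lt hum)
      obtain ⟨z, hcutz, hzu⟩ := exists_lt_sameCut hM
        ((hcut_lower u hu hum w hwJ hwm)) huM (ne_of_lt huw)
      refine ⟨⟨z, hJ_of_cut u hu z (fun m'' hm'' => hcutz m'' (hM'sub hm''))⟩, Subtype.mk_lt_mk.2 hzu⟩
    · obtain ⟨z, hz, h⟩ := h_dn
      exact ⟨⟨z, hz⟩, Subtype.mk_lt_mk.2 h⟩
    · exact ⟨⟨m, hJm⟩, Subtype.mk_lt_mk.2 hum⟩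
  haveI hJdense : DenselyOrdered ↥J := by
    constructor
    rintro ⟨u, hu⟩ ⟨v, hv⟩ huv
    rw [Subtype.mk_lt_mk] at huv
    have hbetween : ∀ w, u < w → w < v → ∃ c : ↥J, ⟨u, hu⟩ < c ∧ c < (⟨v, hv⟩ : ↥J) := by
      intro w h1 h2
      exact ⟨⟨w, hJconv u hu v hv w h1.le h2.le⟩, Subtype.mk_lt_mk.2 h1, Subtype.mk_lt_mk.2 h2⟩
    rcases lt_trichotomy u m with hum | rfl | hum
    · rcases lt_trichotomy v m with hvm | rfl | hvm
      · have huM : u ∉ M := hJM u hu (ne_of_lt hum)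
        obtain ⟨w, h1, h2⟩ := exists_between_sameCut hM (hcut_lower u hu hum v hv hvm) huM huv
        exact hbetween w h1 h2
      · obtain ⟨w, h1, h2⟩ := exists_lt_lt_of_not_covBy hum (hcov2 u)
        exact hbetween w h1 h2
      · exact hbetween m hum hvm
    · obtain ⟨w, h1, h2⟩ := exists_lt_lt_of_not_covBy huv (hcov1 v)
      exact hbetween w h1 h2
    · have huM : u ∉ M := hJM u hu (ne_of_gt hum)
      obtain ⟨w, h1, h2⟩ := exists_between_sameCut hM
        (hcut_upper u hu hum v hv (hum.trans huv)) huM huv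
      exact hbetween w h1 h2
  -- now the main construction
  refine ⟨hM'fin, ?_⟩
  intro s t hsfin htfin hs ht φ hfix
  have hcoe_lt : ∀ a b : ↥s, (a : α) < b ↔ ((φ a : ↥t) : α) < ((φ b : ↥t) : α) := by
    intro a b
    rw [Subtype.coe_lt_coe, Subtype.coe_lt_coe]
    exact (φ.lt_iff_lt).symm
  have hφcut : ∀ u : ↥s, SameCut M' (u : α) ((φ u : ↥t) : α) := by
    intro u m'' hm''
    have h1 := hcoe_lt ⟨m'', hs hm''⟩ u
    have h2 := hcoe_lt u ⟨m'', hs hm''⟩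
    rw [hfix m'' hm''] at h1 h2
    exact ⟨h1, h2⟩
  have hφJ : ∀ u : ↥s, ((u : α) ∈ J ↔ ((φ u : ↥t) : α) ∈ J) := by
    intro u
    constructor
    · intro h
      exact hJ_of_cut u h _ (hφcut u)
    · intro h
      exact hJ_of_cut _ h _ (hφcut u).symm
  set sJ : Set α := s ∩ J with hsJdef
  have hsJfin : sJ.Finite := hsfin.inter_of_left J
  set k : {z // z ∈ hsJfin.toFinset} → ↥J × ↥J := fun z =>
    (⟨z.1, (hsJfin.mem_toFinset.1 z.2).2⟩,
     ⟨((φ ⟨z.1, (hsJfin.mem_toFinset.1 z.2).1⟩ : ↥t) : α),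
      (hφJ ⟨z.1, (hsJfin.mem_toFinset.1 z.2).1⟩).1 (hsJfin.mem_toFinset.1 z.2).2⟩) with hkdef
  set pairs : Finset (↥J × ↥J) := hsJfin.toFinset.attach.image k with hpairsdef
  have hpairs_prop : ∀ p ∈ pairs, ∀ q ∈ pairs, cmp p.1 q.1 = cmp p.2 q.2 := by
    intro p hp q hq
    obtain ⟨z, _, rfl⟩ := Finset.mem_image.1 hp
    obtain ⟨w, _, rfl⟩ := Finset.mem_image.1 hq
    refine cmp_congr ?_ ?_
    · simp only [hkdef, Subtype.mk_lt_mk]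
      exact hcoe_lt ⟨z.1, _⟩ ⟨w.1, _⟩
    · simp only [hkdef, Subtype.mk_lt_mk]
      exact hcoe_lt ⟨w.1, _⟩ ⟨z.1, _⟩
  obtain ⟨χ, hχ⟩ := extend_partialIso (⟨pairs, hpairs_prop⟩ : Order.PartialIso ↥J ↥J)
  obtain ⟨ψ₀, hψ₀J, hψ₀n⟩ := glue_orderIso hJconv χ
  have hψ₀symm_n : ∀ z, z ∉ J → ψ₀.symm z = z := by
    intro z h
    exact ψ₀.symm_apply_eq.2 (hψ₀n z h).symm
  have hψ₀s : ∀ (z) (hz1 : z ∈ s) (hz2 : z ∈ J), ψ₀ z = ((φ ⟨z, hz1⟩ : ↥t) : α) := by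
    intro z hz1 hz2
    have hzsJ : z ∈ hsJfin.toFinset := hsJfin.mem_toFinset.2 ⟨hz1, hz2⟩
    have hmem : k ⟨z, hzsJ⟩ ∈ pairs := Finset.mem_image.2 ⟨⟨z, hzsJ⟩, Finset.mem_attach _ _, rfl⟩
    have h3 := hχ _ hmem
    simp only [hkdef] at h3
    rw [hψ₀J z hz2, h3]
  set G : α → α := fun z => if hz : z ∈ s then ψ₀.symm ((φ ⟨z, hz⟩ : ↥t) : α) else z with hGdef
  have hGs : ∀ (z) (hz : z ∈ s), G z = ψ₀.symm ((φ ⟨z, hz⟩ : ↥t) : α) := fun z hz => dif_pos hz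
  have hGsJ : ∀ (z) (hz1 : z ∈ s), z ∈ J → G z = z := by
    intro z hz1 hz2
    rw [hGs z hz1]
    exact ψ₀.symm_apply_eq.2 (hψ₀s z hz1 hz2).symm
  have hGm : G m = m := by
    by_cases h : m ∈ s
    · exact hGsJ m h hJm
    · exact dif_neg h
  have hGcut : ∀ (z) (hz : z ∈ s), SameCut M' z (G z) := by
    intro z hz
    by_cases hzJ : z ∈ J
    · rw [hGsJ z hz hzJ]
      exact SameCut.refl _ _
    · have hφnJ : ((φ ⟨z, hz⟩ : ↥t) : α) ∉ J := fun h => hzJ ((hφJ ⟨z, hz⟩).2 h)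
      rw [hGs z hz, hψ₀symm_n _ hφnJ]
      exact hφcut ⟨z, hz⟩
  have hGnJ : ∀ (z) (hz : z ∈ s), z ∉ J → G z ∉ J := by
    intro z hz hzJ h
    have hφnJ : ((φ ⟨z, hz⟩ : ↥t) : α) ∉ J := fun h' => hzJ ((hφJ ⟨z, hz⟩).2 h')
    rw [hGs z hz, hψ₀symm_n _ hφnJ] at h
    exact hφnJ h
  have hGm_rel : ∀ (z) (hz : z ∈ s), (z < m ↔ G z < m) ∧ (m < z ↔ m < G z) := by
    intro z hz
    by_cases hzJ : z ∈ J
    · rw [hGsJ z hz hzJ]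
      exact ⟨Iff.rfl, Iff.rfl⟩
    · have hGz : SameCut M' z (G z) := hGcut z hz
      have hGzJ : G z ∉ J := hGnJ z hz hzJ
      have hzm : z ≠ m := fun h => hzJ (h ▸ hJm)
      have hGzm : G z ≠ m := fun h => hGzJ (h ▸ hJm)
      constructor
      · constructor
        · intro h
          by_contra hc
          have h2 : m < G z := lt_of_le_of_ne (not_lt.1 hc) (Ne.symm hGzm)
          exact hzJ ((SameCut.of_between hGz h.le h2.le).symm)
        · intro h
          by_contra hc
          have h2 : m < z := lt_of_le_of_ne (not_lt.1 hc) (Ne.symm hzm)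
          exact hGzJ ((SameCut.of_between hGz.symm h.le h2.le).symm)
      · constructor
        · intro h
          by_contra hc
          have h2 : G z < m := lt_of_le_of_ne (not_lt.1 hc) hGzm
          exact hGzJ ((SameCut.of_between hGz.symm h2.le h.le).symm)
        · intro h
          by_contra hc
          have h2 : z < m := lt_of_le_of_ne (not_lt.1 hc) hzm
          exact hzJ ((SameCut.of_between hGz h2.le h.le).symm)
  set s' : Set α := s ∪ {m} with hs'def
  set t' : Set α := (fun z => ψ₀.symm z) '' t ∪ {m} with ht'def
  have hmaps : ∀ z ∈ s', G z ∈ t' := by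
    rintro z (hz | rfl)
    · rw [hGs z hz]; exact Or.inl ⟨_, (φ ⟨z, hz⟩).2, rfl⟩
    · rw [hGm]; exact Or.inr rfl
  have hsurj : ∀ w ∈ t', ∃ z ∈ s', G z = w := by
    rintro w (⟨v, hv, rfl⟩ | hw)
    · refine ⟨((φ.symm ⟨v, hv⟩ : ↥s) : α), Or.inl (φ.symm ⟨v, hv⟩).2, ?_⟩
      rw [hGs _ (φ.symm ⟨v, hv⟩).2]
      congr 1
      rw [Subtype.coe_eta, OrderIso.apply_symm_apply]
    · exact ⟨m, Or.inr rfl, hGm.trans (Set.mem_singleton_iff.1 hw).symm⟩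
  have hmono : ∀ z ∈ s', ∀ w ∈ s', z < w → G z < G w := by
    rintro z (hz | rfl) w (hw | rfl) hzw
    · rw [hGs z hz, hGs w hw]
      exact ψ₀.symm.lt_iff_lt.2 ((hcoe_lt ⟨z, hz⟩ ⟨w, hw⟩).1 hzw)
    · rw [hGm]
      exact (hGm_rel z hz).1.1 hzw
    · rw [hGm]
      exact (hGm_rel w hw).2.1 hzw
    · exact absurd hzw (lt_irrefl _)
  obtain ⟨e, he⟩ := orderIso_of_fun G hmaps hsurj hmono
  have hM'notJ : ∀ x ∈ M', x ∉ J := fun x hx h =>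
    (SameCut.notMem (h : SameCut M' m x) hmM') hx
  have hGfix : ∀ x ∈ M, G x = x := by
    intro x hx
    by_cases h : x = m
    · subst h; exact hGm
    · have hxM' : x ∈ M' := ⟨hx, h⟩
      have hxs : x ∈ s := hs hxM'
      rw [hGs x hxs]
      have h4 : ((φ ⟨x, hxs⟩ : ↥t) : α) = x := hfix x hxM'
      rw [h4]
      exact hψ₀symm_n x (hM'notJ x hxM')
  have hMs' : M ⊆ s' := by
    intro x hx
    by_cases h : x = m
    · exact Or.inr h
    · exact Or.inl (hs ⟨hx, h⟩)
  have hMt' : M ⊆ t' := by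
    intro x hx
    by_cases h : x = m
    · exact Or.inr h
    · exact Or.inl ⟨x, ht ⟨hx, h⟩, hψ₀symm_n x (hM'notJ x ⟨hx, h⟩)⟩
  obtain ⟨ψ₁, hψ₁⟩ := hM.2 s' t' (hsfin.union (Set.finite_singleton m))
    ((htfin.image _).union (Set.finite_singleton m)) hMs' hMt' e
    (fun x hx => (he ⟨x, hMs' hx⟩).trans (hGfix x hx))
  refine ⟨ψ₁.trans ψ₀, ?_⟩
  intro u
  have h1 : ψ₁ (u : α) = G u := (hψ₁ ⟨u, Or.inl u.2⟩).trans (he ⟨u, Or.inl u.2⟩)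
  have h2 : G u = ψ₀.symm ((φ ⟨(u : α), u.2⟩ : ↥t) : α) := hGs u u.2
  calc (ψ₁.trans ψ₀) (u : α) = ψ₀ (ψ₁ (u : α)) := rfl
  _ = ((φ ⟨(u : α), u.2⟩ : ↥t) : α) := by rw [h1, h2]; exact ψ₀.apply_symm_apply _


open FirstOrder.Language in
theorem fixed_of_definable {M : Set α} {x : α}
    (hdef : @Set.Definable₁ α M Language.order (ltStructure α) {x})
    (ψ : α ≃o α) (hfix : ∀ s ∈ M, ψ s = s) : ψ x = x := by
  letI := ltStructure α
  obtain ⟨θ, hθ⟩ := hdef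
  let g : α ≃[Language.order[[↥M]]] α :=
    { toEquiv := ψ.toEquiv,
      map_fun' := by
        intro n f xs
        rcases f with f | c
        · exact Empty.elim f
        · cases n with
          | zero => exact hfix c c.2
          | succ n => exact c.elim
      map_rel' := by
        intro n r xs
        rcases r with r | r
        · match n, r with
          | 2, Language.orderRel.le =>
            show ψ (xs 0) < ψ (xs 1) ↔ xs 0 < xs 1
            exact ψ.lt_iff_lt
        · exact Empty.elim r }
  have hx : (fun _ : Fin 1 => x) ∈ {v : Fin 1 → α | v 0 ∈ ({x} : Set α)} := rfl
  rw [hθ] at hx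
  have h2 : θ.Realize (⇑g ∘ fun _ : Fin 1 => x) :=
    (Language.StrongHomClass.realize_formula g θ).2 hx
  have h3 : (fun _ : Fin 1 => ψ x) ∈ Set.ofPred θ.Realize := h2
  rw [← hθ] at h3
  exact h3

open FirstOrder.Language in
theorem singleton_definable_of_con {M : Set α} {x : α} (hx : x ∈ M) :
    @Set.Definable₁ α M Language.order (ltStructure α) {x} := by
  letI := ltStructure α
  refine ⟨Language.Term.equal (Language.Term.var 0)
    ((Language.order.con (⟨x, hx⟩ : M)).term), ?_⟩
  ext v
  simp only [Set.mem_setOf_eq, Set.mem_singleton_iff, Language.Formula.realize_equal,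
    Language.Term.realize_var, Language.Term.realize_con]

open FirstOrder.Language in
theorem singleton_definable_of_cut {M : Set α} (hfin : M.Finite) {x : α}
    (hcut : ∀ y, SameCut M x y → y = x) (hxM : x ∉ M) :
    @Set.Definable₁ α M Language.order (ltStructure α) {x} := by
  classical
  letI := ltStructure α
  set ltS : (Language.order[[↥M]]).Relations 2 := Sum.inl Language.orderRel.le with hltS
  have hRel : ∀ a b : α, Language.Structure.RelMap ltS ![a, b] ↔ a < b := by
    intro a b
    show (![a, b] 0 < ![a, b] 1) ↔ a < b
    simp
  refine ⟨Language.BoundedFormula.iInf (fun mm : {z // z ∈ hfin.toFinset} =>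
    if (mm : α) < x then
      Language.Relations.boundedFormula₂ ltS
        ((Language.order.con (⟨mm.1, hfin.mem_toFinset.1 mm.2⟩ : M)).term)
        ((Language.Term.var (Sum.inl 0)) : (Language.order[[↥M]]).Term (Fin 1 ⊕ Fin 0))
    else
      Language.Relations.boundedFormula₂ ltS ((Language.Term.var (Sum.inl 0)) : (Language.order[[↥M]]).Term (Fin 1 ⊕ Fin 0))
        ((Language.order.con (⟨mm.1, hfin.mem_toFinset.1 mm.2⟩ : M)).term)), ?_⟩
  ext v
  simp only [Set.mem_setOf_eq, Set.mem_singleton_iff, Language.Formula.Realize]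
  rw [Language.BoundedFormula.realize_iInf]
  have hbranch : ∀ (mm : {z // z ∈ hfin.toFinset}),
      ((if (mm : α) < x then
        Language.Relations.boundedFormula₂ ltS
          ((Language.order.con (⟨mm.1, hfin.mem_toFinset.1 mm.2⟩ : M)).term)
          ((Language.Term.var (Sum.inl 0)) : (Language.order[[↥M]]).Term (Fin 1 ⊕ Fin 0))
      else
        Language.Relations.boundedFormula₂ ltS ((Language.Term.var (Sum.inl 0)) : (Language.order[[↥M]]).Term (Fin 1 ⊕ Fin 0))
          ((Language.order.con (⟨mm.1, hfin.mem_toFinset.1 mm.2⟩ : M)).term)).Realize v default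
      ↔ (if (mm : α) < x then (mm : α) < v 0 else v 0 < (mm : α))) := by
    intro mm
    by_cases h : (mm : α) < x
    · rw [if_pos h, if_pos h, Language.BoundedFormula.realize_rel₂]
      rw [Language.Term.realize_con]
      exact hRel _ _
    · rw [if_neg h, if_neg h, Language.BoundedFormula.realize_rel₂]
      rw [Language.Term.realize_con]
      exact hRel _ _
  constructor
  · rintro h mm
    rw [hbranch mm]
    have hmm : (mm : α) ∈ M := hfin.mem_toFinset.1 mm.2
    by_cases hlt : (mm : α) < x
    · rw [if_pos hlt, h]
      exact hlt
    · rw [if_neg hlt, h]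
      exact lt_of_le_of_ne (not_lt.1 hlt) (fun he => hxM (he ▸ hmm))
  · intro h
    refine hcut (v 0) (fun m hm => ?_)
    have hmem : m ∈ hfin.toFinset := hfin.mem_toFinset.2 hm
    have hspec := h ⟨m, hmem⟩
    rw [hbranch ⟨m, hmem⟩] at hspec
    by_cases hlt : m < x
    · rw [if_pos hlt] at hspec
      exact ⟨⟨fun _ => hspec, fun _ => hlt⟩,
        ⟨fun h' => absurd (hlt.trans h') (lt_irrefl _),
         fun h' => absurd (hspec.trans h') (lt_irrefl _)⟩⟩
    · rw [if_neg hlt] at hspec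
      have hxm : x < m := lt_of_le_of_ne (not_lt.1 hlt) (fun he => hxM (he ▸ hm))
      exact ⟨⟨fun h' => absurd h' hlt, fun h' => absurd (h'.trans hspec) (lt_irrefl _)⟩,
        ⟨fun _ => hspec, fun _ => hxm⟩⟩

end Helpers

/-- Let `M` be a minimal exceptional set of a countable weakly ultrahomogeneous linear order `α`.
Then the singleton `{x}` is first-order definable with parameters from `M`, in the language of a
single binary relation interpreted as `<`, if and only if `x` is a special point of `α`. -/
theorem definable_singleton_iff_specialPoint
    {α : Type*} [LinearOrder α] [Countable α]
    (hwuh : WeaklyUltrahomogeneousLO α)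
    (M : Set α) (hM : IsExceptionalLO M)
    (hmin : ∀ M' : Set α, M' ⊂ M → ¬ IsExceptionalLO M') (x : α) :
    @Set.Definable₁ α M Language.order (ltStructure α) {x} ↔ IsSpecialPoint x := by
  classical
  constructor
  · intro hdef
    by_contra hns
    by_cases hxM : x ∈ M
    · exact hmin (M \ {x}) (Set.sdiff_singleton_ssubset.2 hxM) (exceptional_erase hM hxM hns)
    · have hns' := hns
      simp only [IsSpecialPoint, not_or, not_exists] at hns'
      obtain ⟨hcov, htop, hbot⟩ := hns'
      obtain ⟨y, hy, hyx⟩ := exists_lt_cut hM.1 hxM hbot (fun b => (hcov b).2)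
      obtain ⟨ψ, hfix, hψ⟩ := exists_auto hM hy hxM
      have hfx := fixed_of_definable hdef ψ hfix
      rw [hψ] at hfx
      exact absurd hfx (ne_of_lt hyx)
  · intro hsp
    by_cases hxM : x ∈ M
    · exact singleton_definable_of_con hxM
    · exact singleton_definable_of_cut hM.1 (fun y hy => sameCut_eq_of_special hM hxM hsp hy) hxM
end

section
/- A countable equivalence structure (α, E) is weakly ultrahomogeneous if and only if all but finitely many of its equivalence classes have the same cardinality, i.e., there is a cardinal κ such that the set of E-classes whose cardinality is not κ is finite. -/
universe u

/-- `S` is an exceptional set for the equivalence structure `(α, E)`: `S` is finite, and every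
`E`-preserving bijection between finite subsets of `α` both containing `S`, which fixes each
element of `S`, extends to an automorphism of `(α, E)`. -/
def IsExceptionalEq {α : Type*} (E : α → α → Prop) (S : Set α) : Prop :=
  S.Finite ∧
    ∀ (s t : Set α), s.Finite → t.Finite → S ⊆ s → S ⊆ t →
      ∀ φ : ↥s ≃ ↥t,
        (∀ x y : ↥s, E x y ↔ E (φ x) (φ y)) →
        (∀ x : ↥s, (x : α) ∈ S → ((φ x : ↥t) : α) = x) →
        ∃ ψ : α ≃ α, (∀ x y : α, E x y ↔ E (ψ x) (ψ y)) ∧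
          ∀ x : ↥s, ψ (x : α) = ((φ x : ↥t) : α)

/-- An equivalence structure is weakly ultrahomogeneous if it has an exceptional set. -/
def WeaklyUltrahomogeneousEq {α : Type*} (E : α → α → Prop) : Prop :=
  ∃ S : Set α, IsExceptionalEq E S

lemma extend_equiv_aux {β γ : Type u} (hbg : Cardinal.mk β = Cardinal.mk γ)
    (A : Set β) (B : Set γ) (hA : A.Finite) (f : ↥A ≃ ↥B) :
    ∃ h : β ≃ γ, (∀ a : ↥A, h a = (f a : γ)) ∧ ∀ x : β, x ∉ A → h x ∉ B := by
  classical
  haveI := hA.to_subtype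
  haveI : Finite ↥B := Finite.of_equiv _ f
  have hAB : Cardinal.mk ↥A = Cardinal.mk ↥B := Cardinal.mk_congr f
  have h1 : Cardinal.mk ↥A + Cardinal.mk ↥(Aᶜ) = Cardinal.mk β := Cardinal.mk_sum_compl A
  have h2 : Cardinal.mk ↥B + Cardinal.mk ↥(Bᶜ) = Cardinal.mk γ := Cardinal.mk_sum_compl B
  have hc : Cardinal.mk ↥(Aᶜ) = Cardinal.mk ↥(Bᶜ) := by
    apply Cardinal.eq_of_add_eq_add_left (a := Cardinal.mk ↥A)
    · rw [h1, hbg, ← h2, hAB]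
    · exact Cardinal.lt_aleph0_of_finite ↥A
  obtain ⟨e⟩ := Cardinal.eq.mp hc
  refine ⟨(Equiv.Set.sumCompl A).symm.trans ((f.sumCongr e).trans (Equiv.Set.sumCompl B)), ?_, ?_⟩
  · intro a
    simp [Equiv.Set.sumCompl_symm_apply]
  · intro x hx
    have h3 : (Equiv.Set.sumCompl A).symm x = Sum.inr ⟨x, hx⟩ :=
      Equiv.Set.sumCompl_symm_apply_of_notMem hx
    simp only [Equiv.trans_apply, h3, Equiv.sumCongr_apply, Sum.map_inr,
      Equiv.Set.sumCompl_apply_inr]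
    exact (e ⟨x, hx⟩).2


lemma finite_classes_meeting {α : Type u} (E : α → α → Prop) (hE : Equivalence E)
    {S : Set α} (hS : S.Finite) {T : Set (Set α)}
    (hT : ∀ C ∈ T, (∃ a, C = {x | E a x}) ∧ (C ∩ S).Nonempty) : T.Finite := by
  classical
  rcases T.eq_empty_or_nonempty with h | ⟨C0, hC0⟩
  · simp [h]
  haveI : Nonempty α := ⟨((hT C0 hC0).2).choose⟩
  inhabit α
  set f : Set α → α := fun C => if h : (C ∩ S).Nonempty then h.choose else default with hf
  apply Set.Finite.of_finite_image (f := f)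
  · apply hS.subset
    rintro y ⟨C, hC, rfl⟩
    have h := (hT C hC).2
    simp only [hf, dif_pos h]
    exact h.choose_spec.2
  · intro C hC C' hC' hfe
    obtain ⟨⟨a, ha⟩, h2⟩ := hT C hC
    obtain ⟨⟨a', ha'⟩, h2'⟩ := hT C' hC'
    have hz0 : f C ∈ C ∩ S := by simp only [hf, dif_pos h2]; exact h2.choose_spec
    have hz0' : f C ∈ C' ∩ S := by rw [hfe]; simp only [hf, dif_pos h2']; exact h2'.choose_spec
    obtain ⟨z, hz, hz'⟩ : ∃ z, z ∈ C ∩ S ∧ z ∈ C' ∩ S := ⟨f C, hz0, hz0'⟩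
    rw [ha] at hz
    rw [ha'] at hz'
    have e1 : E a z := hz.1
    have e2 : E a' z := hz'.1
    rw [ha, ha']
    ext x
    constructor
    · intro hx; exact hE.trans e2 (hE.trans (hE.symm e1) hx)
    · intro hx; exact hE.trans e1 (hE.trans (hE.symm e2) hx)

lemma fwd_main {α : Type u} (E : α → α → Prop) (hE : Equivalence E) {S : Set α}
    (hS : IsExceptionalEq E S) :
    ∀ a b : α, (∀ z ∈ S, ¬ E z a) → (∀ z ∈ S, ¬ E z b) →
      Cardinal.mk ↥{x | E a x} = Cardinal.mk ↥{x | E b x} := by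
  classical
  obtain ⟨hSfin, hext⟩ := hS
  intro a b ha hb
  by_cases hab : E a b
  · have : {x | E a x} = {x | E b x} := by
      ext x; exact ⟨fun h => hE.trans (hE.symm hab) h, fun h => hE.trans hab h⟩
    rw [this]
  · have hau : a ∉ S := fun h => ha a h (hE.refl a)
    have hbu : b ∉ S := fun h => hb b h (hE.refl b)
    set s : Set α := insert a S with hsdef
    set t : Set α := insert b S with htdef
    have hmem_s : ∀ x : α, x ∈ s → x ∉ S → x = a := by
      intro x hx hxS
      rcases Set.mem_insert_iff.mp hx with h | h
      exacts [h, absurd h hxS]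
    have hmem_t : ∀ x : α, x ∈ t → x ∉ S → x = b := by
      intro x hx hxS
      rcases Set.mem_insert_iff.mp hx with h | h
      exacts [h, absurd h hxS]
    let φ : ↥s ≃ ↥t :=
      { toFun := fun x => if h : (x : α) ∈ S then ⟨x, Set.mem_insert_of_mem b h⟩
          else ⟨b, Set.mem_insert b S⟩
        invFun := fun y => if h : (y : α) ∈ S then ⟨y, Set.mem_insert_of_mem a h⟩
          else ⟨a, Set.mem_insert a S⟩
        left_inv := by
          rintro ⟨x, hx⟩
          by_cases h : x ∈ S
          · simp [h]
          · simp only [dif_neg h, dif_neg hbu]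
            exact Subtype.ext (hmem_s x hx h).symm
        right_inv := by
          rintro ⟨y, hy⟩
          by_cases h : y ∈ S
          · simp [h]
          · simp only [dif_neg h, dif_neg hau]
            exact Subtype.ext (hmem_t y hy h).symm }
    have hφ_val : ∀ x : ↥s, ((φ x : ↥t) : α) = if (x : α) ∈ S then (x : α) else b := by
      rintro ⟨x, hx⟩
      by_cases h : x ∈ S <;> simp [φ, h]
    have hφE : ∀ x y : ↥s, E x y ↔ E (φ x) (φ y) := by
      rintro ⟨x, hx⟩ ⟨y, hy⟩
      rw [show (((φ ⟨x, hx⟩ : ↥t)) : α) = _ from hφ_val ⟨x, hx⟩,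
          show (((φ ⟨y, hy⟩ : ↥t)) : α) = _ from hφ_val ⟨y, hy⟩]
      by_cases h1 : x ∈ S <;> by_cases h2 : y ∈ S
      · simp [h1, h2]
      · have hy' := hmem_s y hy h2
        subst hy'
        simp only [if_pos h1, if_neg h2]
        exact iff_of_false (fun h => ha x h1 h) (fun h => hb x h1 h)
      · have hx' := hmem_s x hx h1
        subst hx'
        simp only [if_neg h1, if_pos h2]
        exact iff_of_false (fun h => ha y h2 (hE.symm h)) (fun h => hb y h2 (hE.symm h))
      · have hx' := hmem_s x hx h1
        have hy' := hmem_s y hy h2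
        subst hx'; subst hy'
        simp only [if_neg h1]
        exact iff_of_true (hE.refl _) (hE.refl _)
    have hφS : ∀ x : ↥s, (x : α) ∈ S → ((φ x : ↥t) : α) = x := by
      intro x hx; rw [hφ_val x, if_pos hx]
    obtain ⟨ψ, hψE, hψext⟩ := hext s t (hSfin.insert a) (hSfin.insert b)
      (Set.subset_insert a S) (Set.subset_insert b S) φ hφE hφS
    have hψa : ψ a = b := by
      have := hψext ⟨a, Set.mem_insert a S⟩
      rwa [hφ_val ⟨a, Set.mem_insert a S⟩, if_neg hau] at this
    exact Cardinal.mk_congr (Equiv.subtypeEquiv ψ (fun x => by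
      have := hψE a x
      rwa [hψa] at this))

section Bwd
variable {α : Type u}

lemma bwd_main (E : α → α → Prop) (hE : Equivalence E) (κ : Cardinal.{u})
    (hκ : {C : Set α | (∃ a : α, C = {x | E a x}) ∧ Cardinal.mk ↥C ≠ κ}.Finite) :
    ∃ S : Set α, S.Finite ∧
    ∀ (s t : Set α), s.Finite → t.Finite → S ⊆ s → S ⊆ t →
      ∀ φ : ↥s ≃ ↥t,
        (∀ x y : ↥s, E x y ↔ E (φ x) (φ y)) →
        (∀ x : ↥s, (x : α) ∈ S → ((φ x : ↥t) : α) = x) →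
        ∃ ψ : α ≃ α, (∀ x y : α, E x y ↔ E (ψ x) (ψ y)) ∧
          ∀ x : ↥s, ψ (x : α) = ((φ x : ↥t) : α) := by
  classical
  haveI : Finite ↥{C : Set α | (∃ a : α, C = {x | E a x}) ∧ Cardinal.mk ↥C ≠ κ} :=
    hκ.to_subtype
  set Fset := {C : Set α | (∃ a : α, C = {x | E a x}) ∧ Cardinal.mk ↥C ≠ κ} with hFdef
  let rep : ↥Fset → α := fun C => C.2.1.choose
  have hrep_spec : ∀ C : ↥Fset, (C : Set α) = {x | E (rep C) x} := fun C => C.2.1.choose_spec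
  refine ⟨Set.range rep, Set.finite_range rep, ?_⟩
  set S := Set.range rep with hSdef
  have hS_exc : ∀ z ∈ S, Cardinal.mk ↥{x | E z x} ≠ κ := by
    rintro z ⟨C, rfl⟩
    have h1 := hrep_spec C
    have h2 := C.2.2
    rwa [h1] at h2
  have hmeet : ∀ a : α, Cardinal.mk ↥{x | E a x} ≠ κ → ∃ z ∈ S, E z a := by
    intro a ha
    have hC : {x | E a x} ∈ Fset := ⟨⟨a, rfl⟩, ha⟩
    refine ⟨rep ⟨_, hC⟩, ⟨⟨_, hC⟩, rfl⟩, ?_⟩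
    have h1 := hrep_spec ⟨_, hC⟩
    have h2 : a ∈ ((⟨{x | E a x}, hC⟩ : ↥Fset) : Set α) := hE.refl a
    rw [h1] at h2
    exact h2
  intro s t hsfin htfin hSs hSt φ hφE hφS
  -- the quotient
  let st : Setoid α := ⟨E, hE⟩
  let qm : α → Quotient st := fun a => Quotient.mk st a
  have hq_iff : ∀ x y : α, qm x = qm y ↔ E x y := fun x y =>
    ⟨fun h => Quotient.exact h, fun h => Quotient.sound h⟩
  let fib : Quotient st → Type u := fun C => {x : α // qm x = C}
  have hfib_mk : ∀ a : α, Cardinal.mk (fib (qm a)) = Cardinal.mk ↥{x | E a x} :=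
    fun a => Cardinal.mk_congr (Equiv.subtypeEquivRight (fun x =>
      (hq_iff x a).trans ⟨hE.symm, hE.symm⟩))
  -- φ.symm fixes S
  have hφS' : ∀ z : α, z ∈ S → ∀ (hz : z ∈ s), ((φ ⟨z, hz⟩ : ↥t) : α) = z :=
    fun z hzS hz => hφS ⟨z, hz⟩ hzS
  -- the induced partial class map
  have hmapwd : ∀ (x y : ↥s), qm (x : α) = qm (y : α) → qm ((φ x : ↥t) : α) = qm ((φ y : ↥t) : α) :=
    fun x y h => (hq_iff _ _).mpr ((hφE x y).mp ((hq_iff _ _).mp h))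
  set Qs : Set (Quotient st) := qm '' s with hQs
  set Qt : Set (Quotient st) := qm '' t with hQt
  let F : ↥Qs → ↥Qt := fun C =>
    ⟨qm ((φ ⟨C.2.choose, C.2.choose_spec.1⟩ : ↥t) : α),
      ⟨_, (φ ⟨C.2.choose, C.2.choose_spec.1⟩).2, rfl⟩⟩
  have hF_spec : ∀ (x : ↥s) (h : qm (x : α) ∈ Qs),
      ((F ⟨qm (x : α), h⟩ : Quotient st)) = qm ((φ x : ↥t) : α) := by
    intro x h
    exact hmapwd ⟨h.choose, h.choose_spec.1⟩ x h.choose_spec.2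
  have hmapwd' : ∀ (x y : ↥t), qm (x : α) = qm (y : α) →
      qm ((φ.symm x : ↥s) : α) = qm ((φ.symm y : ↥s) : α) := by
    intro x y h
    apply (hq_iff _ _).mpr
    have := (hφE (φ.symm x) (φ.symm y)).mpr
    simp only [Equiv.apply_symm_apply] at this
    exact this ((hq_iff _ _).mp h)
  let G : ↥Qt → ↥Qs := fun C =>
    ⟨qm ((φ.symm ⟨C.2.choose, C.2.choose_spec.1⟩ : ↥s) : α),
      ⟨_, (φ.symm ⟨C.2.choose, C.2.choose_spec.1⟩).2, rfl⟩⟩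
  have hG_spec : ∀ (y : ↥t) (h : qm (y : α) ∈ Qt),
      ((G ⟨qm (y : α), h⟩ : Quotient st)) = qm ((φ.symm y : ↥s) : α) := by
    intro y h
    exact hmapwd' ⟨h.choose, h.choose_spec.1⟩ y h.choose_spec.2
  let f : ↥Qs ≃ ↥Qt :=
    { toFun := F
      invFun := G
      left_inv := by
        rintro ⟨C, hC⟩
        obtain ⟨x, hxs, rfl⟩ := hC
        have h1 : F ⟨qm x, ⟨x, hxs, rfl⟩⟩ =
            ⟨qm ((φ ⟨x, hxs⟩ : ↥t) : α), ⟨_, (φ ⟨x, hxs⟩).2, rfl⟩⟩ :=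
          Subtype.ext (hF_spec ⟨x, hxs⟩ _)
        rw [h1]
        apply Subtype.ext
        have h2 := hG_spec (φ ⟨x, hxs⟩) ⟨_, (φ ⟨x, hxs⟩).2, rfl⟩
        simpa using h2
      right_inv := by
        rintro ⟨C, hC⟩
        obtain ⟨y, hyt, rfl⟩ := hC
        have h1 : G ⟨qm y, ⟨y, hyt, rfl⟩⟩ =
            ⟨qm ((φ.symm ⟨y, hyt⟩ : ↥s) : α), ⟨_, (φ.symm ⟨y, hyt⟩).2, rfl⟩⟩ :=
          Subtype.ext (hG_spec ⟨y, hyt⟩ _)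
        rw [h1]
        apply Subtype.ext
        have h2 := hF_spec (φ.symm ⟨y, hyt⟩) ⟨_, (φ.symm ⟨y, hyt⟩).2, rfl⟩
        simpa using h2 }
  obtain ⟨g, hg1, hg2⟩ := extend_equiv_aux (rfl : Cardinal.mk (Quotient st) = _)
    Qs Qt (hsfin.image qm) f
  have hg_s : ∀ x : ↥s, g (qm (x : α)) = qm ((φ x : ↥t) : α) := by
    intro x
    have h1 := hg1 ⟨qm (x : α), ⟨(x : α), x.2, rfl⟩⟩
    rw [h1]
    exact hF_spec x _
  -- cardinality preservation
  have hcard : ∀ C : Quotient st, Cardinal.mk (fib C) = Cardinal.mk (fib (g C)) := by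
    intro C
    by_cases hC : C ∈ Qs
    · obtain ⟨x, hxs, rfl⟩ := hC
      rw [hg_s ⟨x, hxs⟩, hfib_mk, hfib_mk]
      by_cases hexc : Cardinal.mk ↥{x' | E x x'} = κ
      · rw [hexc]
        symm
        by_contra hexc2
        obtain ⟨z, hzS, hz2⟩ := hmeet _ hexc2
        have hz1 := hφS' z hzS (hSs hzS)
        have h3 : E z (x : α) := by
          have := (hφE ⟨z, hSs hzS⟩ ⟨x, hxs⟩).mpr (by rw [hz1]; exact hz2)
          exact this
        apply hS_exc z hzS
        have heq : {x' | E z x'} = {x' | E x x'} := by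
          ext w
          exact ⟨fun hw => hE.trans (hE.symm h3) hw, fun hw => hE.trans h3 hw⟩
        rw [heq]
        exact hexc
      · obtain ⟨z, hzS, hzx⟩ := hmeet x hexc
        have hz1 := hφS' z hzS (hSs hzS)
        have h2 : E z ((φ ⟨x, hxs⟩ : ↥t) : α) := by
          have := (hφE ⟨z, hSs hzS⟩ ⟨x, hxs⟩).mp hzx
          rwa [hz1] at this
        have heq : {x' | E x x'} = {x' | E ((φ ⟨x, hxs⟩ : ↥t) : α) x'} := by
          ext w
          constructor
          · intro hw; exact hE.trans (hE.symm h2) (hE.trans hzx hw)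
          · intro hw; exact hE.trans (hE.symm hzx) (hE.trans h2 hw)
        rw [heq]
    · have h1 : g C ∉ Qt := hg2 C hC
      have e1 : Cardinal.mk (fib C) = κ := by
        obtain ⟨x, hx⟩ := Quotient.exists_rep C
        have hx' : qm x = C := hx
        subst hx'
        rw [hfib_mk]
        by_contra hexc
        obtain ⟨z, hzS, hzx⟩ := hmeet x hexc
        exact hC ⟨z, hSs hzS, (hq_iff z x).mpr hzx⟩
      have e2 : Cardinal.mk (fib (g C)) = κ := by
        obtain ⟨y, hy⟩ := Quotient.exists_rep (g C)
        have hy' : qm y = g C := hy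
        rw [← hy', hfib_mk]
        by_contra hexc
        obtain ⟨z, hzS, hzy⟩ := hmeet y hexc
        exact h1 ⟨z, hSt hzS, hy' ▸ (hq_iff z y).mpr hzy⟩
      rw [e1, e2]
  -- per-class bijections
  have hexists : ∀ C : Quotient st, ∃ h : fib C ≃ fib (g C),
      ∀ (x : α) (hx : qm x = C) (hxs : x ∈ s),
        ((h ⟨x, hx⟩ : fib (g C)) : α) = ((φ ⟨x, hxs⟩ : ↥t) : α) := by
    intro C
    set A : Set (fib C) := {x : fib C | (x : α) ∈ s} with hA
    set B : Set (fib (g C)) := {y : fib (g C) | (y : α) ∈ t} with hB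
    have hAfin : A.Finite := by
      haveI := hsfin.to_subtype
      haveI : Finite ↥A := Finite.of_injective
        (fun a => (⟨(a : fib C), a.2⟩ : ↥s))
        (by rintro ⟨⟨x, hx⟩, hxs⟩ ⟨⟨y, hy⟩, hys⟩ h
            simp only [Subtype.mk.injEq] at h
            exact Subtype.ext (Subtype.ext h))
      exact A.toFinite
    let fA : ↥A ≃ ↥B :=
      { toFun := fun a =>
          ⟨⟨((φ ⟨(a : fib C), a.2⟩ : ↥t) : α),
            (hg_s ⟨((a : fib C) : α), a.2⟩).symm.trans
              (congrArg g (a : fib C).2)⟩, (φ ⟨(a : fib C), a.2⟩).2⟩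
        invFun := fun b =>
          ⟨⟨((φ.symm ⟨(b : fib (g C)), b.2⟩ : ↥s) : α), by
            apply g.injective
            rw [hg_s (φ.symm ⟨(b : fib (g C)), b.2⟩)]
            simp only [Equiv.apply_symm_apply]
            exact (b : fib (g C)).2⟩, (φ.symm ⟨(b : fib (g C)), b.2⟩).2⟩
        left_inv := by
          rintro ⟨⟨x, hx⟩, hxs⟩
          apply Subtype.ext
          apply Subtype.ext
          simp
        right_inv := by
          rintro ⟨⟨y, hy⟩, hyt⟩
          apply Subtype.ext
          apply Subtype.ext
          simp }
    obtain ⟨h, hh1, _⟩ := extend_equiv_aux (hcard C) A B hAfin fA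
    refine ⟨h, ?_⟩
    intro x hx hxs
    have h1 := hh1 ⟨⟨x, hx⟩, hxs⟩
    rw [h1]
    rfl
  choose H hH using hexists
  let ψ : α ≃ α :=
    ((Equiv.sigmaFiberEquiv qm).symm.trans (Equiv.sigmaCongr g H)).trans
      (Equiv.sigmaFiberEquiv qm)
  have hψ_val : ∀ x : α, ψ x = ((H (qm x) ⟨x, rfl⟩ : fib (g (qm x))) : α) := fun x => rfl
  have hψ_class : ∀ x : α, qm (ψ x) = g (qm x) := by
    intro x
    rw [hψ_val]
    exact (H (qm x) ⟨x, rfl⟩).2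
  refine ⟨ψ, ?_, ?_⟩
  · intro x y
    rw [← hq_iff, ← hq_iff, hψ_class, hψ_class]
    exact ⟨fun h => congrArg g h, fun h => g.injective h⟩
  · intro x
    rw [hψ_val]
    have h1 := hH (qm (x : α)) (x : α) rfl x.2
    rw [h1]

end Bwd

/-- A countable equivalence structure is weakly ultrahomogeneous if and only if all but finitely
many of its equivalence classes have the same cardinality. -/
theorem weaklyUltrahomogeneousEq_iff
    {α : Type u} [Countable α] (E : α → α → Prop) (hE : Equivalence E) :
    WeaklyUltrahomogeneousEq E ↔
      ∃ κ : Cardinal.{u},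
        {C : Set α | (∃ a : α, C = {x | E a x}) ∧ Cardinal.mk ↥C ≠ κ}.Finite := by
  constructor
  · rintro ⟨S, hS⟩
    obtain ⟨hSfin, -⟩ := id hS
    by_cases hex : ∃ a : α, ∀ z ∈ S, ¬ E z a
    · obtain ⟨a0, ha0⟩ := hex
      refine ⟨Cardinal.mk ↥{x | E a0 x}, ?_⟩
      apply finite_classes_meeting E hE hSfin
      rintro C ⟨⟨a, rfl⟩, hne⟩
      refine ⟨⟨a, rfl⟩, ?_⟩
      by_contra hempty
      rw [Set.not_nonempty_iff_eq_empty] at hempty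
      have ha : ∀ z ∈ S, ¬ E z a := by
        intro z hz hza
        have hmem : z ∈ {x | E a x} ∩ S := ⟨hE.symm hza, hz⟩
        rw [hempty] at hmem
        exact hmem
      exact hne (fwd_main E hE hS a a0 ha ha0)
    · push_neg at hex
      refine ⟨0, ?_⟩
      apply finite_classes_meeting E hE hSfin
      rintro C ⟨⟨a, rfl⟩, hne⟩
      obtain ⟨z, hz, hza⟩ := hex a
      exact ⟨⟨a, rfl⟩, ⟨z, ⟨hE.symm hza, hz⟩⟩⟩
  · rintro ⟨κ, hκ⟩
    obtain ⟨S, hSfin, hext⟩ := bwd_main E hE κ hκ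
    exact ⟨S, hSfin, hext⟩
end

section
/- Let (α, E) be a countable equivalence structure and let κ be a cardinal such that the set of E-classes whose cardinality is not κ is finite. Then any set S ⊆ α containing exactly one element from each E-class of cardinality different from κ is an exceptional set for (α, E), witnessing that (α, E) is weakly ultrahomogeneous. -/
universe u

lemma extend_finite_equiv {β γ : Type u} {A : Set β} {B : Set γ}
    (hA : A.Finite) (uu : ↥A ≃ ↥B)
    (hc : Cardinal.mk β = Cardinal.mk γ) :
    ∃ g : β ≃ γ, ∀ a : ↥A, g a = (uu a : γ) := by
  classical
  have hAB : Cardinal.mk ↥A = Cardinal.mk ↥B := Cardinal.mk_congr uu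
  have hAfin : Cardinal.mk ↥A < Cardinal.aleph0 := by
    have := hA.to_subtype; exact Cardinal.lt_aleph0_of_finite _
  have hcompl : Cardinal.mk ↥(Aᶜ) = Cardinal.mk ↥(Bᶜ) := by
    have h1 := Cardinal.mk_sum_compl A
    have h2 := Cardinal.mk_sum_compl B
    have h3 : Cardinal.mk ↥(Aᶜ) + Cardinal.mk ↥A = Cardinal.mk ↥(Bᶜ) + Cardinal.mk ↥B := by
      rw [add_comm, add_comm (Cardinal.mk ↥(Bᶜ)), h1, h2, hc]
    rw [hAB] at h3
    exact (Cardinal.add_right_inj_of_lt_aleph0 (hAB ▸ hAfin)).mp h3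
  obtain ⟨v⟩ := Cardinal.eq.mp hcompl
  refine ⟨(Equiv.Set.sumCompl A).symm.trans ((uu.sumCongr v).trans (Equiv.Set.sumCompl B)), ?_⟩
  intro a
  have h1 : (Equiv.Set.sumCompl A).symm (a : β) = Sum.inl a := by
    rw [Equiv.Set.sumCompl_symm_apply_of_mem a.2]
  simp [h1]


/-- Let `(α, E)` be a countable equivalence structure such that only finitely many `E`-classes
have cardinality different from `κ`.  Then any set `S` consisting of exactly one element from
each `E`-class of cardinality different from `κ` is an exceptional set for `(α, E)`. -/
theorem isExceptionalEq_of_one_from_each_exceptional_class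
    {α : Type u} [Countable α] (E : α → α → Prop) (hE : Equivalence E)
    (κ : Cardinal.{u})
    (hκ : {C : Set α | (∃ a : α, C = {x | E a x}) ∧ Cardinal.mk ↥C ≠ κ}.Finite)
    (S : Set α)
    (hone : ∀ C : Set α, (∃ a : α, C = {x | E a x}) → Cardinal.mk ↥C ≠ κ →
      ∃! x : α, x ∈ S ∩ C)
    (honly : ∀ x ∈ S, Cardinal.mk ↥{y | E x y} ≠ κ) :
    IsExceptionalEq E S := by
  classical
  -- S is finite
  have hSfin : S.Finite := by
    have hinj : Set.InjOn (fun x => {y | E x y}) S := by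
      intro x hx x' hx' hxx'
      have hxx'' : {y | E x y} = {y | E x' y} := hxx'
      have hx'mem : x' ∈ {y | E x y} := by
        rw [hxx'']; exact hE.refl x'
      obtain ⟨z, -, hz⟩ := hone {y | E x y} ⟨x, rfl⟩ (honly x hx)
      have e1 : z = x := (hz x ⟨hx, hE.refl x⟩).symm
      have e2 : z = x' := (hz x' ⟨hx', hx'mem⟩).symm
      rw [← e1, e2]
    have himg : (fun x => {y | E x y}) '' S ⊆
        {C : Set α | (∃ a : α, C = {x | E a x}) ∧ Cardinal.mk ↥C ≠ κ} := by
      rintro C ⟨x, hx, rfl⟩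
      exact ⟨⟨x, rfl⟩, honly x hx⟩
    exact Set.Finite.of_finite_image (hκ.subset himg) hinj
  refine ⟨hSfin, ?_⟩
  intro s t hs ht hSs hSt φ hφE hφS
  -- the quotient by E
  set st : Setoid α := ⟨E, hE⟩ with hst
  set q : α → Quotient st := Quotient.mk st with hqdef
  have hq : ∀ x y : α, q x = q y ↔ E x y :=
    fun x y => ⟨fun h => Quotient.exact h, fun h => Quotient.sound h⟩
  -- well-definedness of induced map on classes
  have hwd : ∀ (x y : ↥s), q x = q y → q (φ x) = q (φ y) := by
    intro x y h
    exact (hq _ _).mpr ((hφE x y).mp ((hq _ _).mp h))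
  -- the induced bijection on classes meeting s / t
  have hmemA : ∀ x : ↥s, q x ∈ q '' s := fun x => ⟨x, x.2, rfl⟩
  have hmemB : ∀ y : ↥t, q y ∈ q '' t := fun y => ⟨y, y.2, rfl⟩
  set uf : ↥(q '' s) → ↥(q '' t) :=
    fun c => ⟨q (φ ⟨c.2.choose, c.2.choose_spec.1⟩), hmemB _⟩ with hufdef
  have hufkey : ∀ x : ↥s, (uf ⟨q x, hmemA x⟩ : Quotient st) = q (φ x) := by
    intro x
    apply hwd
    exact (hmemA x).choose_spec.2
  have hufbij : Function.Bijective uf := by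
    constructor
    · intro c c' h
      have h2 : q (φ ⟨c.2.choose, c.2.choose_spec.1⟩) = q (φ ⟨c'.2.choose, c'.2.choose_spec.1⟩) :=
        congrArg Subtype.val h
      have h3 : E (φ ⟨c.2.choose, c.2.choose_spec.1⟩) (φ ⟨c'.2.choose, c'.2.choose_spec.1⟩) :=
        (hq _ _).mp h2
      have h4 : q c.2.choose = q c'.2.choose := (hq _ _).mpr ((hφE _ _).mpr h3)
      apply Subtype.ext
      rw [← c.2.choose_spec.2, ← c'.2.choose_spec.2]
      exact h4
    · intro d
      set y : ↥t := ⟨d.2.choose, d.2.choose_spec.1⟩ with hy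
      set x : ↥s := φ.symm y with hx
      refine ⟨⟨q x, hmemA x⟩, ?_⟩
      apply Subtype.ext
      have := hufkey x
      rw [this, hx, Equiv.apply_symm_apply]
      exact d.2.choose_spec.2
  set u : ↥(q '' s) ≃ ↥(q '' t) := Equiv.ofBijective uf hufbij with hu
  -- extend u to a permutation g of all classes
  obtain ⟨g, hg⟩ := extend_finite_equiv (hs.image q) u rfl
  have hgkey : ∀ x : ↥s, g (q x) = q (φ x) := by
    intro x
    have := hg ⟨q x, hmemA x⟩
    rw [this]
    exact hufkey x
  -- exceptional classes are fixed by g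
  have hfix : ∀ c : Quotient st, Cardinal.mk {x : α // q x = c} ≠ κ → g c = c := by
    intro c hc
    obtain ⟨a, rfl⟩ := Quotient.exists_rep c
    have hset : {x : α | q x = Quotient.mk st a} = {x : α | E a x} := by
      ext x
      simp only [Set.mem_setOf_eq]
      rw [hq x a]
      exact ⟨hE.symm, hE.symm⟩
    have hc' : Cardinal.mk ↥{x : α | E a x} ≠ κ := by
      rw [← hset]; exact hc
    obtain ⟨x₀, ⟨hx₀S, hx₀C⟩, -⟩ := hone {x : α | E a x} ⟨a, rfl⟩ hc'
    have hqx₀ : q x₀ = Quotient.mk st a := by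
      rw [hq]; exact hE.symm hx₀C
    have hx₀s : x₀ ∈ s := hSs hx₀S
    have := hgkey ⟨x₀, hx₀s⟩
    rw [hφS ⟨x₀, hx₀s⟩ hx₀S] at this
    rw [← hqx₀, this, hqx₀]
  -- g preserves fiber cardinalities
  have hcardfib : ∀ c : Quotient st,
      Cardinal.mk {x : α // q x = g c} = Cardinal.mk {x : α // q x = c} := by
    intro c
    by_cases h : Cardinal.mk {x : α // q x = c} = κ
    · by_cases h2 : Cardinal.mk {x : α // q x = g c} = κ
      · rw [h, h2]
      · have := hfix (g c) h2
        have hgc : g c = c := g.injective this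
        rw [hgc] at h2
        exact absurd h h2
    · rw [hfix c h]
  -- build the fiber bijections
  have hfib : ∀ c : Quotient st, ∃ e : {x : α // q x = c} ≃ {x : α // q x = g c},
      ∀ (x : α) (hx : q x = c) (hxs : x ∈ s),
        ((e ⟨x, hx⟩ : {x : α // q x = g c}) : α) = φ ⟨x, hxs⟩ := by
    intro c
    set Ac : Set {x : α // q x = c} := {x | (x : α) ∈ s} with hAc
    set Bc : Set {x : α // q x = g c} := {y | (y : α) ∈ t} with hBc
    have hAcfin : Ac.Finite := by
      have : Ac = Subtype.val ⁻¹' s := rfl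
      rw [this]
      exact hs.preimage (Subtype.val_injective.injOn)
    -- the bijection on the finite parts induced by φ
    have hmap : ∀ x : ↥Ac, q (φ ⟨(x : {x : α // q x = c}), x.2⟩ : α) = g c := by
      intro x
      rw [← hgkey ⟨(x : {x : α // q x = c}), x.2⟩]
      exact congrArg g (x : {x : α // q x = c}).2
    set vf : ↥Ac → ↥Bc :=
      fun x => ⟨⟨φ ⟨(x : {x : α // q x = c}), x.2⟩, hmap x⟩, (φ _).2⟩ with hvf
    have hvfbij : Function.Bijective vf := by
      constructor
      · intro x y h
        have h2 : ((vf x : {x : α // q x = g c}) : α) = ((vf y : {x : α // q x = g c}) : α) := by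
          rw [h]
        have h3 : φ ⟨(x : {x : α // q x = c}), x.2⟩ = φ ⟨(y : {x : α // q x = c}), y.2⟩ :=
          Subtype.ext h2
        have h3b := φ.injective h3
        have h4 : ((x : {x : α // q x = c}) : α) = ((y : {x : α // q x = c}) : α) :=
          congrArg (fun z : ↥s => (z : α)) h3b
        exact Subtype.ext (Subtype.ext h4)
      · intro y
        have hyt : ((y : {x : α // q x = g c}) : α) ∈ t := y.2
        set x0 : ↥s := φ.symm ⟨_, hyt⟩ with hx0
        have hqx0 : q x0 = c := by
          apply g.injective
          rw [hgkey x0, hx0, Equiv.apply_symm_apply]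
          exact (y : {x : α // q x = g c}).2
        refine ⟨⟨⟨(x0 : α), hqx0⟩, x0.2⟩, ?_⟩
        apply Subtype.ext
        apply Subtype.ext
        show (φ ⟨(x0 : α), _⟩ : α) = _
        have : (⟨(x0 : α), x0.2⟩ : ↥s) = x0 := rfl
        rw [this, hx0, Equiv.apply_symm_apply]
    obtain ⟨e, he⟩ := extend_finite_equiv hAcfin (Equiv.ofBijective vf hvfbij) (hcardfib c).symm
    refine ⟨e, ?_⟩
    intro x hx hxs
    have := he ⟨⟨x, hx⟩, hxs⟩
    rw [this]
    rfl
  choose e he using hfib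
  -- assemble the automorphism
  set ψ : α ≃ α :=
    (Equiv.sigmaFiberEquiv q).symm.trans ((Equiv.sigmaCongr g e).trans (Equiv.sigmaFiberEquiv q))
    with hψdef
  have hψ : ∀ x : α, ψ x = ((e (q x) ⟨x, rfl⟩ : {y : α // q y = g (q x)}) : α) := fun x => rfl
  have hψq : ∀ x : α, q (ψ x) = g (q x) := by
    intro x
    rw [hψ x]
    exact (e (q x) ⟨x, rfl⟩).2
  refine ⟨ψ, ?_, ?_⟩
  · intro x y
    rw [← hq, ← hq, hψq, hψq]
    exact ⟨fun h => congrArg g h, fun h => g.injective h⟩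
  · intro x
    rw [hψ x]
    exact he (q x) x rfl x.2
end

section
/- A countable injection structure (α, f) is ultrahomogeneous if and only if it has no ω-orbits, i.e., no orbit contains an element outside the range of f. -/
/-- The closure of a set `s` under the function `f`: all iterated images of elements of `s`. -/
def clInj {α : Type*} (f : α → α) (s : Set α) : Set α :=
  {y | ∃ x ∈ s, ∃ n : ℕ, f^[n] x = y}

/-- The orbit of `a` under `f`. -/
def orbitInj {α : Type*} (f : α → α) (a : α) : Set α :=
  {x | ∃ m n : ℕ, f^[m] x = f^[n] a}

/-- The injection structure `(α, f)` is ultrahomogeneous: for all finite sets `s, t ⊆ α`, every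
bijection `φ : cl(s) → cl(t)` commuting with `f` extends to an automorphism of `(α, f)`. -/
def UltrahomogeneousInj {α : Type*} (f : α → α) : Prop :=
  ∀ s t : Set α, s.Finite → t.Finite →
    ∀ φ : ↥(clInj f s) ≃ ↥(clInj f t),
      (∀ x y : ↥(clInj f s), (y : α) = f x → ((φ y : ↥(clInj f t)) : α) = f (φ x)) →
      ∃ g : α ≃ α, (∀ a : α, g (f a) = f (g a)) ∧
        ∀ x : ↥(clInj f s), g (x : α) = ((φ x : ↥(clInj f t)) : α)


namespace InjP

variable {α : Type*} (e : Equiv.Perm α)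

def Zorb (u : α) : Set α := {x | ∃ k : ℤ, (e ^ k) u = x}

lemma mem_zorb_self (u : α) : u ∈ Zorb e u := ⟨0, rfl⟩

lemma zpow_apply_mem {u x : α} (h : x ∈ Zorb e u) (k : ℤ) : (e ^ k) x ∈ Zorb e u := by
  obtain ⟨j, rfl⟩ := h
  exact ⟨k + j, by rw [zpow_add, Equiv.Perm.mul_apply]⟩

lemma apply_mem_zorb {u x : α} (h : x ∈ Zorb e u) : e x ∈ Zorb e u := by
  simpa using zpow_apply_mem e h 1

lemma symm_apply_mem_zorb {u x : α} (h : x ∈ Zorb e u) : e.symm x ∈ Zorb e u := by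
  have := zpow_apply_mem e h (-1)
  simpa [zpow_neg, Equiv.Perm.inv_def] using this

lemma zorb_eq_of_mem {u x : α} (h : x ∈ Zorb e u) : Zorb e u = Zorb e x := by
  obtain ⟨k, rfl⟩ := h
  ext y
  constructor
  · rintro ⟨j, rfl⟩
    exact ⟨j - k, by rw [← Equiv.Perm.mul_apply, ← zpow_add, sub_add_cancel]⟩
  · rintro ⟨j, rfl⟩
    exact ⟨j + k, by rw [zpow_add, Equiv.Perm.mul_apply]⟩

lemma mem_zorb_symm {u x : α} (h : x ∈ Zorb e u) : u ∈ Zorb e x := by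
  rw [← zorb_eq_of_mem e h]; exact mem_zorb_self e u

/-- A set invariant under `e` (in the strong, iff form). -/
def Inv (A : Set α) : Prop := ∀ x, x ∈ A ↔ e x ∈ A

lemma Inv.compl {A : Set α} (h : Inv e A) : Inv e Aᶜ := fun x => by
  simp [Set.mem_compl_iff, h x]

lemma inv_zorb (u : α) : Inv e (Zorb e u) := by
  intro x
  constructor
  · exact apply_mem_zorb e
  · intro h
    have := symm_apply_mem_zorb e h
    simpa using this

lemma Inv.symm_mem {A : Set α} (h : Inv e A) {x : α} (hx : x ∈ A) : e.symm x ∈ A := by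
  rw [h (e.symm x)]; simpa using hx

lemma Inv.zpow_mem_iff {A : Set α} (h : Inv e A) (k : ℤ) {x : α} :
    (e ^ k) x ∈ A ↔ x ∈ A := by
  induction k using Int.induction_on with
  | zero => simp
  | succ n ih =>
    have : (e ^ ((n : ℤ) + 1)) x = e ((e ^ (n : ℤ)) x) := by
      rw [add_comm, zpow_add, zpow_one, Equiv.Perm.mul_apply]
    rw [this, ← h, ih]
  | pred n ih =>
    have : (e ^ (-(n : ℤ) - 1)) x = e.symm ((e ^ (-(n : ℤ))) x) := by
      rw [sub_eq_add_neg, add_comm, zpow_add, Equiv.Perm.mul_apply, zpow_neg,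
        zpow_one, Equiv.Perm.inv_def]
    rw [this]
    constructor
    · intro hm
      have := (h (e.symm ((e ^ (-(n:ℤ))) x))).mp hm
      simp only [Equiv.apply_symm_apply] at this
      exact ih.mp this
    · intro hm
      exact h.symm_mem e (ih.mpr hm)

lemma zpow_add_one_apply (k : ℤ) (x : α) : (e ^ (k + 1)) x = e ((e ^ k) x) := by
  rw [add_comm, zpow_add, zpow_one, Equiv.Perm.mul_apply]

lemma zpow_sub_one_apply (k : ℤ) (x : α) : (e ^ (k - 1)) x = e.symm ((e ^ k) x) := by
  rw [sub_eq_add_neg, add_comm, zpow_add, Equiv.Perm.mul_apply, zpow_neg, zpow_one,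
    Equiv.Perm.inv_def]

/-- Equivariance of `g` on the set `A`. -/
def EqvOn (g : α → α) (A : Set α) : Prop := ∀ x ∈ A, g (e x) = e (g x)

lemma EqvOn.mono {g : α → α} {A B : Set α} (h : EqvOn e g A) (hBA : B ⊆ A) :
    EqvOn e g B := fun x hx => h x (hBA hx)

lemma EqvOn.symm_apply {g : α → α} {A : Set α} (hA : Inv e A) (hg : EqvOn e g A)
    {x : α} (hx : x ∈ A) : g (e.symm x) = e.symm (g x) := by
  have hx' : e.symm x ∈ A := hA.symm_mem e hx
  have := hg _ hx'
  rw [Equiv.apply_symm_apply] at this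
  rw [this, Equiv.symm_apply_apply]

lemma EqvOn.zpow {g : α → α} {A : Set α} (hA : Inv e A) (hg : EqvOn e g A)
    {x : α} (hx : x ∈ A) (k : ℤ) : g ((e ^ k) x) = (e ^ k) (g x) := by
  induction k using Int.induction_on with
  | zero => simp
  | succ n ih =>
    rw [zpow_add_one_apply, zpow_add_one_apply,
      hg _ ((hA.zpow_mem_iff e (n : ℤ)).mpr hx), ih]
  | pred n ih =>
    rw [show -(n:ℤ) - 1 = -(n:ℤ) - 1 from rfl, zpow_sub_one_apply, zpow_sub_one_apply,
      hg.symm_apply e hA ((hA.zpow_mem_iff e (-(n:ℤ))).mpr hx), ih]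

lemma image_zorb {g : α → α} {A : Set α} (hA : Inv e A) (hg : EqvOn e g A)
    {u : α} (hu : u ∈ A) : g '' Zorb e u = Zorb e (g u) := by
  ext y
  constructor
  · rintro ⟨x, ⟨k, rfl⟩, rfl⟩
    exact ⟨k, (hg.zpow e hA hu k).symm⟩
  · rintro ⟨k, rfl⟩
    exact ⟨(e ^ k) u, ⟨k, rfl⟩, hg.zpow e hA hu k⟩

section Swap
variable {u v : α} (hper : ∀ k : ℤ, (e ^ k) u = u ↔ (e ^ k) v = v)
  (hdisj : v ∉ Zorb e u)

include hper in
lemma transport_eq {k j : ℤ} (h : (e ^ k) u = (e ^ j) u) : (e ^ k) v = (e ^ j) v := by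
  have h1 : (e ^ (-j + k)) u = u := by
    rw [zpow_add, Equiv.Perm.mul_apply, h, ← Equiv.Perm.mul_apply, ← zpow_add,
      neg_add_cancel, zpow_zero, Equiv.Perm.one_apply]
  have h2 : (e ^ (-j + k)) v = v := (hper _).mp h1
  calc (e ^ k) v = (e ^ (j + (-j + k))) v := by rw [add_neg_cancel_left]
    _ = (e ^ j) v := by rw [zpow_add, Equiv.Perm.mul_apply, h2]

include hper hdisj in
lemma swap_orbits :
    ∃ σ : α → α, (∀ x, σ (e x) = e (σ x)) ∧ Function.Involutive σ ∧
      σ '' Zorb e u = Zorb e v ∧ (∀ x, x ∉ Zorb e u → x ∉ Zorb e v → σ x = x) := by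
  classical
  have hdisj' : ∀ x, x ∈ Zorb e u → x ∉ Zorb e v := by
    intro x hxu hxv
    exact hdisj (by rw [zorb_eq_of_mem e hxu, ← zorb_eq_of_mem e hxv]; exact mem_zorb_self e v)
  set σ : α → α := fun x =>
    if hx : x ∈ Zorb e u then (e ^ (Classical.choose hx)) v
    else if hx' : x ∈ Zorb e v then (e ^ (Classical.choose hx')) u
    else x with hσ
  have spec_u : ∀ {x : α} (hx : x ∈ Zorb e u) (k : ℤ), (e ^ k) u = x → σ x = (e ^ k) v := by
    intro x hx k hk
    rw [hσ]; simp only [dif_pos hx]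
    exact transport_eq e hper ((Classical.choose_spec hx).trans hk.symm)
  have spec_v : ∀ {x : α} (hx : x ∈ Zorb e v) (k : ℤ), (e ^ k) v = x → σ x = (e ^ k) u := by
    intro x hx k hk
    have hxu : x ∉ Zorb e u := fun h => hdisj' x h hx
    rw [hσ]; simp only [dif_neg hxu, dif_pos hx]
    exact transport_eq e (fun k => (hper k).symm) ((Classical.choose_spec hx).trans hk.symm)
  have spec_n : ∀ {x : α}, x ∉ Zorb e u → x ∉ Zorb e v → σ x = x := by
    intro x h1 h2; rw [hσ]; simp only [dif_neg h1, dif_neg h2]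
  refine ⟨σ, ?_, ?_, ?_, fun x h1 h2 => spec_n h1 h2⟩
  · intro x
    by_cases hx : x ∈ Zorb e u
    · obtain ⟨k, rfl⟩ := hx
      rw [spec_u ⟨k, rfl⟩ k rfl,
        spec_u ⟨k + 1, zpow_add_one_apply e k u⟩ (k + 1) (zpow_add_one_apply e k u),
        zpow_add_one_apply]
    · by_cases hx' : x ∈ Zorb e v
      · obtain ⟨k, rfl⟩ := hx'
        rw [spec_v ⟨k, rfl⟩ k rfl,
          spec_v ⟨k + 1, zpow_add_one_apply e k v⟩ (k + 1) (zpow_add_one_apply e k v),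
          zpow_add_one_apply]
      · have h1 : e x ∉ Zorb e u := fun h => hx ((inv_zorb e u x).mpr h)
        have h2 : e x ∉ Zorb e v := fun h => hx' ((inv_zorb e v x).mpr h)
        rw [spec_n h1 h2, spec_n hx hx']
  · intro x
    by_cases hx : x ∈ Zorb e u
    · obtain ⟨k, rfl⟩ := hx
      rw [spec_u ⟨k, rfl⟩ k rfl, spec_v ⟨k, rfl⟩ k rfl]
    · by_cases hx' : x ∈ Zorb e v
      · obtain ⟨k, rfl⟩ := hx'
        rw [spec_v ⟨k, rfl⟩ k rfl, spec_u ⟨k, rfl⟩ k rfl]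
      · rw [spec_n hx hx', spec_n hx hx']
  · ext y
    constructor
    · rintro ⟨x, ⟨k, rfl⟩, rfl⟩
      rw [spec_u ⟨k, rfl⟩ k rfl]; exact ⟨k, rfl⟩
    · rintro ⟨k, rfl⟩
      exact ⟨(e ^ k) u, ⟨k, rfl⟩, spec_u ⟨k, rfl⟩ k rfl⟩

end Swap

def US (F : Finset α) : Set α := ⋃ x ∈ F, Zorb e x

lemma mem_US {F : Finset α} {x : α} : x ∈ US e F ↔ ∃ b ∈ F, x ∈ Zorb e b := by
  simp [US]

lemma inv_US (F : Finset α) : Inv e (US e F) := by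
  intro x
  simp only [US, Set.mem_iUnion, exists_prop]
  exact exists_congr fun b => and_congr_right fun _ => inv_zorb e b x

lemma Inv.union {A B : Set α} (hA : Inv e A) (hB : Inv e B) : Inv e (A ∪ B) := fun x => by
  simp [Set.mem_union, hA x, hB x]

lemma cancel (F : Finset α) :
    ∀ g : α → α, EqvOn e g (US e F) → Set.InjOn g (US e F) →
      ∃ h : α → α, Set.BijOn h (US e F)ᶜ (g '' US e F)ᶜ ∧ EqvOn e h (US e F)ᶜ := by
  classical
  induction F using Finset.induction_on with
  | empty =>
    intro g _ _
    refine ⟨id, ?_, ?_⟩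
    · simp only [US, Finset.notMem_empty, Set.iUnion_of_empty, Set.iUnion_empty,
        Set.image_empty, Set.compl_empty]
      exact Set.bijOn_id Set.univ
    · intro x _; rfl
  | @insert a F' haF IH =>
    intro g hg hgInj
    have hA : US e (insert a F') = Zorb e a ∪ US e F' := by
      simp [US, Finset.set_biUnion_insert]
    by_cases haU : a ∈ US e F'
    · -- the new orbit is already contained in the old union
      have hsub : Zorb e a ⊆ US e F' := by
        obtain ⟨b, hb, hab⟩ := (mem_US e).mp haU
        intro x hx
        have h1 : Zorb e b = Zorb e a := zorb_eq_of_mem e hab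
        exact (mem_US e).mpr ⟨b, hb, h1 ▸ hx⟩
      have hA' : US e (insert a F') = US e F' := by
        rw [hA, Set.union_eq_right.mpr hsub]
      rw [hA']
      rw [hA'] at hg hgInj
      exact IH g hg hgInj
    · -- genuinely new orbit
      set O := Zorb e a with hO
      set A' := US e F' with hA'
      have hd : ∀ x, x ∈ O → x ∉ A' := by
        intro x hx hx'
        obtain ⟨b, hb, hxb⟩ := (mem_US e).mp hx'
        apply haU
        have h1 : Zorb e a = Zorb e x := zorb_eq_of_mem e hx
        have h2 : Zorb e b = Zorb e x := zorb_eq_of_mem e hxb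
        have : a ∈ Zorb e b := by
          rw [h2, ← h1]; exact mem_zorb_self e a
        exact (mem_US e).mpr ⟨b, hb, this⟩
      rw [hA] at hg hgInj ⊢
      have hInvO : Inv e O := inv_zorb e a
      have hInvA' : Inv e A' := inv_US e F'
      have hInvU : Inv e (O ∪ A') := hInvO.union e hInvA'
      have haOA : a ∈ O ∪ A' := Or.inl (mem_zorb_self e a)
      have haC : a ∈ A'ᶜ := hd a (mem_zorb_self e a)
      obtain ⟨h₀, hb₀, he₀⟩ := IH g (hg.mono e Set.subset_union_right)
        (hgInj.mono Set.subset_union_right)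
      set P := Zorb e (g a) with hP
      set Q := Zorb e (h₀ a) with hQ
      have himgO_g : g '' O = P := image_zorb e hInvU hg haOA
      have himgO_h : h₀ '' O = Q := image_zorb e (hInvA'.compl e) he₀ haC
      have hOC : O ⊆ A'ᶜ := fun x hx => hd x hx
      have hPgA' : ∀ y, y ∈ P → y ∉ g '' A' := by
        rintro y hy ⟨x2, hx2, rfl⟩
        rw [← himgO_g] at hy
        obtain ⟨x1, hx1, heq⟩ := hy
        have : x1 = x2 := hgInj (Or.inl hx1) (Or.inr hx2) heq
        exact hd x2 (this ▸ hx1) hx2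
      have hQgA' : Q ⊆ (g '' A')ᶜ := by
        rw [← himgO_h]
        rintro y ⟨x, hx, rfl⟩
        exact hb₀.mapsTo (hOC hx)
      -- complement identities
      have hcD : (O ∪ A')ᶜ = A'ᶜ \ O := by
        rw [Set.compl_union, Set.diff_eq, Set.inter_comm]
      have hcR : (g '' (O ∪ A'))ᶜ = (g '' A')ᶜ \ P := by
        rw [Set.image_union, himgO_g, Set.compl_union, Set.diff_eq, Set.inter_comm]
      rw [hcD, hcR]
      -- membership in O detected through h₀
      have hmemQ : ∀ x ∈ A'ᶜ, (h₀ x ∈ Q ↔ x ∈ O) := by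
        intro x hx
        constructor
        · intro hq
          rw [← himgO_h] at hq
          obtain ⟨x', hx', heq⟩ := hq
          exact hb₀.injOn (hOC hx') hx heq ▸ hx'
        · intro hxO
          rw [← himgO_h]; exact ⟨x, hxO, rfl⟩
      by_cases hPQ : P = Q
      · refine ⟨h₀, ⟨?_, hb₀.injOn.mono Set.diff_subset, ?_⟩, he₀.mono e Set.diff_subset⟩
        · rintro x ⟨hx, hxO⟩
          refine ⟨hb₀.mapsTo hx, fun hp => hxO ?_⟩
          exact (hmemQ x hx).mp (hPQ ▸ hp)
        · rintro y ⟨hy, hyP⟩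
          obtain ⟨x, hx, rfl⟩ := hb₀.surjOn hy
          exact ⟨x, ⟨hx, fun hxO => hyP (hPQ ▸ (hmemQ x hx).mpr hxO)⟩, rfl⟩
      · -- swap the orbits P and Q
        have hper : ∀ k : ℤ, (e ^ k) (h₀ a) = h₀ a ↔ (e ^ k) (g a) = g a := by
          intro k
          have h1 : (e ^ k) (h₀ a) = h₀ ((e ^ k) a) :=
            (he₀.zpow e (hInvA'.compl e) haC k).symm
          have h2 : (e ^ k) (g a) = g ((e ^ k) a) :=
            (hg.zpow e hInvU haOA k).symm
          have hka : (e ^ k) a ∈ A'ᶜ := ((hInvA'.compl e).zpow_mem_iff e k).mpr haC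
          have hka' : (e ^ k) a ∈ O ∪ A' := (hInvU.zpow_mem_iff e k).mpr haOA
          rw [h1, h2]
          constructor
          · intro h; rw [hb₀.injOn hka haC h]
          · intro h; rw [hgInj hka' haOA h]
        have hgaQ : g a ∉ Q := by
          intro hmem
          exact hPQ (zorb_eq_of_mem e hmem).symm
        obtain ⟨σ, hσe, hσinv, hσQ, hσfix⟩ := swap_orbits e hper hgaQ
        have hσQ' : σ '' Q = P := hσQ
        have hσfix' : ∀ x, x ∉ Q → x ∉ P → σ x = x := hσfix
        have hPQd : ∀ y, y ∈ P → y ∉ Q := by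
          intro y hyP hyQ
          exact hPQ (((zorb_eq_of_mem e hyP).trans (zorb_eq_of_mem e hyQ).symm))
        have hσQP : ∀ y ∈ Q, σ y ∈ P := by
          intro y hy; rw [← hσQ']; exact ⟨y, hy, rfl⟩
        have hσPQ : ∀ y ∈ P, σ y ∈ Q := by
          intro y hy
          rw [← hσQ'] at hy
          obtain ⟨q, hq, rfl⟩ := hy
          rw [hσinv q]; exact hq
        refine ⟨σ ∘ h₀, ⟨?_, ?_, ?_⟩, ?_⟩
        · -- maps to
          rintro x ⟨hx, hxO⟩
          have hyC : h₀ x ∈ (g '' A')ᶜ := hb₀.mapsTo hx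
          have hyQ : h₀ x ∉ Q := fun hq => hxO ((hmemQ x hx).mp hq)
          by_cases hyP : h₀ x ∈ P
          · have h1 : σ (h₀ x) ∈ Q := hσPQ _ hyP
            exact ⟨hQgA' h1, fun hp => hPQd _ hp h1⟩
          · rw [Function.comp_apply, hσfix' _ hyQ hyP]
            exact ⟨hyC, hyP⟩
        · -- inj on
          intro x1 hx1 x2 hx2 heq
          exact hb₀.injOn (Set.diff_subset hx1) (Set.diff_subset hx2)
            (hσinv.injective heq)
        · -- surj on
          rintro y ⟨hy, hyP⟩
          by_cases hyQ : y ∈ Q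
          · have h1 : σ y ∈ P := hσQP _ hyQ
            have h2 : σ y ∈ (g '' A')ᶜ := fun hmem => hPgA' _ h1 hmem
            obtain ⟨x, hx, hx'⟩ := hb₀.surjOn h2
            have hxO : x ∉ O := by
              intro hxO
              exact hPQd _ (hx' ▸ h1) ((hmemQ x hx).mpr hxO)
            refine ⟨x, ⟨hx, hxO⟩, ?_⟩
            rw [Function.comp_apply, hx', hσinv y]
          · obtain ⟨x, hx, hx'⟩ := hb₀.surjOn hy
            have hxO : x ∉ O := fun hxO => hyQ (hx' ▸ (hmemQ x hx).mpr hxO)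
            refine ⟨x, ⟨hx, hxO⟩, ?_⟩
            rw [Function.comp_apply, hx', hσfix' _ hyQ hyP]
        · -- equivariance
          intro x hx
          rw [Function.comp_apply, Function.comp_apply,
            he₀ x (Set.diff_subset hx), hσe]

lemma Inv.symm_iterate_mem {A : Set α} (h : Inv e A) (k : ℕ) {x : α} (hx : x ∈ A) :
    (⇑e.symm)^[k] x ∈ A := by
  induction k with
  | zero => simpa using hx
  | succ n ih => rw [Function.iterate_succ_apply']; exact h.symm_mem e ih


end InjP

section Main

open InjP

variable {α : Type*} (f : α → α)

lemma clInj_closed {s : Set α} {y : α} (hy : y ∈ clInj f s) : f y ∈ clInj f s := by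
  obtain ⟨x0, hx0, n, rfl⟩ := hy
  exact ⟨x0, hx0, n + 1, Function.iterate_succ_apply' f n x0⟩

lemma clInj_closed_iter {s : Set α} {y : α} (hy : y ∈ clInj f s) (k : ℕ) :
    f^[k] y ∈ clInj f s := by
  induction k with
  | zero => simpa using hy
  | succ n ih => rw [Function.iterate_succ_apply']; exact clInj_closed f ih

lemma exists_extension (hbij : Function.Bijective f)
    (s t : Set α) (hs : s.Finite) (ht : t.Finite)
    (φ : ↥(clInj f s) ≃ ↥(clInj f t))
    (hφ : ∀ x y : ↥(clInj f s), (y : α) = f x → ((φ y : ↥(clInj f t)) : α) = f (φ x)) :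
    ∃ g : α ≃ α, (∀ a : α, g (f a) = f (g a)) ∧
      ∀ x : ↥(clInj f s), g (x : α) = ((φ x : ↥(clInj f t)) : α) := by
  classical
  set e : Equiv.Perm α := Equiv.ofBijective f hbij with he_def
  have hef : ∀ x, e x = f x := fun x => rfl
  have hiterpow : ∀ (n : ℕ) (x : α), (e ^ (n : ℤ)) x = f^[n] x := by
    intro n x
    rw [zpow_natCast, ← Equiv.Perm.iterate_eq_pow]
    rfl
  have hsymm_iter1 : ∀ (k : ℕ) (z : α), (⇑e.symm)^[k] (f^[k] z) = z := by
    intro k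
    induction k with
    | zero => intro z; rfl
    | succ n ih =>
      intro z
      rw [Function.iterate_succ_apply (⇑e.symm), Function.iterate_succ_apply' f]
      have : e.symm (f (f^[n] z)) = f^[n] z := e.symm_apply_apply (f^[n] z)
      rw [this, ih]
  have hsymm_iter2 : ∀ (k : ℕ) (z : α), f^[k] ((⇑e.symm)^[k] z) = z := by
    intro k
    induction k with
    | zero => intro z; rfl
    | succ n ih =>
      intro z
      rw [Function.iterate_succ_apply f, Function.iterate_succ_apply' (⇑e.symm)]
      have : f (e.symm ((⇑e.symm)^[n] z)) = (⇑e.symm)^[n] z :=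
        e.apply_symm_apply ((⇑e.symm)^[n] z)
      rw [this, ih]
  have phi_iter : ∀ (k : ℕ) (y : α) (hy : y ∈ clInj f s) (hy2 : f^[k] y ∈ clInj f s),
      ((φ ⟨f^[k] y, hy2⟩ : ↥(clInj f t)) : α) = f^[k] ((φ ⟨y, hy⟩ : ↥(clInj f t)) : α) := by
    intro k
    induction k with
    | zero => intro y hy hy2; rfl
    | succ n ih =>
      intro y hy hy2
      have hmid : f^[n] y ∈ clInj f s := clInj_closed_iter f hy n
      have harg : (⟨f^[n+1] y, hy2⟩ : ↥(clInj f s)) = ⟨f (f^[n] y), by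
          rw [← Function.iterate_succ_apply' f]; exact hy2⟩ :=
        Subtype.ext (Function.iterate_succ_apply' f n y)
      rw [harg, hφ ⟨f^[n] y, hmid⟩ _ rfl, ih y hy hmid, ← Function.iterate_succ_apply' f]
  -- well-definedness of the candidate values
  have aux : ∀ (x : α) (m : ℕ) (h1 : f^[m] x ∈ clInj f s) (k : ℕ)
      (h2 : f^[k + m] x ∈ clInj f s),
      (⇑e.symm)^[k + m] ((φ ⟨f^[k + m] x, h2⟩ : ↥(clInj f t)) : α) =
        (⇑e.symm)^[m] ((φ ⟨f^[m] x, h1⟩ : ↥(clInj f t)) : α) := by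
    intro x m h1 k h2
    have hiter : f^[k + m] x = f^[k] (f^[m] x) := Function.iterate_add_apply f k m x
    have h2' : f^[k] (f^[m] x) ∈ clInj f s := hiter ▸ h2
    have harg : (⟨f^[k + m] x, h2⟩ : ↥(clInj f s)) = ⟨f^[k] (f^[m] x), h2'⟩ :=
      Subtype.ext hiter
    rw [harg, phi_iter k (f^[m] x) h1 h2']
    rw [show k + m = m + k from add_comm k m, Function.iterate_add_apply (⇑e.symm) m k,
      hsymm_iter1 k]
  have hwd : ∀ (x : α) (m₁ m₂ : ℕ) (h1 : f^[m₁] x ∈ clInj f s) (h2 : f^[m₂] x ∈ clInj f s),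
      (⇑e.symm)^[m₁] ((φ ⟨f^[m₁] x, h1⟩ : ↥(clInj f t)) : α) =
        (⇑e.symm)^[m₂] ((φ ⟨f^[m₂] x, h2⟩ : ↥(clInj f t)) : α) := by
    intro x m₁ m₂ h1 h2
    rcases le_total m₁ m₂ with hle | hle
    · obtain ⟨k, rfl⟩ : ∃ k, m₂ = k + m₁ := ⟨m₂ - m₁, (Nat.sub_add_cancel hle).symm⟩
      exact (aux x m₁ h1 k h2).symm
    · obtain ⟨k, rfl⟩ : ∃ k, m₁ = k + m₂ := ⟨m₁ - m₂, (Nat.sub_add_cancel hle).symm⟩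
      exact aux x m₂ h2 k h1
  -- the partial extension
  set g₀ : α → α := fun x =>
    if h : ∃ m : ℕ, f^[m] x ∈ clInj f s then
      (⇑e.symm)^[Classical.choose h]
        ((φ ⟨f^[Classical.choose h] x, Classical.choose_spec h⟩ : ↥(clInj f t)) : α)
    else x with hg₀def
  have spec : ∀ (x : α) (_ : ∃ m : ℕ, f^[m] x ∈ clInj f s) (m : ℕ)
      (hm : f^[m] x ∈ clInj f s),
      g₀ x = (⇑e.symm)^[m] ((φ ⟨f^[m] x, hm⟩ : ↥(clInj f t)) : α) := by
    intro x hp m hm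
    rw [hg₀def]
    simp only
    rw [dif_pos hp]
    exact hwd x _ m _ hm
  set Fs : Finset α := hs.toFinset with hFs
  set Ft : Finset α := ht.toFinset with hFt
  set A : Set α := US e Fs with hA
  set B : Set α := US e Ft with hB
  have hInvA : Inv e A := inv_US e Fs
  have hInvB : Inv e B := inv_US e Ft
  have hclsA : clInj f s ⊆ A := by
    rintro y ⟨x0, hx0, n, rfl⟩
    exact (mem_US e).mpr ⟨x0, hs.mem_toFinset.mpr hx0, ⟨(n : ℤ), hiterpow n x0⟩⟩
  have hcltB : clInj f t ⊆ B := by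
    rintro y ⟨x0, hx0, n, rfl⟩
    exact (mem_US e).mpr ⟨x0, ht.mem_toFinset.mpr hx0, ⟨(n : ℤ), hiterpow n x0⟩⟩
  have hAex : ∀ x ∈ A, ∃ m : ℕ, f^[m] x ∈ clInj f s := by
    intro x hx
    obtain ⟨b, hb, k, hk⟩ := (mem_US e).mp hx
    have hbs : b ∈ s := hs.mem_toFinset.mp hb
    rcases le_or_gt 0 k with hk0 | hk0
    · refine ⟨0, ?_⟩
      obtain ⟨n, rfl⟩ := Int.eq_ofNat_of_zero_le hk0
      rw [hiterpow n b] at hk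
      exact ⟨b, hbs, n, by simpa using hk⟩
    · refine ⟨(-k).toNat, ?_⟩
      have hkn : ((-k).toNat : ℤ) = -k := Int.toNat_of_nonneg (by omega)
      have : f^[(-k).toNat] x = b := by
        rw [← hiterpow, ← hk, ← Equiv.Perm.mul_apply, ← zpow_add, hkn, neg_add_cancel,
          zpow_zero, Equiv.Perm.one_apply]
      rw [this]
      exact ⟨b, hbs, 0, rfl⟩
  -- equivariance of g₀ on A
  have heqv : EqvOn e g₀ A := by
    intro x hx
    obtain ⟨m, hm⟩ := hAex x hx
    have hm1 : f^[m + 1] x ∈ clInj f s := by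
      rw [Function.iterate_succ_apply' f]
      exact clInj_closed f hm
    have hmfx : f^[m] (f x) ∈ clInj f s := by
      rw [← Function.iterate_succ_apply f]
      exact hm1
    have e1 : g₀ (f x) = (⇑e.symm)^[m] ((φ ⟨f^[m] (f x), hmfx⟩ : ↥(clInj f t)) : α) :=
      spec (f x) ⟨m, hmfx⟩ m hmfx
    have e2 : g₀ x = (⇑e.symm)^[m + 1] ((φ ⟨f^[m + 1] x, hm1⟩ : ↥(clInj f t)) : α) :=
      spec x ⟨m, hm⟩ (m + 1) hm1
    have harg : (⟨f^[m + 1] x, hm1⟩ : ↥(clInj f s)) = ⟨f^[m] (f x), hmfx⟩ :=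
      Subtype.ext (Function.iterate_succ_apply f m x)
    show g₀ (f x) = e (g₀ x)
    rw [e1, e2, harg, Function.iterate_succ_apply' (⇑e.symm)]
    exact (e.apply_symm_apply _).symm
  -- injectivity of g₀ on A
  have hinj : Set.InjOn g₀ A := by
    intro x hx x' hx' heq
    obtain ⟨m, hm⟩ := hAex x hx
    obtain ⟨m', hm'⟩ := hAex x' hx'
    rw [spec x ⟨m, hm⟩ m hm, spec x' ⟨m', hm'⟩ m' hm'] at heq
    have heq2 := congrArg (f^[m' + m]) heq
    rw [Function.iterate_add_apply f m' m, hsymm_iter2 m] at heq2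
    rw [show m' + m = m + m' from add_comm m' m, Function.iterate_add_apply f m m',
      hsymm_iter2 m'] at heq2
    have hL : f^[m'] ((φ ⟨f^[m] x, hm⟩ : ↥(clInj f t)) : α) =
        ((φ ⟨f^[m'] (f^[m] x), clInj_closed_iter f hm m'⟩ : ↥(clInj f t)) : α) :=
      (phi_iter m' (f^[m] x) hm _).symm
    have hR : f^[m] ((φ ⟨f^[m'] x', hm'⟩ : ↥(clInj f t)) : α) =
        ((φ ⟨f^[m] (f^[m'] x'), clInj_closed_iter f hm' m⟩ : ↥(clInj f t)) : α) :=
      (phi_iter m (f^[m'] x') hm' _).symm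
    rw [hL, hR] at heq2
    have heq3 := φ.injective (Subtype.coe_injective heq2)
    have heq4 : f^[m'] (f^[m] x) = f^[m] (f^[m'] x') := congrArg Subtype.val heq3
    rw [← Function.iterate_add_apply f m' m, ← Function.iterate_add_apply f m m',
      show m + m' = m' + m from add_comm m m'] at heq4
    exact (hbij.injective.iterate (m' + m)) heq4
  -- g₀ maps A onto B
  have hmaps : Set.MapsTo g₀ A B := by
    intro x hx
    obtain ⟨m, hm⟩ := hAex x hx
    rw [spec x ⟨m, hm⟩ m hm]
    exact hInvB.symm_iterate_mem e m (hcltB (φ ⟨f^[m] x, hm⟩).2)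
  have hg₀cl : ∀ x : ↥(clInj f s), g₀ (x : α) = ((φ x : ↥(clInj f t)) : α) := by
    intro x
    have h0 : f^[0] (x : α) ∈ clInj f s := x.2
    have hxx : (⟨f^[0] (x : α), h0⟩ : ↥(clInj f s)) = x := Subtype.ext rfl
    rw [spec (x : α) ⟨0, h0⟩ 0 h0, hxx]
    rfl
  have hsurjOn : Set.SurjOn g₀ A B := by
    intro y hy
    obtain ⟨b, hb, k, hk⟩ := (mem_US e).mp hy
    have hbm : b ∈ clInj f t := ⟨b, ht.mem_toFinset.mp hb, 0, rfl⟩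
    set w : ↥(clInj f s) := φ.symm ⟨b, hbm⟩ with hw
    have hwA : (w : α) ∈ A := hclsA w.2
    refine ⟨(e ^ k) (w : α), (hInvA.zpow_mem_iff e k).mpr hwA, ?_⟩
    rw [heqv.zpow e hInvA hwA k, hg₀cl w, hw, Equiv.apply_symm_apply, ← hk]
  have hbijOn : Set.BijOn g₀ A B := ⟨hmaps, hinj, hsurjOn⟩
  -- extend to the complement
  obtain ⟨h, hbh, heh⟩ := cancel e Fs g₀ heqv hinj
  rw [show g₀ '' US e Fs = B from hbijOn.image_eq] at hbh
  set G : α → α := fun x => if x ∈ A then g₀ x else h x with hGdef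
  have hGA : Set.EqOn G g₀ A := fun x hx => if_pos hx
  have hGAc : Set.EqOn G h Aᶜ := fun x hx => if_neg hx
  have hbij1 : Set.BijOn G A B := hbijOn.congr fun x hx => (hGA hx).symm
  have hbij2 : Set.BijOn G Aᶜ Bᶜ := hbh.congr fun x hx => (hGAc hx).symm
  have hinjU : Set.InjOn G (A ∪ Aᶜ) := by
    rintro x (hx | hx) y (hy | hy) heq
    · exact hbij1.injOn hx hy heq
    · exact absurd (heq ▸ hbij1.mapsTo hx) (hbij2.mapsTo hy)
    · exact absurd (heq.symm ▸ hbij1.mapsTo hy) (hbij2.mapsTo hx)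
    · exact hbij2.injOn hx hy heq
  have hbijU := hbij1.union hbij2 hinjU
  rw [Set.union_compl_self, Set.union_compl_self] at hbijU
  have hGbij : Function.Bijective G := Set.bijOn_univ.mp hbijU
  refine ⟨Equiv.ofBijective G hGbij, ?_, ?_⟩
  · intro a
    show G (f a) = f (G a)
    by_cases ha : a ∈ A
    · have hfa : f a ∈ A := (hInvA a).mp ha
      rw [hGA hfa, hGA ha]
      exact heqv a ha
    · have hfa : f a ∉ A := fun hm => ha ((hInvA a).mpr hm)
      rw [hGAc hfa, hGAc ha]
      exact heh a ha
  · intro x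
    show G (x : α) = _
    rw [hGA (hclsA x.2)]
    exact hg₀cl x

end Main

/-- A countable injection structure is ultrahomogeneous iff it has no ω-orbits, i.e. no orbit
contains an element outside the range of `f`. -/
theorem ultrahomogeneousInj_iff_no_omega_orbits
    {α : Type*} [Countable α] (f : α → α) (hf : Function.Injective f) :
    UltrahomogeneousInj f ↔ ∀ a : α, ¬ ∃ x ∈ orbitInj f a, x ∉ Set.range f := by
  constructor
  · -- ultrahomogeneous → no ω-orbits
    rintro H a ⟨x, -, hxr⟩
    -- `x` is not in the range of `f`; derive a contradiction
    have hxcl : x ∈ clInj f {x} := ⟨x, rfl, 0, rfl⟩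
    have hmap : ∀ y ∈ clInj f {x}, f y ∈ clInj f {f x} := by
      rintro y ⟨x0, rfl, n, rfl⟩
      exact ⟨f x0, rfl, n, by
        rw [← Function.iterate_succ_apply f n x0, Function.iterate_succ_apply' f n x0]⟩
    have hbijψ : Function.Bijective
        (fun y : ↥(clInj f {x}) => (⟨f y, hmap y y.2⟩ : ↥(clInj f {f x}))) := by
      constructor
      · intro y1 y2 h12
        have := congrArg Subtype.val h12
        exact Subtype.ext (hf this)
      · rintro ⟨z, x0, rfl, n, rfl⟩
        refine ⟨⟨f^[n] x, ⟨x, rfl, n, rfl⟩⟩, ?_⟩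
        apply Subtype.ext
        show f (f^[n] x) = f^[n] (f x)
        rw [← Function.iterate_succ_apply' f n x, Function.iterate_succ_apply f n x]
    set φ : ↥(clInj f {x}) ≃ ↥(clInj f {f x}) := Equiv.ofBijective _ hbijψ with hφdef
    have hφc : ∀ u v : ↥(clInj f {x}), (v : α) = f u →
        ((φ v : ↥(clInj f {f x})) : α) = f (φ u) := by
      intro u v huv
      show f (v : α) = f (f (u : α))
      rw [huv]
    obtain ⟨g, hgf, hext⟩ := H {x} {f x} (Set.finite_singleton x)
      (Set.finite_singleton (f x)) φ hφc
    have h1 : g x = f x := hext ⟨x, hxcl⟩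
    apply hxr
    refine ⟨g.symm x, ?_⟩
    have h2 : g (f (g.symm x)) = f x := by rw [hgf (g.symm x), g.apply_symm_apply]
    exact g.injective (h2.trans h1.symm)
  · intro hno s t hs ht φ hφ
    have hsurj : Function.Surjective f := by
      intro y; by_contra hy
      exact hno y ⟨y, ⟨0, 0, rfl⟩, hy⟩
    exact exists_extension f ⟨hf, hsurj⟩ s t hs ht φ hφ
end
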